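/- arXiv:math/0510067 — 10 statements merged into one kernel-verified Lean document; each statement's English description precedes it below -/
import Mathlib

section
/- Let n ≥ 1, let f : [0,∞) → [0,∞) be a concave function, let A be an n×n positive semidefinite complex matrix, and let Z be an n×n expansive complex matrix (Z*Z ≥ I). Then Tr f(Z*AZ) ≤ Tr (Z*f(A)Z). (Trace-norm case of Theorem 2.1.) -/
open Matrix ComplexOrder

section Aux

open Polynomial Finset

private lemma det_smul_one_sub_mul_comm {K : Type*} [Field K] {k : Type*} [Fintype k]
    [DecidableEq k] {t : K} (ht : t ≠ 0) (P Q : Matrix k k K) :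
    (t • (1 : Matrix k k K) - P * Q).det = (t • (1 : Matrix k k K) - Q * P).det := by
  have h1 : t • (1 : Matrix k k K) - P * Q = t • ((1 : Matrix k k K) - (t⁻¹ • P) * Q) := by
    rw [smul_sub, smul_mul_assoc, smul_smul, mul_inv_cancel₀ ht, one_smul]
  have h2 : t • (1 : Matrix k k K) - Q * P = t • ((1 : Matrix k k K) - Q * (t⁻¹ • P)) := by
    rw [smul_sub, mul_smul_comm, smul_smul, mul_inv_cancel₀ ht, one_smul]
  rw [h1, h2, Matrix.det_smul, Matrix.det_smul, Matrix.det_one_sub_mul_comm]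

private lemma charmatrix_map_ringHom {k : Type*} [Fintype k] [DecidableEq k]
    (M : Matrix k k ℂ) {L : Type*} [Field L] (φ : Polynomial ℂ →+* L) :
    (Matrix.charmatrix M).map φ = φ X • (1 : Matrix k k L) - M.map (φ.comp Polynomial.C) := by
  ext i j
  by_cases h : i = j
  · subst h
    simp [Matrix.map_apply, Matrix.smul_apply, Matrix.one_apply_eq, Matrix.sub_apply,
      smul_eq_mul]
  · simp [Matrix.charmatrix_apply_ne _ _ _ h, Matrix.map_apply, Matrix.smul_apply,
      Matrix.one_apply_ne h, Matrix.sub_apply, smul_eq_mul]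

private lemma charpoly_mul_comm' {k : Type*} [Fintype k] [DecidableEq k]
    (M N : Matrix k k ℂ) : (M * N).charpoly = (N * M).charpoly := by
  have hinj : Function.Injective (algebraMap (Polynomial ℂ) (RatFunc ℂ)) :=
    IsFractionRing.injective _ _
  apply hinj
  set φ : Polynomial ℂ →+* RatFunc ℂ := (algebraMap (Polynomial ℂ) (RatFunc ℂ) : _)
  have hX : φ X ≠ 0 := fun h => Polynomial.X_ne_zero (hinj (h.trans (map_zero φ).symm))
  show φ (M * N).charpoly = φ (N * M).charpoly
  rw [Matrix.charpoly, Matrix.charpoly, RingHom.map_det, RingHom.map_det,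
    RingHom.mapMatrix_apply, RingHom.mapMatrix_apply,
    charmatrix_map_ringHom, charmatrix_map_ringHom, Matrix.map_mul, Matrix.map_mul]
  exact det_smul_one_sub_mul_comm hX _ _

private lemma charpoly_diagonal' {k : Type*} [Fintype k] [DecidableEq k] (d : k → ℂ) :
    (Matrix.diagonal d).charpoly = ∏ i, (X - Polynomial.C (d i)) := by
  rw [Matrix.charpoly]
  have h : Matrix.charmatrix (Matrix.diagonal d)
      = Matrix.diagonal (fun i => (X : Polynomial ℂ) - Polynomial.C (d i)) := by
    ext i j
    by_cases h : i = j
    · subst h; simp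
    · simp [Matrix.charmatrix_apply_ne _ _ _ h, Matrix.diagonal_apply_ne _ h]
  rw [h, Matrix.det_diagonal]

private lemma charpoly_unitary_conj {k : Type*} [Fintype k] [DecidableEq k]
    (U D : Matrix k k ℂ) (hU : star U * U = 1) :
    (U * D * star U).charpoly = D.charpoly := by
  rw [mul_assoc, _root_.charpoly_mul_comm', mul_assoc, hU, mul_one]

private lemma charpoly_eq_prod_eigenvalues {k : Type*} [Fintype k] [DecidableEq k]
    {M : Matrix k k ℂ} (hM : M.IsHermitian) :
    M.charpoly = ∏ i, (X - Polynomial.C ((hM.eigenvalues i : ℝ) : ℂ)) := by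
  conv_lhs => rw [hM.spectral_theorem]
  rw [Unitary.conjStarAlgAut_apply, charpoly_unitary_conj _ _ (Matrix.mem_unitaryGroup_iff'.mp hM.eigenvectorUnitary.2)]
  exact charpoly_diagonal' _

private lemma eig_multiset_eq {k : Type*} [Fintype k] [DecidableEq k]
    {M : Matrix k k ℂ} (hM : M.IsHermitian) (g : k → ℝ)
    (h : M.charpoly = ∏ i, (X - Polynomial.C ((g i : ℝ) : ℂ))) :
    Multiset.map hM.eigenvalues Finset.univ.val = Multiset.map g Finset.univ.val := by
  have key : ∀ u : k → ℝ,
      (∏ i, ((X : Polynomial ℂ) - Polynomial.C ((u i : ℝ) : ℂ))).roots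
        = Multiset.map (fun i => ((u i : ℝ) : ℂ)) Finset.univ.val := by
    intro u
    rw [Finset.prod_eq_multiset_prod]
    have : Multiset.map (fun i => (X : Polynomial ℂ) - Polynomial.C ((u i : ℝ) : ℂ))
        Finset.univ.val
        = Multiset.map (fun a => (X : Polynomial ℂ) - Polynomial.C a)
          (Multiset.map (fun i => ((u i : ℝ) : ℂ)) Finset.univ.val) := by
      rw [Multiset.map_map]; rfl
    rw [this]
    exact Polynomial.roots_multiset_prod_X_sub_C _
  have h1 := charpoly_eq_prod_eigenvalues hM
  have h2 : Multiset.map (fun i => ((hM.eigenvalues i : ℝ) : ℂ)) Finset.univ.val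
      = Multiset.map (fun i => ((g i : ℝ) : ℂ)) Finset.univ.val := by
    rw [← key, ← key, ← h1, ← h]
  have h3 : Multiset.map (fun x : ℝ => (x : ℂ)) (Multiset.map hM.eigenvalues Finset.univ.val)
      = Multiset.map (fun x : ℝ => (x : ℂ)) (Multiset.map g Finset.univ.val) := by
    rw [Multiset.map_map, Multiset.map_map]; exact h2
  exact Multiset.map_injective Complex.ofReal_injective h3

private lemma sum_comp_eq {k : Type*} [Fintype k] (f : ℝ → ℝ) {a b : k → ℝ}
    (h : Multiset.map a Finset.univ.val = Multiset.map b Finset.univ.val) :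
    ∑ i, f (a i) = ∑ i, f (b i) := by
  have h2 := congrArg (fun m => (Multiset.map f m).sum) h
  simp only [Multiset.map_map] at h2
  rw [Finset.sum_eq_multiset_sum, Finset.sum_eq_multiset_sum]
  exact h2

private lemma forall_eig {k : Type*} [Fintype k] {a b : k → ℝ}
    (h : Multiset.map a Finset.univ.val = Multiset.map b Finset.univ.val)
    {P : ℝ → Prop} (hP : ∀ i, P (a i)) : ∀ i, P (b i) := by
  intro i
  have hb : b i ∈ Multiset.map b Finset.univ.val :=
    Multiset.mem_map.mpr ⟨i, Finset.mem_val.mpr (Finset.mem_univ i), rfl⟩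
  rw [← h] at hb
  obtain ⟨j, -, hj⟩ := Multiset.mem_map.mp hb
  exact hj ▸ hP j

private lemma trace_cfc_herm {k : Type*} [Fintype k] [DecidableEq k]
    {M : Matrix k k ℂ} (hM : M.IsHermitian) (f : ℝ → ℝ) :
    (hM.cfc f).trace = ((∑ i, f (hM.eigenvalues i) : ℝ) : ℂ) := by
  rw [Matrix.IsHermitian.cfc, Unitary.conjStarAlgAut_apply, Matrix.trace_mul_cycle,
    Matrix.mem_unitaryGroup_iff'.mp hM.eigenvectorUnitary.2, one_mul, Matrix.trace_diagonal]
  push_cast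
  rfl

private lemma conj_entry_diag {k : Type*} [Fintype k] [DecidableEq k]
    (Q : Matrix k k ℂ) (d : k → ℝ) (j : k) :
    (star Q * Matrix.diagonal (fun i => ((d i : ℝ) : ℂ)) * Q) j j
      = ((∑ i, Complex.normSq (Q i j) * d i : ℝ) : ℂ) := by
  rw [Matrix.mul_apply]
  push_cast
  refine Finset.sum_congr rfl fun i _ => ?_
  rw [Matrix.mul_diagonal, Matrix.star_apply]
  calc star (Q i j) * ((d i : ℝ) : ℂ) * Q i j
      = (star (Q i j) * Q i j) * ((d i : ℝ) : ℂ) := by ring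
    _ = ((Complex.normSq (Q i j) : ℝ) : ℂ) * ((d i : ℝ) : ℂ) := by
        rw [show star (Q i j) = (starRingEnd ℂ) (Q i j) from rfl,
          ← Complex.normSq_eq_conj_mul_self]

private lemma sum_normSq_row {k : Type*} [Fintype k] (Q : Matrix k k ℂ) (i : k) :
    (Q * star Q) i i = ((∑ j, Complex.normSq (Q i j) : ℝ) : ℂ) := by
  rw [Matrix.mul_apply]
  push_cast
  refine Finset.sum_congr rfl fun j _ => ?_
  rw [Matrix.star_apply]
  exact Complex.mul_conj _

private lemma sum_normSq_col {k : Type*} [Fintype k] (Q : Matrix k k ℂ) (j : k) :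
    (star Q * Q) j j = ((∑ i, Complex.normSq (Q i j) : ℝ) : ℂ) := by
  rw [Matrix.mul_apply]
  push_cast
  refine Finset.sum_congr rfl fun i _ => ?_
  rw [Matrix.star_apply, mul_comm]
  exact Complex.mul_conj _

end Aux

section Scalar

open Finset

private lemma exists_supergradient {m : ℕ} (f : ℝ → ℝ)
    (hf : ConcaveOn ℝ (Set.Ici (0 : ℝ)) f) (hf0 : ∀ x : ℝ, 0 ≤ x → 0 ≤ f x)
    {l : ℝ} (hl : 0 ≤ l) (mu : Fin m → ℝ) (hmu : ∀ i, 0 ≤ mu i) :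
    ∃ s : ℝ, (∀ i, f (mu i) ≤ f l + s * (mu i - l)) ∧ l * s ≤ f l := by
  rcases eq_or_lt_of_le hl with h0 | h0
  · -- l = 0
    subst h0
    refine ⟨∑ i, max 0 ((f (mu i) - f 0) / mu i), fun i => ?_, by
      simpa using hf0 0 le_rfl⟩
    rcases eq_or_lt_of_le (hmu i) with hz | hz
    · rw [← hz]; simp
    · have hterm : (f (mu i) - f 0) / mu i ≤ ∑ j, max 0 ((f (mu j) - f 0) / mu j) :=
        le_trans (le_max_right _ _)
          (Finset.single_le_sum (f := fun j => max 0 ((f (mu j) - f 0) / mu j))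
            (fun j _ => le_max_left _ _) (Finset.mem_univ i))
      have := (div_le_iff₀ hz).mp hterm
      have heq : (∑ j, max 0 ((f (mu j) - f 0) / mu j)) * (mu i - 0)
          = (∑ j, max 0 ((f (mu j) - f 0) / mu j)) * mu i := by ring
      rw [heq]
      linarith
  · -- 0 < l
    set T : Finset ℝ := insert 0 ((Finset.univ.image mu).filter (fun t => t < l)) with hT
    have h0T : (0 : ℝ) ∈ T := Finset.mem_insert_self _ _
    have hTne : T.Nonempty := ⟨0, h0T⟩
    have hTmem : ∀ t ∈ T, 0 ≤ t ∧ t < l := by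
      intro t ht
      rcases Finset.mem_insert.mp ht with rfl | ht
      · exact ⟨le_rfl, h0⟩
      · obtain ⟨ht1, ht2⟩ := Finset.mem_filter.mp ht
        obtain ⟨i, -, rfl⟩ := Finset.mem_image.mp ht1
        exact ⟨hmu i, ht2⟩
    set g : ℝ → ℝ := fun t => (f l - f t) / (l - t) with hg
    set s : ℝ := T.inf' hTne g with hs
    obtain ⟨t₀, ht₀T, hst₀⟩ := Finset.exists_mem_eq_inf' hTne g
    obtain ⟨ht₀0, ht₀l⟩ := hTmem t₀ ht₀T
    refine ⟨s, fun i => ?_, ?_⟩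
    · rcases lt_trichotomy (mu i) l with hlt | heq | hgt
      · -- mu i < l : use inf'_le
        have hmem : mu i ∈ T := Finset.mem_insert_of_mem
          (Finset.mem_filter.mpr ⟨Finset.mem_image.mpr ⟨i, Finset.mem_univ i, rfl⟩, hlt⟩)
        have h1 : s ≤ (f l - f (mu i)) / (l - mu i) := Finset.inf'_le g hmem
        have h2 : s * (l - mu i) ≤ f l - f (mu i) :=
          (le_div_iff₀ (by linarith)).mp h1
        have : s * (mu i - l) = -(s * (l - mu i)) := by ring
        linarith
      · rw [heq]; simp
      · -- l < mu i : use slope inequality at t₀ < l < mu i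
        have hslope := hf.slope_anti_adjacent (Set.mem_Ici.mpr ht₀0)
          (Set.mem_Ici.mpr (hmu i)) ht₀l hgt
        -- (f (mu i) - f l) / (mu i - l) ≤ (f l - f t₀) / (l - t₀)
        have h1 : (f (mu i) - f l) / (mu i - l) ≤ s := by
          rw [hs, hst₀]; exact hslope
        have h2 : f (mu i) - f l ≤ s * (mu i - l) :=
          (div_le_iff₀ (by linarith)).mp h1
        linarith
    · have h1 : s ≤ (f l - f 0) / (l - 0) := Finset.inf'_le g h0T
      rw [sub_zero] at h1
      have h2 : s * l ≤ f l - f 0 := (le_div_iff₀ h0).mp h1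
      have := hf0 0 le_rfl
      nlinarith

private lemma klein_core {m : ℕ} (f : ℝ → ℝ)
    (hf : ConcaveOn ℝ (Set.Ici (0 : ℝ)) f) (hf0 : ∀ x : ℝ, 0 ≤ x → 0 ≤ f x)
    (lam mu eps : Fin m → ℝ) (c : Fin m → Fin m → ℝ)
    (hlam : ∀ j, 0 ≤ lam j) (hmu : ∀ i, 0 ≤ mu i) (heps : ∀ j, 1 ≤ eps j)
    (hc : ∀ i j, 0 ≤ c i j) (hrow : ∀ i, ∑ j, c i j = 1) (hcol : ∀ j, ∑ i, c i j = 1)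
    (hkey : ∀ j, ∑ i, c i j * mu i = lam j * eps j) :
    ∑ i, f (mu i) ≤ ∑ j, f (lam j) * eps j := by
  have hsg : ∀ j : Fin m, ∃ s : ℝ,
      (∀ i, f (mu i) ≤ f (lam j) + s * (mu i - lam j)) ∧ lam j * s ≤ f (lam j) :=
    fun j => exists_supergradient f hf hf0 (hlam j) mu hmu
  choose s hs1 hs2 using hsg
  calc ∑ i, f (mu i) = ∑ i, (∑ j, c i j) * f (mu i) := by
        refine Finset.sum_congr rfl fun i _ => ?_
        rw [hrow i, one_mul]
    _ = ∑ i, ∑ j, c i j * f (mu i) := by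
        refine Finset.sum_congr rfl fun i _ => ?_
        rw [Finset.sum_mul]
    _ ≤ ∑ i, ∑ j, c i j * (f (lam j) + s j * (mu i - lam j)) := by
        refine Finset.sum_le_sum fun i _ => Finset.sum_le_sum fun j _ => ?_
        exact mul_le_mul_of_nonneg_left (hs1 j i) (hc i j)
    _ = ∑ j, ∑ i, (c i j * (f (lam j) - s j * lam j) + s j * (c i j * mu i)) := by
        rw [Finset.sum_comm]
        refine Finset.sum_congr rfl fun j _ => Finset.sum_congr rfl fun i _ => ?_
        ring
    _ = ∑ j, (f (lam j) + (lam j * s j) * (eps j - 1)) := by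
        refine Finset.sum_congr rfl fun j _ => ?_
        rw [Finset.sum_add_distrib, ← Finset.sum_mul, ← Finset.mul_sum, hcol j, hkey j]
        ring
    _ ≤ ∑ j, (f (lam j) + f (lam j) * (eps j - 1)) := by
        refine Finset.sum_le_sum fun j _ => ?_
        have := mul_le_mul_of_nonneg_right (hs2 j) (by linarith [heps j] : (0:ℝ) ≤ eps j - 1)
        linarith
    _ = ∑ j, f (lam j) * eps j := by
        refine Finset.sum_congr rfl fun j _ => ?_
        ring

end Scalar
open Polynomial Finset in
/-- Theorem 2.1, trace-norm case: for concave `f : [0,∞) → [0,∞)`, `A ≥ 0` and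
expansive `Z`, `Tr f(ZᴴAZ) ≤ Tr (Zᴴ f(A) Z)`. -/
theorem trace_cfc_concave_expansive_le {n : ℕ} (hn : 1 ≤ n) (f : ℝ → ℝ)
    (hf_concave : ConcaveOn ℝ (Set.Ici (0 : ℝ)) f)
    (hf_nonneg : ∀ x : ℝ, 0 ≤ x → 0 ≤ f x)
    (A Z : Matrix (Fin n) (Fin n) ℂ)
    (hA : A.PosSemidef) (hZ : (Zᴴ * Z - 1).PosSemidef) :
    Matrix.trace (cfc f (Zᴴ * A * Z)) ≤ Matrix.trace (Zᴴ * cfc f A * Z) := by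
  classical
  have hAH : A.IsHermitian := hA.1
  set U : Matrix (Fin n) (Fin n) ℂ := (hAH.eigenvectorUnitary : Matrix (Fin n) (Fin n) ℂ)
    with hU_def
  have hUU : star U * U = 1 := Matrix.mem_unitaryGroup_iff'.mp hAH.eigenvectorUnitary.2
  have hUU' : U * star U = 1 := Matrix.mem_unitaryGroup_iff.mp hAH.eigenvectorUnitary.2
  set lam : Fin n → ℝ := hAH.eigenvalues with hlam_def
  have hlam : ∀ j, 0 ≤ lam j := hA.eigenvalues_nonneg
  set Dhalf : Matrix (Fin n) (Fin n) ℂ :=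
    diagonal (fun j => ((Real.sqrt (lam j) : ℝ) : ℂ)) with hDhalf_def
  set R : Matrix (Fin n) (Fin n) ℂ := U * Dhalf * star U with hR_def
  have hDh : star Dhalf = Dhalf := by
    rw [hDhalf_def, Matrix.star_eq_conjTranspose, Matrix.diagonal_conjTranspose]
    exact congrArg diagonal (funext fun j => Complex.conj_ofReal _)
  have hRH : star R = R := by
    rw [hR_def]
    simp only [Matrix.star_mul, star_star, hDh, mul_assoc]
  have hRR : R * R = A := by
    have h1 : R * R = U * (Dhalf * ((star U * U) * Dhalf)) * star U := by
      rw [hR_def]; simp only [mul_assoc]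
    rw [h1, hUU, one_mul, Matrix.diagonal_mul_diagonal]
    have h2 : (fun j => ((Real.sqrt (lam j) : ℝ) : ℂ) * ((Real.sqrt (lam j) : ℝ) : ℂ))
        = fun j => ((lam j : ℝ) : ℂ) := by
      funext j
      rw [← Complex.ofReal_mul, Real.mul_self_sqrt (hlam j)]
    rw [h2]
    exact hAH.spectral_theorem.symm

  -- W = Z * Zᴴ and its eigenvalues are ≥ 1
  set W : Matrix (Fin n) (Fin n) ℂ := Z * Zᴴ with hW_def
  have hWH : W.IsHermitian := Matrix.isHermitian_mul_conjTranspose_self Z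
  have hKH : (Zᴴ * Z - 1).IsHermitian := hZ.1
  set kap : Fin n → ℝ := hKH.eigenvalues with hkap_def
  have hkap : ∀ i, 0 ≤ kap i := hZ.eigenvalues_nonneg
  set VK : Matrix (Fin n) (Fin n) ℂ := (hKH.eigenvectorUnitary : Matrix (Fin n) (Fin n) ℂ)
    with hVK_def
  have hVKUU : star VK * VK = 1 := Matrix.mem_unitaryGroup_iff'.mp hKH.eigenvectorUnitary.2
  have hVKUU' : VK * star VK = 1 := Matrix.mem_unitaryGroup_iff.mp hKH.eigenvectorUnitary.2
  have hZHZdec : Zᴴ * Z = VK * diagonal (fun i => ((kap i + 1 : ℝ) : ℂ)) * star VK := by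
    have hD : diagonal (fun i : Fin n => ((kap i + 1 : ℝ) : ℂ))
        = diagonal (fun i => ((kap i : ℝ) : ℂ)) + 1 := by
      rw [← Matrix.diagonal_one, Matrix.diagonal_add]
      congr 1
      funext i
      push_cast
      ring
    have h2 : VK * diagonal (fun i : Fin n => ((kap i : ℝ) : ℂ)) * star VK = Zᴴ * Z - 1 :=
      hKH.spectral_theorem.symm
    rw [hD, Matrix.mul_add, Matrix.add_mul, Matrix.mul_one, hVKUU', h2]
    exact (sub_add_cancel _ _).symm
  have hWchar : W.charpoly = ∏ i, (X - Polynomial.C ((kap i + 1 : ℝ) : ℂ)) := by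
    rw [hW_def, _root_.charpoly_mul_comm', hZHZdec,
      charpoly_unitary_conj _ _ hVKUU, charpoly_diagonal']
  set tau : Fin n → ℝ := hWH.eigenvalues with htau_def
  have htau_m : Multiset.map tau Finset.univ.val
      = Multiset.map (fun i => kap i + 1) Finset.univ.val := eig_multiset_eq hWH _ hWchar
  have htau : ∀ i, 1 ≤ tau i :=
    forall_eig htau_m.symm (P := fun x => 1 ≤ x) (fun i => by linarith [hkap i])
  -- W - 1 is PSD
  set PW : Matrix (Fin n) (Fin n) ℂ := (hWH.eigenvectorUnitary : Matrix (Fin n) (Fin n) ℂ)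
    with hPW_def
  have hPWU : star PW * PW = 1 := Matrix.mem_unitaryGroup_iff'.mp hWH.eigenvectorUnitary.2
  have hPWU' : PW * star PW = 1 := Matrix.mem_unitaryGroup_iff.mp hWH.eigenvectorUnitary.2
  have hW1 : (W - 1).PosSemidef := by
    have hD : diagonal (fun i : Fin n => ((tau i - 1 : ℝ) : ℂ))
        = diagonal (fun i => ((tau i : ℝ) : ℂ)) - 1 := by
      rw [← Matrix.diagonal_one, Matrix.diagonal_sub]
      congr 1
      funext i
      push_cast
      ring
    have h2 : PW * diagonal (fun i : Fin n => ((tau i : ℝ) : ℂ)) * star PW = W :=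
      hWH.spectral_theorem.symm
    have h3 : PW * diagonal (fun i : Fin n => ((tau i - 1 : ℝ) : ℂ)) * star PW = W - 1 := by
      rw [hD, Matrix.mul_sub, Matrix.sub_mul, Matrix.mul_one, hPWU', h2]
    rw [← h3, Matrix.star_eq_conjTranspose]
    exact (Matrix.PosSemidef.diagonal
      (by intro i; exact Complex.zero_le_real.mpr (by linarith [htau i]))).mul_mul_conjTranspose_same PW
  -- E = Uᴴ W U
  set E : Matrix (Fin n) (Fin n) ℂ := star U * W * U with hE_def
  have hEherm : E.IsHermitian := by
    have h := Matrix.isHermitian_conjTranspose_mul_mul U hWH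
    rwa [← Matrix.star_eq_conjTranspose] at h
  set eps : Fin n → ℝ := fun j => (E j j).re with heps_def
  have hEjj : ∀ j, E j j = ((eps j : ℝ) : ℂ) := by
    intro j
    have h1 : star (E j j) = E j j := by
      conv_rhs => rw [← hEherm]
      rw [Matrix.conjTranspose_apply]
    exact (Complex.conj_eq_iff_re.mp h1).symm
  have hE1 : (E - 1).PosSemidef := by
    have hdec : star U * (W - 1) * U = E - 1 := by
      rw [Matrix.mul_sub, Matrix.mul_one, Matrix.sub_mul, hUU, hE_def]
    rw [← hdec, Matrix.star_eq_conjTranspose]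
    exact hW1.conjTranspose_mul_mul_same U
  have heps1 : ∀ j, 1 ≤ eps j := by
    intro j
    have h0 := hE1.dotProduct_mulVec_nonneg (Pi.single j 1)
    have hxx : star ((Pi.single j (1 : ℂ)) : Fin n → ℂ) = ((Pi.single j (1 : ℂ)) : Fin n → ℂ) := by
      rw [← Pi.single_star, star_one]
    have hjj : star ((Pi.single j (1 : ℂ)) : Fin n → ℂ) ⬝ᵥ ((E - 1) *ᵥ Pi.single j 1)
        = (E - 1) j j := by
      rw [hxx, Matrix.mulVec_single, single_dotProduct]
      simp
    rw [hjj] at h0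
    have hsub : (E - 1) j j = ((eps j - 1 : ℝ) : ℂ) := by
      rw [Matrix.sub_apply, hEjj j]
      push_cast
      simp [Matrix.one_apply_eq]
    rw [hsub] at h0
    have := Complex.zero_le_real.mp h0
    linarith
  -- B = Mᴴ M and Y = M Mᴴ have equal spectra
  set Mm : Matrix (Fin n) (Fin n) ℂ := R * Z with hMm_def
  have hBM : Zᴴ * A * Z = Mmᴴ * Mm := by
    rw [hMm_def, Matrix.conjTranspose_mul, ← Matrix.star_eq_conjTranspose R, hRH, ← hRR]
    simp only [mul_assoc]
  set Y : Matrix (Fin n) (Fin n) ℂ := Mm * Mmᴴ with hY_def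
  have hYps : Y.PosSemidef := Matrix.posSemidef_self_mul_conjTranspose Mm
  have hBps : (Zᴴ * A * Z).PosSemidef := by
    rw [hBM]; exact Matrix.posSemidef_conjTranspose_mul_self Mm
  set mu : Fin n → ℝ := hYps.1.eigenvalues with hmu_def
  set nu : Fin n → ℝ := hBps.1.eigenvalues with hnu_def
  have hmu : ∀ i, 0 ≤ mu i := hYps.eigenvalues_nonneg
  have hchar : (Zᴴ * A * Z).charpoly = Y.charpoly := by
    rw [hBM, hY_def, _root_.charpoly_mul_comm']
  have hnu_mu : Multiset.map nu Finset.univ.val = Multiset.map mu Finset.univ.val :=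
    eig_multiset_eq hBps.1 mu (by rw [hchar]; exact charpoly_eq_prod_eigenvalues hYps.1)
  have hsum_nm : ∑ i, f (nu i) = ∑ i, f (mu i) := sum_comp_eq f hnu_mu
  -- the doubly stochastic matrix c
  set P : Matrix (Fin n) (Fin n) ℂ := (hYps.1.eigenvectorUnitary : Matrix (Fin n) (Fin n) ℂ)
    with hP_def
  have hPP : star P * P = 1 := Matrix.mem_unitaryGroup_iff'.mp hYps.1.eigenvectorUnitary.2
  have hPP' : P * star P = 1 := Matrix.mem_unitaryGroup_iff.mp hYps.1.eigenvectorUnitary.2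
  set Q : Matrix (Fin n) (Fin n) ℂ := star P * U with hQ_def
  set c : Fin n → Fin n → ℝ := fun i j => Complex.normSq (Q i j) with hc_def
  have hc : ∀ i j, 0 ≤ c i j := fun i j => Complex.normSq_nonneg _
  have hrow : ∀ i, ∑ j, c i j = 1 := by
    intro i
    have h2 : Q * star Q = 1 := by
      rw [hQ_def, Matrix.star_mul, star_star]
      calc star P * U * (star U * P) = star P * (U * star U) * P := by simp only [mul_assoc]
        _ = 1 := by rw [hUU', mul_one, hPP]
    have h1 := sum_normSq_row Q i
    rw [h2, Matrix.one_apply_eq] at h1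
    exact_mod_cast h1.symm
  have hcol : ∀ j, ∑ i, c i j = 1 := by
    intro j
    have h2 : star Q * Q = 1 := by
      rw [hQ_def, Matrix.star_mul, star_star]
      calc star U * P * (star P * U) = star U * (P * star P) * U := by simp only [mul_assoc]
        _ = 1 := by rw [hPP', mul_one, hUU]
    have h1 := sum_normSq_col Q j
    rw [h2, Matrix.one_apply_eq] at h1
    exact_mod_cast h1.symm
  -- the key identity
  have hYdec : Y = P * diagonal (fun i => ((mu i : ℝ) : ℂ)) * star P := hYps.1.spectral_theorem
  have hkeyM : star Q * diagonal (fun i => ((mu i : ℝ) : ℂ)) * Q = Dhalf * E * Dhalf := by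
    have hL : star Q * diagonal (fun i => ((mu i : ℝ) : ℂ)) * Q = star U * Y * U := by
      rw [hQ_def, Matrix.star_mul, star_star]
      conv_rhs => rw [hYdec]
      simp only [mul_assoc]
    have hR1 : star U * R = Dhalf * star U := by
      rw [hR_def]
      simp only [← mul_assoc, hUU, one_mul]
    have hR2 : R * U = U * Dhalf := by
      rw [hR_def]
      simp only [mul_assoc, hUU, mul_one]
    have hY2 : Y = R * (W * R) := by
      rw [hY_def, hMm_def, Matrix.conjTranspose_mul, ← Matrix.star_eq_conjTranspose R, hRH,
        hW_def]
      simp only [mul_assoc]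
    rw [hL, hY2]
    calc star U * (R * (W * R)) * U = (star U * R) * W * (R * U) := by simp only [mul_assoc]
      _ = Dhalf * star U * W * (U * Dhalf) := by rw [hR1, hR2]
      _ = Dhalf * E * Dhalf := by rw [hE_def]; simp only [mul_assoc]
  have hkey : ∀ j, ∑ i, c i j * mu i = lam j * eps j := by
    intro j
    have hentry : (star Q * diagonal (fun i => ((mu i : ℝ) : ℂ)) * Q) j j
        = (Dhalf * E * Dhalf) j j := by rw [hkeyM]
    rw [conj_entry_diag Q mu j] at hentry
    have hrhs : (Dhalf * E * Dhalf) j j = ((lam j * eps j : ℝ) : ℂ) := by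
      rw [Matrix.mul_diagonal, hDhalf_def, Matrix.diagonal_mul, hEjj j]
      push_cast
      rw [show (Real.sqrt (lam j) : ℂ) * ((eps j : ℝ) : ℂ) * (Real.sqrt (lam j) : ℂ)
          = ((Real.sqrt (lam j) : ℂ) * (Real.sqrt (lam j) : ℂ)) * ((eps j : ℝ) : ℂ) from by ring,
        ← Complex.ofReal_mul, Real.mul_self_sqrt (hlam j)]
    rw [hrhs] at hentry
    exact_mod_cast hentry
  -- traces
  have hLHS : Matrix.trace (cfc f (Zᴴ * A * Z)) = ((∑ i, f (nu i) : ℝ) : ℂ) := by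
    rw [hBps.1.cfc_eq f, trace_cfc_herm hBps.1 f]
  have hDf : (hAH.cfc f) = U * diagonal (fun j => ((f (lam j) : ℝ) : ℂ)) * star U := rfl
  have hRHS : Matrix.trace (Zᴴ * cfc f A * Z) = ((∑ j, f (lam j) * eps j : ℝ) : ℂ) := by
    rw [hAH.cfc_eq f, hDf, Matrix.trace_mul_cycle]
    rw [show Z * Zᴴ * (U * diagonal (fun j => ((f (lam j) : ℝ) : ℂ)) * star U)
        = (W * U * diagonal (fun j => ((f (lam j) : ℝ) : ℂ))) * star U from by
      rw [hW_def]; simp only [mul_assoc]]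
    rw [Matrix.trace_mul_comm]
    rw [show star U * (W * U * diagonal (fun j => ((f (lam j) : ℝ) : ℂ)))
        = E * diagonal (fun j => ((f (lam j) : ℝ) : ℂ)) from by
      rw [hE_def]; simp only [mul_assoc]]
    rw [Matrix.trace]
    push_cast
    refine Finset.sum_congr rfl fun j _ => ?_
    rw [Matrix.diag_apply, Matrix.mul_diagonal, hEjj j]
    push_cast
    ring
  rw [hLHS, hRHS, Complex.real_le_real, hsum_nm]
  exact klein_core f hf_concave hf_nonneg lam mu eps c hlam hmu heps1 hc hrow hcol hkey
end

section
/- Let n ≥ 1, let f : [0,∞) → [0,∞) be a concave function, let A be an n×n positive semidefinite complex matrix, and let Z be an n×n expansive complex matrix (Z*Z ≥ I). Then the largest eigenvalue of f(Z*AZ) is at most the largest eigenvalue of Z*f(A)Z; equivalently, the operator norm of f(Z*AZ) is at most the operator norm of Z*f(A)Z. (Operator-norm case of Theorem 2.1.) -/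
open Matrix ComplexOrder

variable {n : ℕ}

lemma aux_concave_mono {f : ℝ → ℝ} (hf : ConcaveOn ℝ (Set.Ici (0:ℝ)) f)
    (h0 : ∀ x : ℝ, 0 ≤ x → 0 ≤ f x) {a b : ℝ} (ha : 0 ≤ a) (hab : a ≤ b) :
    f a ≤ f b := by
  rcases eq_or_lt_of_le hab with rfl | hlt
  · exact le_rfl
  refine le_of_forall_pos_le_add fun ε hε => ?_
  set c : ℝ := max (b + 1) (a + (b - a) * f a / ε) with hc
  have hcb : b < c := lt_of_lt_of_le (by linarith) (le_max_left _ _)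
  have hca : a < c := hlt.trans hcb
  have hden : (0:ℝ) < c - a := by linarith
  set t : ℝ := (c - b) / (c - a) with htdef
  have ht0 : 0 ≤ t := div_nonneg (by linarith) hden.le
  have ht1' : 1 - t = (b - a) / (c - a) := by
    rw [htdef, eq_div_iff hden.ne', sub_mul, one_mul, div_mul_cancel₀ _ hden.ne']
    ring
  have ht1 : 0 ≤ 1 - t := by rw [ht1']; exact div_nonneg (by linarith) hden.le
  have hcomb : t • a + (1 - t) • c = b := by
    simp only [smul_eq_mul, htdef, ht1']
    field_simp
    ring
  have hjen := hf.2 (Set.mem_Ici.2 ha) (Set.mem_Ici.2 (ha.trans hca.le)) ht0 ht1 (by ring)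
  rw [hcomb] at hjen
  simp only [smul_eq_mul] at hjen
  have hfc : 0 ≤ f c := h0 c (ha.trans hca.le)
  have hkey : (1 - t) * f a ≤ ε := by
    rw [ht1', div_mul_eq_mul_div, div_le_iff₀ hden]
    have hle : a + (b - a) * f a / ε ≤ c := le_max_right _ _
    have : (b - a) * f a / ε ≤ c - a := by linarith
    calc (b - a) * f a = ((b - a) * f a / ε) * ε := by field_simp
      _ ≤ (c - a) * ε := by
          exact mul_le_mul_of_nonneg_right this hε.le
      _ = ε * (c - a) := by ring
  nlinarith [mul_nonneg ht1 hfc, mul_nonneg ht0 (h0 a ha)]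

lemma aux_concave_chord {f : ℝ → ℝ} (hf : ConcaveOn ℝ (Set.Ici (0:ℝ)) f)
    (h0 : ∀ x : ℝ, 0 ≤ x → 0 ≤ f x) {l μ : ℝ} (hμ : 0 < μ) (hl : 0 ≤ l) (hlμ : l ≤ μ) :
    f μ / μ * l ≤ f l := by
  have hjen := hf.2 (Set.mem_Ici.2 hμ.le) (Set.mem_Ici.2 (le_refl (0:ℝ)))
      (div_nonneg hl hμ.le : (0:ℝ) ≤ l / μ)
      (sub_nonneg.mpr ((div_le_one hμ).2 hlμ) : (0:ℝ) ≤ 1 - l / μ)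
      (by ring : l / μ + (1 - l / μ) = 1)
  simp only [smul_eq_mul, mul_zero, add_zero] at hjen
  rw [div_mul_cancel₀ _ hμ.ne'] at hjen
  have h2 : 0 ≤ (1 - l / μ) * f 0 :=
    mul_nonneg (by rw [sub_nonneg]; exact (div_le_one hμ).2 hlμ) (h0 0 le_rfl)
  calc f μ / μ * l = l / μ * f μ := by ring
    _ ≤ f l := by linarith

lemma aux_dot_conj (W P : Matrix (Fin n) (Fin n) ℂ) (x : Fin n → ℂ) :
    star x ⬝ᵥ ((Wᴴ * P * W) *ᵥ x) = star (W *ᵥ x) ⬝ᵥ (P *ᵥ (W *ᵥ x)) := by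
  rw [star_mulVec, ← mulVec_mulVec, ← mulVec_mulVec, dotProduct_mulVec]

lemma aux_dot_ZZ (Z : Matrix (Fin n) (Fin n) ℂ) (x : Fin n → ℂ) :
    star x ⬝ᵥ ((Zᴴ * Z) *ᵥ x) = star (Z *ᵥ x) ⬝ᵥ (Z *ᵥ x) := by
  rw [star_mulVec, ← mulVec_mulVec, dotProduct_mulVec]

lemma aux_cfc_id {H : Matrix (Fin n) (Fin n) ℂ} (hH : H.IsHermitian) :
    hH.cfc (fun x => x) = H := by
  unfold Matrix.IsHermitian.cfc
  exact hH.spectral_theorem.symm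

lemma aux_dot_cfc {H : Matrix (Fin n) (Fin n) ℂ} (hH : H.IsHermitian) (g : ℝ → ℝ)
    (y : Fin n → ℂ) :
    star y ⬝ᵥ (hH.cfc g *ᵥ y) =
      ((∑ i, g (hH.eigenvalues i) *
        ‖((star (hH.eigenvectorUnitary : Matrix (Fin n) (Fin n) ℂ)) *ᵥ y) i‖ ^ 2 : ℝ) : ℂ) := by
  set U : Matrix (Fin n) (Fin n) ℂ := (hH.eigenvectorUnitary : Matrix (Fin n) (Fin n) ℂ) with hU
  set c : Fin n → ℂ := star U *ᵥ y with hcdef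
  have h1 : hH.cfc g *ᵥ y = U *ᵥ (diagonal (RCLike.ofReal ∘ g ∘ hH.eigenvalues) *ᵥ c) := by
    unfold Matrix.IsHermitian.cfc
    rw [Unitary.conjStarAlgAut_apply, hcdef, mulVec_mulVec, mulVec_mulVec]
  have h2 : star y ᵥ* U = star c := by
    rw [hcdef, star_mulVec, ← star_eq_conjTranspose, star_star]
  rw [h1, dotProduct_mulVec, h2, dotProduct]
  push_cast
  refine Finset.sum_congr rfl fun i _ => ?_
  rw [mulVec_diagonal]
  have hcm : (starRingEnd ℂ) (c i) * c i = ((‖c i‖ : ℂ)) ^ 2 := RCLike.conj_mul (c i)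
  calc star (c i) * ((RCLike.ofReal ∘ g ∘ hH.eigenvalues) i * c i)
      = ((g (hH.eigenvalues i) : ℂ)) * ((starRingEnd ℂ) (c i) * c i) := by
        simp only [Function.comp_apply, RCLike.star_def]
        exact mul_left_comm _ _ _
    _ = (g (hH.eigenvalues i) : ℂ) * (‖c i‖ : ℂ) ^ 2 := by rw [hcm]

lemma aux_cfc_one {H : Matrix (Fin n) (Fin n) ℂ} (hH : H.IsHermitian) :
    hH.cfc (fun _ => (1:ℝ)) = 1 := by
  unfold Matrix.IsHermitian.cfc
  have : diagonal (RCLike.ofReal ∘ (fun _ => (1:ℝ)) ∘ hH.eigenvalues) = (1 : Matrix (Fin n) (Fin n) ℂ) := by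
    simp [Function.comp_def, Matrix.diagonal_one]
  rw [Unitary.conjStarAlgAut_apply, this, mul_one]
  exact mem_unitaryGroup_iff.mp hH.eigenvectorUnitary.2

lemma aux_dot_norm {H : Matrix (Fin n) (Fin n) ℂ} (hH : H.IsHermitian) (y : Fin n → ℂ) :
    star y ⬝ᵥ y =
      ((∑ i, ‖((star (hH.eigenvectorUnitary : Matrix (Fin n) (Fin n) ℂ)) *ᵥ y) i‖ ^ 2 : ℝ) : ℂ) := by
  have h := aux_dot_cfc hH (fun _ => (1:ℝ)) y
  rw [aux_cfc_one hH, one_mulVec] at h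
  simpa using h

lemma aux_sum_single (g : Fin n → ℝ) (j : Fin n) :
    ∑ i, g i * ‖(Pi.single j 1 : Fin n → ℂ) i‖ ^ 2 = g j := by
  rw [Finset.sum_eq_single j]
  · simp
  · intro i _ hij
    simp [Pi.single_eq_of_ne hij]
  · simp

lemma aux_star_mulVec_single {H : Matrix (Fin n) (Fin n) ℂ} (hH : H.IsHermitian) (j : Fin n) :
    (star (hH.eigenvectorUnitary : Matrix (Fin n) (Fin n) ℂ)) *ᵥ
      ((hH.eigenvectorUnitary : Matrix (Fin n) (Fin n) ℂ) *ᵥ Pi.single j 1) = Pi.single j 1 := by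
  rw [mulVec_mulVec, mem_unitaryGroup_iff'.mp hH.eigenvectorUnitary.2, one_mulVec]

lemma aux_sum_single_one (j : Fin n) :
    ∑ i, ‖(Pi.single j 1 : Fin n → ℂ) i‖ ^ 2 = 1 := by
  simpa using aux_sum_single (fun _ => (1:ℝ)) j

lemma aux_dot_self {H : Matrix (Fin n) (Fin n) ℂ} (hH : H.IsHermitian) (y : Fin n → ℂ) :
    star y ⬝ᵥ (H *ᵥ y) =
      ((∑ i, hH.eigenvalues i *
        ‖((star (hH.eigenvectorUnitary : Matrix (Fin n) (Fin n) ℂ)) *ᵥ y) i‖ ^ 2 : ℝ) : ℂ) := by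
  conv_lhs => rw [← aux_cfc_id hH]
  exact aux_dot_cfc hH _ y

lemma aux_dot_single {H : Matrix (Fin n) (Fin n) ℂ} (hH : H.IsHermitian) (j : Fin n) :
    star ((hH.eigenvectorUnitary : Matrix (Fin n) (Fin n) ℂ) *ᵥ Pi.single j 1) ⬝ᵥ
      (H *ᵥ ((hH.eigenvectorUnitary : Matrix (Fin n) (Fin n) ℂ) *ᵥ Pi.single j 1)) =
      ((hH.eigenvalues j : ℝ) : ℂ) := by
  rw [aux_dot_self hH, aux_star_mulVec_single hH, aux_sum_single]

lemma aux_norm_single {H : Matrix (Fin n) (Fin n) ℂ} (hH : H.IsHermitian) (j : Fin n) :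
    star ((hH.eigenvectorUnitary : Matrix (Fin n) (Fin n) ℂ) *ᵥ Pi.single j 1) ⬝ᵥ
      ((hH.eigenvectorUnitary : Matrix (Fin n) (Fin n) ℂ) *ᵥ Pi.single j 1) = ((1:ℝ) : ℂ) := by
  rw [aux_dot_norm hH, aux_star_mulVec_single hH, aux_sum_single_one]

/-- Theorem 2.1, operator-norm case: for concave `f : [0,∞) → [0,∞)`, `A ≥ 0` and
expansive `Z`, the largest eigenvalue of `f(ZᴴAZ)` is at most that of `Zᴴ f(A) Z`. -/
theorem maxEigenvalue_cfc_concave_expansive_le {n : ℕ} (hn : 1 ≤ n) (f : ℝ → ℝ)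
    (hf_concave : ConcaveOn ℝ (Set.Ici (0 : ℝ)) f)
    (hf_nonneg : ∀ x : ℝ, 0 ≤ x → 0 ≤ f x)
    (A Z : Matrix (Fin n) (Fin n) ℂ)
    (hA : A.PosSemidef) (hZ : (Zᴴ * Z - 1).PosSemidef) :
    (⨆ i, Matrix.IsHermitian.eigenvalues
        (cfc_predicate f (Zᴴ * A * Z) : IsSelfAdjoint _) i) ≤
      ⨆ i, Matrix.IsHermitian.eigenvalues
        (Matrix.isHermitian_conjTranspose_mul_mul Z
          (cfc_predicate f A : IsSelfAdjoint _)) i := by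
  haveI : Nonempty (Fin n) := ⟨⟨0, hn⟩⟩
  have hAH : A.IsHermitian := hA.1
  have hB : (Zᴴ * A * Z).PosSemidef := hA.conjTranspose_mul_mul_same Z
  have hBH : (Zᴴ * A * Z).IsHermitian := hB.1
  obtain ⟨j, hj⟩ := Finite.exists_max hBH.eigenvalues
  have hμ0 : 0 ≤ hBH.eigenvalues j := hB.eigenvalues_nonneg j
  -- Z is invertible
  have hZZ : (Zᴴ * Z).PosDef := by
    have h' : Zᴴ * Z = 1 + (Zᴴ * Z - 1) := by abel
    rw [h']
    exact Matrix.PosDef.add_posSemidef Matrix.PosDef.one hZ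
  have hdetZ : IsUnit Z.det := by
    have h1 : IsUnit (Zᴴ * Z).det := hZZ.det_pos.ne'.isUnit
    rw [Matrix.det_mul] at h1
    exact isUnit_of_mul_isUnit_right h1
  have hZinv : Z * Z⁻¹ = 1 := Matrix.mul_nonsing_inv Z hdetZ
  -- All eigenvalues of A are at most the largest eigenvalue of ZᴴAZ
  have hAk : ∀ i, hAH.eigenvalues i ≤ hBH.eigenvalues j := by
    intro i
    set u : Fin n → ℂ :=
      (hAH.eigenvectorUnitary : Matrix (Fin n) (Fin n) ℂ) *ᵥ Pi.single i 1 with hu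
    set x : Fin n → ℂ := Z⁻¹ *ᵥ u with hx
    have hZx : Z *ᵥ x = u := by rw [hx, mulVec_mulVec, hZinv, one_mulVec]
    have e2 : star x ⬝ᵥ ((Zᴴ * A * Z) *ᵥ x) = ((hAH.eigenvalues i : ℝ) : ℂ) := by
      rw [aux_dot_conj, hZx, hu, aux_dot_single hAH i]
    have e3 := aux_dot_self hBH x
    have e4 : star x ⬝ᵥ x ≤ star u ⬝ᵥ u := by
      have h5 := hZ.dotProduct_mulVec_nonneg x
      rw [Matrix.sub_mulVec, one_mulVec, dotProduct_sub, sub_nonneg] at h5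
      calc star x ⬝ᵥ x ≤ star x ⬝ᵥ ((Zᴴ * Z) *ᵥ x) := h5
        _ = star (Z *ᵥ x) ⬝ᵥ (Z *ᵥ x) := aux_dot_ZZ Z x
        _ = star u ⬝ᵥ u := by rw [hZx]
    have e5 : star u ⬝ᵥ u = ((1:ℝ) : ℂ) := by rw [hu]; exact aux_norm_single hAH i
    have e6 := aux_dot_norm hBH x
    have hwsum : (∑ k, ‖((star (hBH.eigenvectorUnitary : Matrix (Fin n) (Fin n) ℂ)) *ᵥ x) k‖ ^ 2)
        ≤ 1 := by
      rw [← Complex.real_le_real, ← e6]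
      exact e5 ▸ e4
    have hval : hAH.eigenvalues i = ∑ k, hBH.eigenvalues k *
        ‖((star (hBH.eigenvectorUnitary : Matrix (Fin n) (Fin n) ℂ)) *ᵥ x) k‖ ^ 2 := by
      exact_mod_cast e2.symm.trans e3
    rw [hval]
    calc ∑ k, hBH.eigenvalues k *
          ‖((star (hBH.eigenvectorUnitary : Matrix (Fin n) (Fin n) ℂ)) *ᵥ x) k‖ ^ 2
        ≤ ∑ k, hBH.eigenvalues j *
          ‖((star (hBH.eigenvectorUnitary : Matrix (Fin n) (Fin n) ℂ)) *ᵥ x) k‖ ^ 2 :=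
          Finset.sum_le_sum fun k _ => mul_le_mul_of_nonneg_right (hj k) (by positivity)
      _ = hBH.eigenvalues j * ∑ k,
          ‖((star (hBH.eigenvectorUnitary : Matrix (Fin n) (Fin n) ℂ)) *ᵥ x) k‖ ^ 2 := by
          rw [Finset.mul_sum]
      _ ≤ hBH.eigenvalues j * 1 := mul_le_mul_of_nonneg_left hwsum hμ0
      _ = hBH.eigenvalues j := mul_one _
  -- Step B : f (top eigenvalue of ZᴴAZ) is at most the RHS sup
  have key2 : ∀ (hM : (Zᴴ * cfc f A * Z).IsHermitian),
      f (hBH.eigenvalues j) ≤ ⨆ i, hM.eigenvalues i := by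
    intro hM
    set x0 : Fin n → ℂ :=
      (hBH.eigenvectorUnitary : Matrix (Fin n) (Fin n) ℂ) *ᵥ Pi.single j 1 with hx0
    set y : Fin n → ℂ := Z *ᵥ x0 with hy
    have q1 := aux_dot_self hM x0
    have q2 : star x0 ⬝ᵥ ((Zᴴ * cfc f A * Z) *ᵥ x0) = star y ⬝ᵥ (cfc f A *ᵥ y) := by
      rw [aux_dot_conj, hy]
    have q3 : star y ⬝ᵥ (cfc f A *ᵥ y)
        = ((∑ k, f (hAH.eigenvalues k) *
            ‖((star (hAH.eigenvectorUnitary : Matrix (Fin n) (Fin n) ℂ)) *ᵥ y) k‖ ^ 2 : ℝ) : ℂ) := by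
      rw [hAH.cfc_eq f]
      exact aux_dot_cfc hAH f y
    have q4 : star x0 ⬝ᵥ ((Zᴴ * A * Z) *ᵥ x0) = ((hBH.eigenvalues j : ℝ) : ℂ) := by
      rw [hx0]; exact aux_dot_single hBH j
    have q5 : star x0 ⬝ᵥ ((Zᴴ * A * Z) *ᵥ x0) = star y ⬝ᵥ (A *ᵥ y) := by
      rw [aux_dot_conj, hy]
    have q6 := aux_dot_self hAH y
    have hAy : (∑ k, hAH.eigenvalues k *
        ‖((star (hAH.eigenvectorUnitary : Matrix (Fin n) (Fin n) ℂ)) *ᵥ y) k‖ ^ 2)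
        = hBH.eigenvalues j := by
      exact_mod_cast q6.symm.trans (q5.symm.trans q4)
    have nx : star x0 ⬝ᵥ x0 = ((1:ℝ) : ℂ) := by rw [hx0]; exact aux_norm_single hBH j
    have nM : (∑ k, ‖((star (hM.eigenvectorUnitary : Matrix (Fin n) (Fin n) ℂ)) *ᵥ x0) k‖ ^ 2)
        = 1 := by
      exact_mod_cast (aux_dot_norm hM x0).symm.trans nx
    have ny : (1:ℝ) ≤ ∑ k,
        ‖((star (hAH.eigenvectorUnitary : Matrix (Fin n) (Fin n) ℂ)) *ᵥ y) k‖ ^ 2 := by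
      rw [← Complex.real_le_real, ← aux_dot_norm hAH y, ← nx]
      have h5 := hZ.dotProduct_mulVec_nonneg x0
      rw [Matrix.sub_mulVec, one_mulVec, dotProduct_sub, sub_nonneg] at h5
      calc star x0 ⬝ᵥ x0 ≤ star x0 ⬝ᵥ ((Zᴴ * Z) *ᵥ x0) := h5
        _ = star (Z *ᵥ x0) ⬝ᵥ (Z *ᵥ x0) := aux_dot_ZZ Z x0
        _ = star y ⬝ᵥ y := by rw [hy]
    have hlow : f (hBH.eigenvalues j) ≤ ∑ k, f (hAH.eigenvalues k) *
        ‖((star (hAH.eigenvectorUnitary : Matrix (Fin n) (Fin n) ℂ)) *ᵥ y) k‖ ^ 2 := by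
      rcases eq_or_lt_of_le hμ0 with hzero | hpos
      · calc f (hBH.eigenvalues j) = f (hBH.eigenvalues j) * 1 := (mul_one _).symm
          _ ≤ f (hBH.eigenvalues j) * ∑ k,
              ‖((star (hAH.eigenvectorUnitary : Matrix (Fin n) (Fin n) ℂ)) *ᵥ y) k‖ ^ 2 :=
              mul_le_mul_of_nonneg_left ny (hf_nonneg _ hμ0)
          _ = ∑ k, f (hBH.eigenvalues j) *
              ‖((star (hAH.eigenvectorUnitary : Matrix (Fin n) (Fin n) ℂ)) *ᵥ y) k‖ ^ 2 := by
              rw [Finset.mul_sum]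
          _ ≤ ∑ k, f (hAH.eigenvalues k) *
              ‖((star (hAH.eigenvectorUnitary : Matrix (Fin n) (Fin n) ℂ)) *ᵥ y) k‖ ^ 2 := by
              refine Finset.sum_le_sum fun k _ => mul_le_mul_of_nonneg_right ?_ (by positivity)
              exact aux_concave_mono hf_concave hf_nonneg hμ0
                (hzero ▸ hA.eigenvalues_nonneg k)
      · calc f (hBH.eigenvalues j)
            = f (hBH.eigenvalues j) / hBH.eigenvalues j * hBH.eigenvalues j := by
              field_simp
          _ = f (hBH.eigenvalues j) / hBH.eigenvalues j * ∑ k, hAH.eigenvalues k *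
              ‖((star (hAH.eigenvectorUnitary : Matrix (Fin n) (Fin n) ℂ)) *ᵥ y) k‖ ^ 2 := by
              rw [hAy]
          _ = ∑ k, f (hBH.eigenvalues j) / hBH.eigenvalues j * (hAH.eigenvalues k *
              ‖((star (hAH.eigenvectorUnitary : Matrix (Fin n) (Fin n) ℂ)) *ᵥ y) k‖ ^ 2) := by
              rw [Finset.mul_sum]
          _ ≤ ∑ k, f (hAH.eigenvalues k) *
              ‖((star (hAH.eigenvectorUnitary : Matrix (Fin n) (Fin n) ℂ)) *ᵥ y) k‖ ^ 2 := by
              refine Finset.sum_le_sum fun k _ => ?_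
              have hch := aux_concave_chord hf_concave hf_nonneg hpos
                (hA.eigenvalues_nonneg k) (hAk k)
              calc f (hBH.eigenvalues j) / hBH.eigenvalues j * (hAH.eigenvalues k *
                  ‖((star (hAH.eigenvectorUnitary : Matrix (Fin n) (Fin n) ℂ)) *ᵥ y) k‖ ^ 2)
                  = (f (hBH.eigenvalues j) / hBH.eigenvalues j * hAH.eigenvalues k) *
                  ‖((star (hAH.eigenvectorUnitary : Matrix (Fin n) (Fin n) ℂ)) *ᵥ y) k‖ ^ 2 := by
                    ring
                _ ≤ _ := mul_le_mul_of_nonneg_right hch (by positivity)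
    have heq : (∑ k, hM.eigenvalues k *
        ‖((star (hM.eigenvectorUnitary : Matrix (Fin n) (Fin n) ℂ)) *ᵥ x0) k‖ ^ 2)
        = ∑ k, f (hAH.eigenvalues k) *
        ‖((star (hAH.eigenvectorUnitary : Matrix (Fin n) (Fin n) ℂ)) *ᵥ y) k‖ ^ 2 := by
      exact_mod_cast q1.symm.trans (q2.trans q3)
    have hup : (∑ k, hM.eigenvalues k *
        ‖((star (hM.eigenvectorUnitary : Matrix (Fin n) (Fin n) ℂ)) *ᵥ x0) k‖ ^ 2)
        ≤ ⨆ i, hM.eigenvalues i := by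
      have hbdd : BddAbove (Set.range hM.eigenvalues) :=
        Set.Finite.bddAbove (Set.finite_range _)
      calc (∑ k, hM.eigenvalues k *
          ‖((star (hM.eigenvectorUnitary : Matrix (Fin n) (Fin n) ℂ)) *ᵥ x0) k‖ ^ 2)
          ≤ ∑ k, (⨆ i, hM.eigenvalues i) *
          ‖((star (hM.eigenvectorUnitary : Matrix (Fin n) (Fin n) ℂ)) *ᵥ x0) k‖ ^ 2 :=
            Finset.sum_le_sum fun k _ =>
              mul_le_mul_of_nonneg_right (le_ciSup hbdd k) (by positivity)
        _ = (⨆ i, hM.eigenvalues i) * ∑ k,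
          ‖((star (hM.eigenvectorUnitary : Matrix (Fin n) (Fin n) ℂ)) *ᵥ x0) k‖ ^ 2 := by
            rw [Finset.mul_sum]
        _ = ⨆ i, hM.eigenvalues i := by rw [nM, mul_one]
    linarith
  -- Step A : each eigenvalue of f(ZᴴAZ) is at most f (top eigenvalue of ZᴴAZ)
  have key1 : ∀ (hG : (cfc f (Zᴴ * A * Z)).IsHermitian) (i : Fin n),
      hG.eigenvalues i ≤ f (hBH.eigenvalues j) := by
    intro hG i
    set v : Fin n → ℂ :=
      (hG.eigenvectorUnitary : Matrix (Fin n) (Fin n) ℂ) *ᵥ Pi.single i 1 with hv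
    have e1 : star v ⬝ᵥ (cfc f (Zᴴ * A * Z) *ᵥ v) = ((hG.eigenvalues i : ℝ) : ℂ) := by
      rw [hv]; exact aux_dot_single hG i
    have e2 : star v ⬝ᵥ (cfc f (Zᴴ * A * Z) *ᵥ v)
        = ((∑ k, f (hBH.eigenvalues k) *
            ‖((star (hBH.eigenvectorUnitary : Matrix (Fin n) (Fin n) ℂ)) *ᵥ v) k‖ ^ 2 : ℝ) : ℂ) := by
      rw [hBH.cfc_eq f]
      exact aux_dot_cfc hBH f v
    have e3 : star v ⬝ᵥ v = ((1:ℝ) : ℂ) := by rw [hv]; exact aux_norm_single hG i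
    have hsum1 : (∑ k, ‖((star (hBH.eigenvectorUnitary : Matrix (Fin n) (Fin n) ℂ)) *ᵥ v) k‖ ^ 2)
        = 1 := by
      exact_mod_cast (aux_dot_norm hBH v).symm.trans e3
    have hval : hG.eigenvalues i = ∑ k, f (hBH.eigenvalues k) *
        ‖((star (hBH.eigenvectorUnitary : Matrix (Fin n) (Fin n) ℂ)) *ᵥ v) k‖ ^ 2 := by
      exact_mod_cast e1.symm.trans e2
    rw [hval]
    calc (∑ k, f (hBH.eigenvalues k) *
          ‖((star (hBH.eigenvectorUnitary : Matrix (Fin n) (Fin n) ℂ)) *ᵥ v) k‖ ^ 2)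
        ≤ ∑ k, f (hBH.eigenvalues j) *
          ‖((star (hBH.eigenvectorUnitary : Matrix (Fin n) (Fin n) ℂ)) *ᵥ v) k‖ ^ 2 := by
          refine Finset.sum_le_sum fun k _ => mul_le_mul_of_nonneg_right ?_ (by positivity)
          exact aux_concave_mono hf_concave hf_nonneg (hB.eigenvalues_nonneg k) (hj k)
      _ = f (hBH.eigenvalues j) * ∑ k,
          ‖((star (hBH.eigenvectorUnitary : Matrix (Fin n) (Fin n) ℂ)) *ᵥ v) k‖ ^ 2 := by
          rw [Finset.mul_sum]
      _ = f (hBH.eigenvalues j) := by rw [hsum1, mul_one]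
  exact ciSup_le fun i => le_trans (key1 _ i) (key2 _)
end

section
/- Let n ≥ 1, let B be an n×n positive semidefinite complex matrix, let x ≥ 0 be a real number, and let Z be an n×n expansive complex matrix (Z*Z ≥ I). If the spectrum of B is contained in {0} ∪ (x, ∞), then the spectrum of Z*BZ is also contained in {0} ∪ (x, ∞). (The 'simple fact' used in the proof of Theorem 2.1.) -/
open Matrix ComplexOrder

private lemma posSemidef_unitary_conj_iff {n : Type*} [Fintype n] [DecidableEq n]
    {U M : Matrix n n ℂ} (hU : Uᴴ * U = 1) :
    (U * M * Uᴴ).PosSemidef ↔ M.PosSemidef := by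
  constructor
  · intro h
    have := h.conjTranspose_mul_mul_same U
    rwa [show Uᴴ * (U * M * Uᴴ) * U = M by
      rw [mul_assoc, mul_assoc, hU, mul_one, ← mul_assoc, hU, one_mul]] at this
  · intro h
    exact h.mul_mul_conjTranspose_same U

private lemma sq_sub_smul_posSemidef_iff {n : Type*} [Fintype n] [DecidableEq n]
    {A : Matrix n n ℂ} (hA : A.IsHermitian) (y : ℝ) :
    (A * A - (y : ℂ) • A).PosSemidef ↔
      ∀ i, 0 ≤ hA.eigenvalues i * (hA.eigenvalues i - y) := by
  set V : Matrix n n ℂ := (hA.eigenvectorUnitary : Matrix n n ℂ) with hV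
  have hU : Vᴴ * V = 1 := by
    rw [← star_eq_conjTranspose]
    exact (mem_unitaryGroup_iff').mp hA.eigenvectorUnitary.2
  set D : Matrix n n ℂ := diagonal (RCLike.ofReal ∘ hA.eigenvalues) with hD
  have hspec : A = V * D * Vᴴ := by
    rw [hV, hD, ← star_eq_conjTranspose]; exact hA.spectral_theorem
  have key : A * A - (y : ℂ) • A =
      V * diagonal (fun i => ((hA.eigenvalues i * (hA.eigenvalues i - y) : ℝ) : ℂ)) * Vᴴ := by
    conv_lhs => rw [hspec]
    have h1 : V * D * Vᴴ * (V * D * Vᴴ) = V * (D * (Vᴴ * V) * D) * Vᴴ := by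
      simp only [mul_assoc]
    have h2 : (y : ℂ) • (V * D * Vᴴ) = V * ((y : ℂ) • D) * Vᴴ := by
      simp [Matrix.mul_smul, Matrix.smul_mul]
    rw [h1, hU, mul_one, h2, ← Matrix.sub_mul, ← Matrix.mul_sub]
    congr 1
    congr 1
    rw [show D = diagonal (fun i => ((hA.eigenvalues i : ℝ) : ℂ)) from rfl,
      diagonal_mul_diagonal, ← diagonal_smul]
    ext i j
    simp only [Matrix.sub_apply, Matrix.diagonal_apply]
    split_ifs with h
    · simp only [Pi.smul_apply, Function.comp_apply, smul_eq_mul]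
      push_cast
      ring
    · simp
  rw [key, posSemidef_unitary_conj_iff hU, posSemidef_diagonal_iff]
  constructor
  · intro h i
    have := h i
    rwa [Complex.zero_le_real] at this
  · intro h i
    rw [Complex.zero_le_real]
    exact h i

/-- The "simple fact": if `B ≥ 0` has spectrum in `{0} ∪ (x, ∞)` and `Z` is expansive,
then `ZᴴBZ` also has spectrum in `{0} ∪ (x, ∞)`. -/
theorem spectrum_conjTranspose_mul_mul_subset_of_expansive {n : ℕ} (hn : 1 ≤ n)
    (B Z : Matrix (Fin n) (Fin n) ℂ) (hB : B.PosSemidef)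
    (x : ℝ) (hx : 0 ≤ x) (hZ : (Zᴴ * Z - 1).PosSemidef)
    (hspec : spectrum ℝ B ⊆ {0} ∪ Set.Ioi x) :
    spectrum ℝ (Zᴴ * B * Z) ⊆ {0} ∪ Set.Ioi x := by
  classical
  have hev_mem : ∀ i, hB.1.eigenvalues i = 0 ∨ x < hB.1.eigenvalues i := by
    intro i
    have := hspec (hB.1.eigenvalues_mem_spectrum_real i)
    simpa using this
  set F : Finset ℝ :=
    insert (x + 1)
      ((Finset.univ.filter (fun i => hB.1.eigenvalues i ≠ 0)).image hB.1.eigenvalues) with hF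
  have hFne : F.Nonempty := ⟨x + 1, Finset.mem_insert_self _ _⟩
  set y : ℝ := F.min' hFne with hy
  have hyx : x < y := by
    rw [hy]
    apply (Finset.lt_min'_iff F hFne).mpr
    intro b hb
    rw [hF] at hb
    rcases Finset.mem_insert.mp hb with h | h
    · rw [h]; linarith
    · obtain ⟨i, hi, rfl⟩ := Finset.mem_image.mp h
      rcases hev_mem i with h0 | h0
      · exact absurd h0 (Finset.mem_filter.mp hi).2
      · exact h0
  have hyle : ∀ i, hB.1.eigenvalues i ≠ 0 → y ≤ hB.1.eigenvalues i := by
    intro i hi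
    apply Finset.min'_le
    rw [hF]
    exact Finset.mem_insert_of_mem
      (Finset.mem_image.mpr ⟨i, Finset.mem_filter.mpr ⟨Finset.mem_univ i, hi⟩, rfl⟩)
  -- `B * B - y • B` is PSD
  have hBy : (B * B - (y : ℂ) • B).PosSemidef := by
    rw [sq_sub_smul_posSemidef_iff hB.1 y]
    intro i
    rcases hev_mem i with h0 | h0
    · rw [h0]; ring_nf; exact le_refl 0
    · have := hyle i (by linarith)
      nlinarith
  -- `Z` is invertible
  have hZZ : (Zᴴ * Z).PosDef := by
    have := Matrix.PosDef.add_posSemidef (Matrix.PosDef.one) hZ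
    rwa [add_sub_cancel] at this
  have hdetZZ : IsUnit (Zᴴ * Z).det := hZZ.isUnit.map (MonoidHom.id _) |>.map detMonoidHom
  have hdetZ : IsUnit Z.det := by
    rw [det_mul] at hdetZZ
    exact isUnit_of_mul_isUnit_right hdetZZ
  have hdetZH : IsUnit Zᴴ.det := by
    rw [det_conjTranspose]
    exact hdetZ.star
  -- `Z * Zᴴ - 1` is PSD
  have hZZ' : (Z * Zᴴ - 1).PosSemidef := by
    have hAinv : (Zᴴ * Z)⁻¹.PosDef := hZZ.inv
    open scoped MatrixOrder in
    set S := CFC.sqrt ((Zᴴ * Z)⁻¹) with hS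
    open scoped MatrixOrder in
    have hSS : S * S = (Zᴴ * Z)⁻¹ := CFC.sqrt_mul_sqrt_self _ hAinv.posSemidef.nonneg
    open scoped MatrixOrder in
    have hSH : Sᴴ = S := (CFC.sqrt_nonneg _).posSemidef.1
    have hdetS : IsUnit S.det := by
      have h1 : IsUnit ((Zᴴ * Z)⁻¹).det := (hZZ.inv).isUnit.map detMonoidHom
      rw [← hSS, det_mul] at h1
      exact isUnit_of_mul_isUnit_left h1
    have hSinv : S * S⁻¹ = 1 := mul_nonsing_inv S hdetS
    have hSinv' : S⁻¹ * S = 1 := nonsing_inv_mul S hdetS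
    have hdetA' : IsUnit (Zᴴ * Z).det := by rw [det_mul]; exact hdetZH.mul hdetZ
    have hA_eq : Zᴴ * Z = S⁻¹ * S⁻¹ := by
      rw [← Matrix.mul_inv_rev, hSS, Matrix.nonsing_inv_nonsing_inv _ hdetA']
    have hSAS : S * (Zᴴ * Z) * S = 1 := by
      rw [hA_eq, ← mul_assoc, mul_assoc S S⁻¹, ← mul_assoc S S⁻¹, hSinv, one_mul, hSinv']
    have hZSSZ : Z * (S * S) * Zᴴ = 1 := by
      rw [hSS, Matrix.mul_inv_rev]
      calc Z * (Z⁻¹ * Zᴴ⁻¹) * Zᴴ = Z * Z⁻¹ * (Zᴴ⁻¹ * Zᴴ) := by simp only [mul_assoc]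
        _ = 1 := by rw [mul_nonsing_inv Z hdetZ, nonsing_inv_mul Zᴴ hdetZH, one_mul]
    have key : Z * Zᴴ - 1 = (Z * S) * (Zᴴ * Z - 1) * (Z * S)ᴴ := by
      rw [conjTranspose_mul, hSH, Matrix.mul_sub, Matrix.sub_mul, mul_one]
      have e1 : Z * S * (Zᴴ * Z) * (S * Zᴴ) = Z * (S * (Zᴴ * Z) * S) * Zᴴ := by
        simp only [mul_assoc]
      have e2 : Z * S * (S * Zᴴ) = Z * (S * S) * Zᴴ := by
        simp only [mul_assoc]
      rw [e1, e2, hSAS, hZSSZ, mul_one]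
    rw [key]
    exact hZ.mul_mul_conjTranspose_same (Z * S)
  -- the conjugated matrix also satisfies `C * C - y • C ≥ 0`
  have hC : (Zᴴ * B * Z).PosSemidef := hB.conjTranspose_mul_mul_same Z
  have inner_psd : (B * (Z * Zᴴ - 1) * B + (B * B - (y : ℂ) • B)).PosSemidef := by
    apply Matrix.PosSemidef.add _ hBy
    have := hZZ'.conjTranspose_mul_mul_same B
    rwa [hB.1] at this
  have hCy : ((Zᴴ * B * Z) * (Zᴴ * B * Z) - (y : ℂ) • (Zᴴ * B * Z)).PosSemidef := by
    have h := inner_psd.conjTranspose_mul_mul_same Z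
    have e : Zᴴ * (B * (Z * Zᴴ - 1) * B + (B * B - (y : ℂ) • B)) * Z
        = (Zᴴ * B * Z) * (Zᴴ * B * Z) - (y : ℂ) • (Zᴴ * B * Z) := by
      simp only [Matrix.mul_add, Matrix.add_mul, Matrix.mul_sub, Matrix.sub_mul,
        Matrix.mul_one, Matrix.one_mul, Matrix.mul_smul, Matrix.smul_mul, Matrix.mul_assoc]
      abel
    rwa [e] at h
  -- conclude
  intro t ht
  rw [hC.1.spectrum_real_eq_range_eigenvalues] at ht
  obtain ⟨i, rfl⟩ := ht
  have h1 := hC.eigenvalues_nonneg i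
  have h2 := (sq_sub_smul_posSemidef_iff hC.1 y).mp hCy i
  by_cases h0 : hC.1.eigenvalues i = 0
  · left; exact h0
  · right
    have hpos : 0 < hC.1.eigenvalues i := lt_of_le_of_ne h1 (Ne.symm h0)
    have : y ≤ hC.1.eigenvalues i := by nlinarith
    simp only [Set.mem_Ioi]
    linarith
end

section
/- Let n ≥ 1, let P be an n×n complex orthogonal projection matrix (P* = P and P² = P), and let Z be an n×n expansive complex matrix (Z*Z ≥ I). Then the spectrum of Z*PZ is contained in {0} ∪ [1, ∞). (Claim (**) in the proof of Theorem 2.1.) -/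
open Matrix ComplexOrder

lemma star_mulVec_dotProduct {n : ℕ} (M N : Matrix (Fin n) (Fin n) ℂ) (x y : Fin n → ℂ) :
    star (M *ᵥ x) ⬝ᵥ (N *ᵥ y) = star x ⬝ᵥ ((Mᴴ * N) *ᵥ y) := by
  rw [star_mulVec, dotProduct_mulVec, vecMul_vecMul, ← dotProduct_mulVec]

/-- Claim (**): if `P` is an orthogonal projection and `Z` is expansive, then the spectrum
of `ZᴴPZ` is contained in `{0} ∪ [1, ∞)`. -/
theorem spectrum_conjTranspose_mul_proj_mul_subset {n : ℕ} (hn : 1 ≤ n)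
    (P Z : Matrix (Fin n) (Fin n) ℂ)
    (hP_herm : Pᴴ = P) (hP_idem : P * P = P)
    (hZ : (Zᴴ * Z - 1).PosSemidef) :
    spectrum ℝ (Zᴴ * P * Z) ⊆ {0} ∪ Set.Ici 1 := by
  -- P is PSD
  have hPpsd : P.PosSemidef := by
    have := posSemidef_conjTranspose_mul_self P
    rwa [hP_herm, hP_idem] at this
  have hApsd : (Zᴴ * P * Z).PosSemidef := hPpsd.conjTranspose_mul_mul_same Z
  have hA : (Zᴴ * P * Z).IsHermitian := hApsd.isHermitian
  -- Z is invertible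
  have hZZ : (Zᴴ * Z).PosDef := by
    have : ((Zᴴ * Z - 1) + 1).PosDef := Matrix.PosDef.posSemidef_add hZ Matrix.PosDef.one
    simpa using this
  have hdetZ : IsUnit Z.det := by
    have := (Matrix.isUnit_iff_isUnit_det _).1 hZZ.isUnit
    rw [Matrix.det_mul] at this
    exact isUnit_of_mul_isUnit_right this
  intro μ hμ
  rw [hA.spectrum_real_eq_range_eigenvalues] at hμ
  obtain ⟨i, rfl⟩ := hμ
  set μ := hA.eigenvalues i with hμdef
  by_contra hcon
  simp only [Set.mem_union, Set.mem_singleton_iff, Set.mem_Ici, not_or, not_le] at hcon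
  obtain ⟨hμ0, hμ1⟩ := hcon
  have hμpos : 0 < μ := lt_of_le_of_ne (hApsd.eigenvalues_nonneg i) (Ne.symm hμ0)
  -- eigenvector
  set v : Fin n → ℂ := ⇑(hA.eigenvectorBasis i) with hvdef
  have hv : (Zᴴ * P * Z) *ᵥ v = (μ : ℂ) • v := by
    have := hA.mulVec_eigenvectorBasis i
    simpa [hvdef] using this
  have hvE : ‖hA.eigenvectorBasis i‖ = 1 := hA.eigenvectorBasis.orthonormal.1 i

  -- the vectors w and u
  set w : Fin n → ℂ := (P * Z) *ᵥ v with hwdef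
  set u : Fin n → ℂ := Z⁻¹ *ᵥ w with hudef
  have hZu : Z *ᵥ u = w := by
    rw [hudef, mulVec_mulVec, Matrix.mul_nonsing_inv Z hdetZ, one_mulVec]
  set a : ℂ := star v ⬝ᵥ v with hadef
  have hww : star w ⬝ᵥ w = (μ : ℂ) * a := by
    rw [hwdef, star_mulVec_dotProduct]
    have hPZ : (P * Z)ᴴ * (P * Z) = Zᴴ * P * Z := by
      rw [conjTranspose_mul, hP_herm]
      calc Zᴴ * P * (P * Z) = Zᴴ * (P * P) * Z := by noncomm_ring
        _ = Zᴴ * P * Z := by rw [hP_idem]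
    rw [hPZ, hv, dotProduct_smul, smul_eq_mul, hadef]
  have hZw : Zᴴ *ᵥ w = (μ : ℂ) • v := by
    rw [hwdef, mulVec_mulVec, ← Matrix.mul_assoc, hv]
  have huv : star u ⬝ᵥ v = a := by
    have h1 : star (Z *ᵥ u) ⬝ᵥ w = star u ⬝ᵥ (Zᴴ *ᵥ w) := by
      rw [star_mulVec]
      conv_rhs => rw [dotProduct_mulVec]
    rw [hZu, hww, hZw, dotProduct_smul, smul_eq_mul] at h1
    have hμC : (μ : ℂ) ≠ 0 := by exact_mod_cast hμ0
    exact (mul_left_cancel₀ hμC h1).symm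
  have huu : star u ⬝ᵥ u ≤ (μ : ℂ) * a := by
    have h0 := hZ.dotProduct_mulVec_nonneg u
    have h1 : star u ⬝ᵥ ((Zᴴ * Z) *ᵥ u) = star w ⬝ᵥ w := by
      have := star_mulVec_dotProduct Z Z u u
      rw [hZu] at this
      exact this.symm
    rw [sub_mulVec, dotProduct_sub, one_mulVec, sub_nonneg, h1, hww] at h0
    exact h0
  -- move to EuclideanSpace
  set u' : EuclideanSpace ℂ (Fin n) := (WithLp.equiv 2 (Fin n → ℂ)).symm u with hu'def
  set v' : EuclideanSpace ℂ (Fin n) := (WithLp.equiv 2 (Fin n → ℂ)).symm v with hv'def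
  have hinner_uv : (inner ℂ u' v' : ℂ) = a := by
    rw [hu'def, hv'def, WithLp.equiv_symm_apply, EuclideanSpace.inner_toLp_toLp, dotProduct_comm, huv]
  have hinner_vv : (inner ℂ v' v' : ℂ) = a := by
    rw [hv'def, WithLp.equiv_symm_apply, EuclideanSpace.inner_toLp_toLp, dotProduct_comm, hadef]
  have hinner_uu : (inner ℂ u' u' : ℂ) = star u ⬝ᵥ u := by
    rw [hu'def, WithLp.equiv_symm_apply, EuclideanSpace.inner_toLp_toLp, dotProduct_comm]
  have hv'norm : ‖v'‖ = 1 := hvE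
  have ha_eq : a = ((1 : ℝ) : ℂ) := by
    rw [← hinner_vv, inner_self_eq_norm_sq_to_K, hv'norm]
    norm_num
  -- Cauchy-Schwarz
  have hCS : ‖(inner ℂ u' v' : ℂ)‖ ≤ ‖u'‖ * ‖v'‖ := norm_inner_le_norm u' v'
  rw [hinner_uv, ha_eq, hv'norm, mul_one] at hCS
  have h1u : (1 : ℝ) ≤ ‖u'‖ := by simpa using hCS
  have huu2 : ‖u'‖ ^ 2 ≤ μ := by
    have hre : RCLike.re (star u ⬝ᵥ u) ≤ RCLike.re ((μ : ℂ) * a) := by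
      rw [RCLike.le_iff_re_im] at huu
      exact huu.1
    rw [← hinner_uu, inner_self_eq_norm_sq] at hre
    rw [ha_eq] at hre
    simpa using hre
  nlinarith [norm_nonneg u']
end

section
/- Let n ≥ 1, let f : [0,∞) → ℝ be a convex function with f(0) ≤ 0, let A be an n×n positive semidefinite complex matrix, and let Z be an n×n expansive complex matrix (Z*Z ≥ I). Then Tr f(Z*AZ) ≥ Tr (Z*f(A)Z). (Result 1.7, the trace inequality for expansive operators.) -/
open Matrix ComplexOrder

variable {n : ℕ}

namespace TraceCfcAux


noncomputable def U {A : Matrix (Fin n) (Fin n) ℂ} (hA : A.IsHermitian) :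
    Matrix (Fin n) (Fin n) ℂ := (Matrix.IsHermitian.eigenvectorUnitary hA : Matrix (Fin n) (Fin n) ℂ)

lemma U_star_mul {A : Matrix (Fin n) (Fin n) ℂ} (hA : A.IsHermitian) :
    (U hA)ᴴ * U hA = 1 := by
  rw [← Matrix.star_eq_conjTranspose]
  exact Unitary.coe_star_mul_self _

lemma U_mul_star {A : Matrix (Fin n) (Fin n) ℂ} (hA : A.IsHermitian) :
    U hA * (U hA)ᴴ = 1 := by
  rw [← Matrix.star_eq_conjTranspose]
  exact Unitary.coe_mul_star_self _

lemma hcfc {A : Matrix (Fin n) (Fin n) ℂ} (hA : A.IsHermitian) (f : ℝ → ℝ) :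
    hA.cfc f = U hA * Matrix.diagonal (Complex.ofReal ∘ f ∘ hA.eigenvalues) * (U hA)ᴴ := by
  rw [Matrix.IsHermitian.cfc, Unitary.conjStarAlgAut_apply, Matrix.star_eq_conjTranspose]
  rfl

lemma cfc_mul_cfc {A : Matrix (Fin n) (Fin n) ℂ} (hA : A.IsHermitian) (f g : ℝ → ℝ) :
    hA.cfc f * hA.cfc g = hA.cfc (fun x => f x * g x) := by
  rw [hcfc, hcfc, hcfc]
  have h1 : U hA * diagonal (Complex.ofReal ∘ f ∘ hA.eigenvalues) * (U hA)ᴴ *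
      (U hA * diagonal (Complex.ofReal ∘ g ∘ hA.eigenvalues) * (U hA)ᴴ)
      = U hA * (diagonal (Complex.ofReal ∘ f ∘ hA.eigenvalues) * ((U hA)ᴴ * U hA) *
        diagonal (Complex.ofReal ∘ g ∘ hA.eigenvalues)) * (U hA)ᴴ := by
    simp only [Matrix.mul_assoc]
  rw [h1, U_star_mul, Matrix.mul_one, Matrix.diagonal_mul_diagonal]
  congr 1
  ext i
  simp

lemma cfc_id' {A : Matrix (Fin n) (Fin n) ℂ} (hA : A.IsHermitian) :
    hA.cfc (fun x => x) = A := by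
  rw [hcfc]
  exact (hA.spectral_theorem).symm

lemma cfc_one' {A : Matrix (Fin n) (Fin n) ℂ} (hA : A.IsHermitian) :
    hA.cfc (fun _ => (1 : ℝ)) = 1 := by
  rw [hcfc]
  have : Matrix.diagonal (Complex.ofReal ∘ (fun _ : ℝ => (1:ℝ)) ∘ hA.eigenvalues)
      = (1 : Matrix (Fin n) (Fin n) ℂ) := by
    have : (Complex.ofReal ∘ (fun _ : ℝ => (1:ℝ)) ∘ hA.eigenvalues) = fun _ => (1:ℂ) := by
      ext i; simp
    rw [this, Matrix.diagonal_one]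
  rw [this, Matrix.mul_one, U_mul_star]

lemma cfc_add' {A : Matrix (Fin n) (Fin n) ℂ} (hA : A.IsHermitian) (f g : ℝ → ℝ) :
    hA.cfc (fun x => f x + g x) = hA.cfc f + hA.cfc g := by
  simp only [hcfc]
  rw [← Matrix.add_mul, ← Matrix.mul_add]
  congr 2
  ext i j
  by_cases h : i = j <;> simp [Matrix.diagonal, h]

lemma cfc_sub' {A : Matrix (Fin n) (Fin n) ℂ} (hA : A.IsHermitian) (f g : ℝ → ℝ) :
    hA.cfc (fun x => f x - g x) = hA.cfc f - hA.cfc g := by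
  simp only [hcfc]
  rw [← Matrix.sub_mul, ← Matrix.mul_sub]
  congr 2
  ext i j
  by_cases h : i = j <;> simp [Matrix.diagonal, h]

lemma cfc_smul' {A : Matrix (Fin n) (Fin n) ℂ} (hA : A.IsHermitian) (t : ℝ) (f : ℝ → ℝ) :
    hA.cfc (fun x => t * f x) = (t : ℂ) • hA.cfc f := by
  simp only [hcfc]
  rw [← Matrix.smul_mul, ← Matrix.mul_smul]
  congr 2
  ext i j
  by_cases h : i = j <;> simp [Matrix.diagonal, h]

lemma cfc_isHermitian {A : Matrix (Fin n) (Fin n) ℂ} (hA : A.IsHermitian) (f : ℝ → ℝ) :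
    (hA.cfc f).IsHermitian := by
  rw [hcfc]
  unfold Matrix.IsHermitian
  rw [Matrix.conjTranspose_mul, Matrix.conjTranspose_mul, Matrix.conjTranspose_conjTranspose,
    Matrix.diagonal_conjTranspose]
  have hst : star (Complex.ofReal ∘ f ∘ hA.eigenvalues) = Complex.ofReal ∘ f ∘ hA.eigenvalues := by
    ext i; simp [Pi.star_def]
  rw [hst, Matrix.mul_assoc]

lemma cfc_posSemidef {A : Matrix (Fin n) (Fin n) ℂ} (hA : A.IsHermitian) {f : ℝ → ℝ}
    (hf : ∀ i, 0 ≤ f (hA.eigenvalues i)) : (hA.cfc f).PosSemidef := by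
  rw [hcfc]
  refine Matrix.PosSemidef.mul_mul_conjTranspose_same ?_ (U hA)
  refine Matrix.PosSemidef.diagonal ?_
  intro i
  simpa using Complex.zero_le_real.mpr (hf i)



/-- row norm square -/
noncomputable def rns (Y : Matrix (Fin n) (Fin n) ℂ) (j : Fin n) : ℝ :=
  ∑ k, Complex.normSq (Y j k)

lemma rns_nonneg (Y : Matrix (Fin n) (Fin n) ℂ) (j : Fin n) : 0 ≤ rns Y j :=
  Finset.sum_nonneg fun k _ => Complex.normSq_nonneg _

lemma conj_mul_self (z : ℂ) : (starRingEnd ℂ) z * z = (Complex.normSq z : ℂ) := by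
  rw [mul_comm, Complex.mul_conj]

lemma trace_triple (Y : Matrix (Fin n) (Fin n) ℂ) (d : Fin n → ℝ) :
    Matrix.trace (Yᴴ * Matrix.diagonal (Complex.ofReal ∘ d) * Y)
      = ((∑ j, d j * rns Y j : ℝ) : ℂ) := by
  have hentry : ∀ k, (Yᴴ * Matrix.diagonal (Complex.ofReal ∘ d) * Y) k k
      = ∑ j, (starRingEnd ℂ) (Y j k) * (d j : ℂ) * Y j k := by
    intro k
    rw [Matrix.mul_apply]
    refine Finset.sum_congr rfl fun j _ => ?_
    rw [Matrix.mul_diagonal, Matrix.conjTranspose_apply]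
    rfl
  rw [Matrix.trace]
  unfold Matrix.diag
  calc (∑ k, (Yᴴ * Matrix.diagonal (Complex.ofReal ∘ d) * Y) k k)
      = ∑ k, ∑ j, (starRingEnd ℂ) (Y j k) * (d j : ℂ) * Y j k := by
        exact Finset.sum_congr rfl fun k _ => hentry k
    _ = ∑ j, ∑ k, (starRingEnd ℂ) (Y j k) * (d j : ℂ) * Y j k := Finset.sum_comm
    _ = ∑ j, ((d j : ℂ) * ∑ k, (Complex.normSq (Y j k) : ℂ)) := by
        refine Finset.sum_congr rfl fun j _ => ?_
        rw [Finset.mul_sum]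
        refine Finset.sum_congr rfl fun k _ => ?_
        rw [← conj_mul_self]; ring
    _ = ((∑ j, d j * rns Y j : ℝ) : ℂ) := by
        push_cast
        refine Finset.sum_congr rfl fun j _ => ?_
        rw [rns]
        push_cast
        ring

lemma trace_conj_cfc {A : Matrix (Fin n) (Fin n) ℂ} (hA : A.IsHermitian) (f : ℝ → ℝ)
    (X : Matrix (Fin n) (Fin n) ℂ) :
    Matrix.trace (Xᴴ * hA.cfc f * X)
      = ((∑ j, f (hA.eigenvalues j) * rns ((U hA)ᴴ * X) j : ℝ) : ℂ) := by
  have h : Xᴴ * hA.cfc f * X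
      = ((U hA)ᴴ * X)ᴴ * Matrix.diagonal (Complex.ofReal ∘ f ∘ hA.eigenvalues) * ((U hA)ᴴ * X) := by
    rw [hcfc, Matrix.conjTranspose_mul, Matrix.conjTranspose_conjTranspose]
    simp only [Matrix.mul_assoc]
  rw [h, trace_triple]
  norm_cast

lemma trace_cfc' {A : Matrix (Fin n) (Fin n) ℂ} (hA : A.IsHermitian) (f : ℝ → ℝ) :
    Matrix.trace (hA.cfc f) = ((∑ j, f (hA.eigenvalues j) : ℝ) : ℂ) := by
  rw [hcfc, Matrix.trace_mul_cycle, U_star_mul, Matrix.one_mul, Matrix.trace_diagonal]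
  push_cast
  rfl

lemma diag_eq_dot (M : Matrix (Fin n) (Fin n) ℂ) (j : Fin n) :
    M j j = dotProduct (star (Pi.single j 1)) (M *ᵥ (Pi.single j 1)) := by
  have h1 : star (Pi.single j (1:ℂ) : Fin n → ℂ) = (Pi.single j (1:ℂ) : Fin n → ℂ) := by
    ext i
    by_cases h : i = j <;> simp [Pi.single_apply, h]
  rw [h1, single_dotProduct, Matrix.mulVec_single, one_mul]
  simp

lemma psd_trace_nonneg {M : Matrix (Fin n) (Fin n) ℂ} (hM : ∀ x : Fin n → ℂ,
    0 ≤ dotProduct (star x) (M *ᵥ x)) : 0 ≤ Matrix.trace M := by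
  rw [Matrix.trace]
  refine Finset.sum_nonneg fun j _ => ?_
  rw [Matrix.diag, diag_eq_dot M j]
  exact hM _

lemma dot_star_self_eq (v : Fin n → ℂ) :
    dotProduct (star v) v = ((∑ k, Complex.normSq (v k) : ℝ) : ℂ) := by
  rw [dotProduct]
  push_cast
  refine Finset.sum_congr rfl fun k _ => ?_
  rw [Pi.star_apply, ← conj_mul_self]
  rfl

lemma cs_dot (u v : Fin n → ℂ) :
    ‖dotProduct (star u) v‖
      ≤ Real.sqrt (∑ k, Complex.normSq (u k)) * Real.sqrt (∑ k, Complex.normSq (v k)) := by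
  have h := norm_inner_le_norm (𝕜 := ℂ) ((WithLp.equiv 2 (Fin n → ℂ)).symm u)
    ((WithLp.equiv 2 (Fin n → ℂ)).symm v)
  have e : inner ℂ ((WithLp.equiv 2 (Fin n → ℂ)).symm u) ((WithLp.equiv 2 (Fin n → ℂ)).symm v)
      = dotProduct (star u) v := by rw [dotProduct_comm]; rfl
  rw [e] at h
  have hn : ∀ w : Fin n → ℂ, ‖(WithLp.equiv 2 (Fin n → ℂ)).symm w‖
      = Real.sqrt (∑ k, Complex.normSq (w k)) := by
    intro w
    rw [EuclideanSpace.norm_eq]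
    congr 1
    refine Finset.sum_congr rfl fun k _ => ?_
    rw [← Complex.sq_norm]
    rfl
  rwa [hn, hn] at h

noncomputable def nsq (v : Fin n → ℂ) : ℝ := ∑ k, Complex.normSq (v k)

lemma nsq_nonneg (v : Fin n → ℂ) : 0 ≤ nsq v := Finset.sum_nonneg fun k _ => Complex.normSq_nonneg _

lemma dot_star_self_eq' (v : Fin n → ℂ) :
    dotProduct (star v) v = ((nsq v : ℝ) : ℂ) := dot_star_self_eq v

lemma cs_dot' (u v : Fin n → ℂ) :
    ‖dotProduct (star u) v‖ ≤ Real.sqrt (nsq u) * Real.sqrt (nsq v) := cs_dot u v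

lemma dot_starmul (Z : Matrix (Fin n) (Fin n) ℂ) (x y : Fin n → ℂ) :
    dotProduct (star x) (Zᴴ *ᵥ y) = dotProduct (star (Z *ᵥ x)) y := by
  rw [Matrix.dotProduct_mulVec, Matrix.star_mulVec]

lemma dot_starmul' (Z : Matrix (Fin n) (Fin n) ℂ) (x y : Fin n → ℂ) :
    dotProduct (star x) (Z *ᵥ y) = dotProduct (star (Zᴴ *ᵥ x)) y := by
  have := dot_starmul Zᴴ x y
  rwa [Matrix.conjTranspose_conjTranspose] at this

lemma gram_dot (M : Matrix (Fin n) (Fin n) ℂ) (x : Fin n → ℂ) :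
    dotProduct (star x) ((Mᴴ * M) *ᵥ x) = ((nsq (M *ᵥ x) : ℝ) : ℂ) := by
  rw [← Matrix.mulVec_mulVec, dot_starmul, dot_star_self_eq']

section Expansive

variable {Z : Matrix (Fin n) (Fin n) ℂ}

lemma expansive_nsq_le (hZ : (Zᴴ * Z - 1).PosSemidef) (x : Fin n → ℂ) : nsq x ≤ nsq (Z *ᵥ x) := by
  have h := hZ.dotProduct_mulVec_nonneg x
  rw [Matrix.sub_mulVec, dotProduct_sub, Matrix.one_mulVec, ← Matrix.mulVec_mulVec,
    dot_starmul, dot_star_self_eq', dot_star_self_eq'] at h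
  have h2 : (0:ℂ) ≤ ((nsq (Z *ᵥ x) - nsq x : ℝ) : ℂ) := by push_cast; exact h
  have := Complex.zero_le_real.mp h2
  linarith

lemma expansive_isUnit_det (hZ : (Zᴴ * Z - 1).PosSemidef) : IsUnit Z.det := by
  have hpd : (Zᴴ * Z).PosDef := by
    have h1 : (Zᴴ * Z - 1) + 1 = Zᴴ * Z := sub_add_cancel _ _
    have := Matrix.PosDef.posSemidef_add hZ (Matrix.PosDef.one (n := Fin n) (R := ℂ))
    rwa [h1] at this
  by_contra hdet
  have h0 : Z.det = 0 := by
    simpa [isUnit_iff_ne_zero] using hdet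
  have h1 : (Zᴴ * Z).det = 0 := by
    rw [Matrix.det_mul, h0, mul_zero]
  have h2 := hpd.det_pos
  rw [h1] at h2
  exact lt_irrefl _ h2

lemma expansive_conj_nsq_le (hZ : (Zᴴ * Z - 1).PosSemidef) (u : Fin n → ℂ) : nsq u ≤ nsq (Zᴴ *ᵥ u) := by
  have hdet : IsUnit Z.det := expansive_isUnit_det hZ
  set y := Z⁻¹ *ᵥ u with hy
  have hZy : Z *ᵥ y = u := by
    rw [hy, Matrix.mulVec_mulVec, Matrix.mul_nonsing_inv Z hdet, Matrix.one_mulVec]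
  have hyu : nsq y ≤ nsq u := by
    have := expansive_nsq_le hZ y
    rwa [hZy] at this
  have key : ((nsq u : ℝ) : ℂ) = dotProduct (star (Zᴴ *ᵥ u)) y := by
    rw [← dot_starmul', ← hZy]
    rw [hZy, dot_star_self_eq']
  have hcs : nsq u ≤ Real.sqrt (nsq (Zᴴ *ᵥ u)) * Real.sqrt (nsq y) := by
    have h1 : ‖((nsq u : ℝ) : ℂ)‖ = nsq u := by
      rw [Complex.norm_real, Real.norm_eq_abs, abs_of_nonneg (nsq_nonneg u)]
    calc nsq u = ‖((nsq u : ℝ) : ℂ)‖ := h1.symm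
      _ = ‖dotProduct (star (Zᴴ *ᵥ u)) y‖ := by rw [key]
      _ ≤ Real.sqrt (nsq (Zᴴ *ᵥ u)) * Real.sqrt (nsq y) := cs_dot' _ _
  -- conclude
  have hsy : Real.sqrt (nsq y) ≤ Real.sqrt (nsq u) := Real.sqrt_le_sqrt hyu
  have h2 : nsq u ≤ Real.sqrt (nsq (Zᴴ *ᵥ u)) * Real.sqrt (nsq u) :=
    le_trans hcs (by
      have := mul_le_mul_of_nonneg_left hsy (Real.sqrt_nonneg (nsq (Zᴴ *ᵥ u)))
      linarith)
  rcases eq_or_lt_of_le (nsq_nonneg u) with h0 | h0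
  · rw [← h0]; exact nsq_nonneg _
  · have hsqpos : 0 < Real.sqrt (nsq u) := Real.sqrt_pos.mpr h0
    have h3 : Real.sqrt (nsq u) * Real.sqrt (nsq u) ≤ Real.sqrt (nsq (Zᴴ *ᵥ u)) * Real.sqrt (nsq u) := by
      rwa [Real.mul_self_sqrt (le_of_lt h0)]
    have h4 : Real.sqrt (nsq u) ≤ Real.sqrt (nsq (Zᴴ *ᵥ u)) :=
      le_of_mul_le_mul_right h3 hsqpos
    calc nsq u = Real.sqrt (nsq u) * Real.sqrt (nsq u) := (Real.mul_self_sqrt (le_of_lt h0)).symm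
      _ ≤ Real.sqrt (nsq (Zᴴ *ᵥ u)) * Real.sqrt (nsq (Zᴴ *ᵥ u)) :=
          mul_le_mul h4 h4 (Real.sqrt_nonneg _) (Real.sqrt_nonneg _)
      _ = nsq (Zᴴ *ᵥ u) := Real.mul_self_sqrt (nsq_nonneg _)

lemma key_claim (hZ : (Zᴴ * Z - 1).PosSemidef) (R Q Δ C : Matrix (Fin n) (Fin n) ℂ)
    (hRH : Rᴴ = R) (hRR : R * R = R) (hQH : Qᴴ = Q) (hQQ : Q * Q = Q)
    (hQNC : Q = (Zᴴ * Δ * Z) * C) (hRΔ : R * Δ = Δ) (x : Fin n → ℂ) :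
    0 ≤ dotProduct (star x) ((Q * (Zᴴ * R * Z) * Q - Q) *ᵥ x) := by
  set v := Q *ᵥ x with hv
  -- rewrite the two quadratic forms
  have hQdot : dotProduct (star x) (Q *ᵥ x) = ((nsq v : ℝ) : ℂ) := by
    conv_lhs => rw [← hQQ, ← Matrix.mulVec_mulVec, ← hQH, dot_starmul, hQH, dot_star_self_eq']
  have hfactor : Q * (Zᴴ * R * Z) * Q = (R * Z * Q)ᴴ * (R * Z * Q) := by
    rw [Matrix.conjTranspose_mul, Matrix.conjTranspose_mul, hQH, hRH]
    simp only [← Matrix.mul_assoc]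
    rw [Matrix.mul_assoc (Q * Zᴴ) R R, hRR]
  have hRdot : dotProduct (star x) ((Q * (Zᴴ * R * Z) * Q) *ᵥ x)
      = ((nsq (R *ᵥ (Z *ᵥ v)) : ℝ) : ℂ) := by
    rw [hfactor, gram_dot]
    congr 2
    rw [← Matrix.mulVec_mulVec, ← Matrix.mulVec_mulVec]
  -- the vector u
  set u := Δ *ᵥ (Z *ᵥ (C *ᵥ x)) with hu
  have hvu : v = Zᴴ *ᵥ u := by
    rw [hv, hQNC]
    simp only [← Matrix.mulVec_mulVec]
    rfl
  have hRu : R *ᵥ u = u := by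
    rw [hu, Matrix.mulVec_mulVec, hRΔ]
  -- key real inequality : nsq v ≤ nsq (R (Z v))
  have hkey : nsq v ≤ nsq (R *ᵥ (Z *ᵥ v)) := by
    set a := nsq v with ha
    set b := nsq (R *ᵥ (Z *ᵥ v)) with hb
    have hab : ((a : ℝ) : ℂ) = dotProduct (star u) (R *ᵥ (Z *ᵥ v)) := by
      calc ((a : ℝ) : ℂ) = dotProduct (star v) v := (dot_star_self_eq' v).symm
        _ = dotProduct (star (Zᴴ *ᵥ u)) v := by rw [← hvu]
        _ = dotProduct (star u) (Z *ᵥ v) := by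
            rw [← dot_starmul' Z u v]
        _ = dotProduct (star (R *ᵥ u)) (Z *ᵥ v) := by rw [hRu]
        _ = dotProduct (star u) (Rᴴ *ᵥ (Z *ᵥ v)) := by
            rw [dot_starmul' Rᴴ u (Z *ᵥ v), Matrix.conjTranspose_conjTranspose]
        _ = dotProduct (star u) (R *ᵥ (Z *ᵥ v)) := by rw [hRH]
    have hua : nsq u ≤ a := by
      have := expansive_conj_nsq_le hZ u
      rwa [← hvu] at this
    have hcs : a ≤ Real.sqrt (nsq u) * Real.sqrt b := by
      have h1 : ‖((a : ℝ) : ℂ)‖ = a := by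
        rw [Complex.norm_real, Real.norm_eq_abs, abs_of_nonneg (by rw [ha]; exact nsq_nonneg v)]
      calc a = ‖((a : ℝ) : ℂ)‖ := h1.symm
        _ = ‖dotProduct (star u) (R *ᵥ (Z *ᵥ v))‖ := by rw [hab]
        _ ≤ Real.sqrt (nsq u) * Real.sqrt b := cs_dot' _ _
    have h2 : a ≤ Real.sqrt a * Real.sqrt b := by
      have := mul_le_mul_of_nonneg_right (Real.sqrt_le_sqrt hua) (Real.sqrt_nonneg b)
      linarith
    have ha0 : 0 ≤ a := by rw [ha]; exact nsq_nonneg v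
    have hb0 : 0 ≤ b := by rw [hb]; exact nsq_nonneg _
    rcases eq_or_lt_of_le ha0 with h0 | h0
    · linarith
    · have hsq : 0 < Real.sqrt a := Real.sqrt_pos.mpr h0
      have h3 : Real.sqrt a * Real.sqrt a ≤ Real.sqrt a * Real.sqrt b := by
        rwa [Real.mul_self_sqrt (le_of_lt h0)]
      have h4 : Real.sqrt a ≤ Real.sqrt b := le_of_mul_le_mul_left h3 hsq
      calc a = Real.sqrt a * Real.sqrt a := (Real.mul_self_sqrt (le_of_lt h0)).symm
        _ ≤ Real.sqrt b * Real.sqrt b := mul_le_mul h4 h4 (Real.sqrt_nonneg _) (Real.sqrt_nonneg _)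
        _ = b := Real.mul_self_sqrt hb0
  rw [Matrix.sub_mulVec, dotProduct_sub, hQdot, hRdot]
  have h9 : (0:ℂ) ≤ ((nsq (R *ᵥ (Z *ᵥ v)) - nsq v : ℝ) : ℂ) := Complex.zero_le_real.mpr (by linarith)
  rw [Complex.ofReal_sub] at h9
  exact h9

lemma gram_diag (M : Matrix (Fin n) (Fin n) ℂ) (k : Fin n) :
    (Mᴴ * M) k k = ((∑ i, Complex.normSq (M i k) : ℝ) : ℂ) := by
  rw [Matrix.mul_apply]
  push_cast
  refine Finset.sum_congr rfl fun i _ => ?_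
  rw [Matrix.conjTranspose_apply, ← conj_mul_self]
  rfl

lemma trace_le_core {B N S W Q : Matrix (Fin n) (Fin n) ℂ} (t : ℝ) (ht : 0 ≤ t)
    (hQH : Qᴴ = Q) (hQQ : Q * Q = Q) (hQN : Q * N = N) (hSpsd : S.PosSemidef)
    (key : ∀ x : Fin n → ℂ, 0 ≤ dotProduct (star x) ((Q * W * Q - Q) *ᵥ x))
    (hBS : B - (t:ℂ) • 1 = S + N + (t:ℂ) • (W - 1)) :
    Matrix.trace N ≤ Matrix.trace ((B - (t:ℂ) • 1) * Q) := by
  rw [hBS, Matrix.add_mul, Matrix.add_mul, Matrix.trace_add, Matrix.trace_add]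
  have e2 : Matrix.trace (N * Q) = Matrix.trace N := by
    rw [Matrix.trace_mul_comm, hQN]
  have e3 : 0 ≤ Matrix.trace (S * Q) := by
    have e : Matrix.trace (S * Q) = Matrix.trace (Qᴴ * S * Q) := by
      calc Matrix.trace (S * Q) = Matrix.trace (S * (Q * Q)) := by rw [hQQ]
        _ = Matrix.trace (S * Q * Q) := by rw [Matrix.mul_assoc S Q Q]
        _ = Matrix.trace (Q * (S * Q)) := Matrix.trace_mul_comm _ _
        _ = Matrix.trace (Qᴴ * S * Q) := by rw [hQH, Matrix.mul_assoc Q S Q]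
    rw [e]
    exact psd_trace_nonneg (hSpsd.conjTranspose_mul_mul_same Q).dotProduct_mulVec_nonneg
  have e4 : 0 ≤ Matrix.trace ((t:ℂ) • (W - 1) * Q) := by
    rw [Matrix.smul_mul, Matrix.trace_smul, smul_eq_mul]
    refine mul_nonneg (Complex.zero_le_real.mpr ht) ?_
    have e5 : Matrix.trace ((W - 1) * Q) = Matrix.trace (Q * W * Q - Q) := by
      rw [Matrix.sub_mul, Matrix.one_mul, Matrix.trace_sub, Matrix.trace_sub]
      congr 1
      calc Matrix.trace (W * Q) = Matrix.trace (W * (Q * Q)) := by rw [hQQ]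
        _ = Matrix.trace (W * Q * Q) := by rw [Matrix.mul_assoc W Q Q]
        _ = Matrix.trace (Q * (W * Q)) := Matrix.trace_mul_comm _ _
        _ = Matrix.trace (Q * W * Q) := by rw [Matrix.mul_assoc Q W Q]
    rw [e5]
    exact psd_trace_nonneg key
  calc Matrix.trace N = 0 + Matrix.trace N + 0 := by rw [zero_add, add_zero]
    _ ≤ Matrix.trace (S * Q) + Matrix.trace (N * Q) + Matrix.trace ((t:ℂ) • (W - 1) * Q) := by
        rw [e2]
        exact add_le_add (add_le_add e3 le_rfl) e4

lemma conj_decomp {A Δ R X Z : Matrix (Fin n) (Fin n) ℂ} (t : ℝ)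
    (hX : X = A - Δ - (t:ℂ) • R) :
    Zᴴ * A * Z - (t:ℂ) • 1
      = (Zᴴ * X * Z) + (Zᴴ * Δ * Z) + (t:ℂ) • (Zᴴ * R * Z - 1) := by
  subst hX
  rw [Matrix.mul_sub, Matrix.mul_sub, Matrix.sub_mul, Matrix.sub_mul,
    Matrix.mul_smul, Matrix.smul_mul, smul_sub]
  abel

lemma stepE {B Q : Matrix (Fin n) (Fin n) ℂ} (hB : B.PosSemidef)
    (hQH : Qᴴ = Q) (hQQ : Q * Q = Q) (t : ℝ) :
    Matrix.trace ((B - (t:ℂ) • 1) * Q) ≤ Matrix.trace (hB.1.cfc (fun x => max (x - t) 0)) := by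
  have hBt : B - (t:ℂ) • 1 = hB.1.cfc (fun x => x - t) := by
    rw [cfc_sub' hB.1 (fun x => x) (fun _ => t), cfc_id']
    have e : (fun _ : ℝ => t) = (fun x : ℝ => t * 1) := by funext _; ring
    rw [e, cfc_smul' hB.1 t (fun _ => 1), cfc_one']
  set V : Matrix (Fin n) (Fin n) ℂ := U hB.1 with hV
  have hVV : Vᴴ * V = 1 := U_star_mul hB.1
  -- the diagonal weights
  have hQform : Vᴴ * Q * V = (Q * V)ᴴ * (Q * V) := by
    rw [Matrix.conjTranspose_mul, hQH]
    calc Vᴴ * Q * V = Vᴴ * (Q * Q) * V := by rw [hQQ]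
      _ = Vᴴ * Q * (Q * V) := by simp only [Matrix.mul_assoc]
  have h1Q : (1 - Q)ᴴ * (1 - Q) = 1 - Q := by
    rw [Matrix.conjTranspose_sub, Matrix.conjTranspose_one, hQH, Matrix.mul_sub,
      Matrix.sub_mul, Matrix.sub_mul, hQQ]
    simp only [Matrix.one_mul, Matrix.mul_one]
    abel
  have hQ1form : Vᴴ * (1 - Q) * V = ((1 - Q) * V)ᴴ * ((1 - Q) * V) := by
    conv_lhs => rw [← h1Q]
    simp only [Matrix.mul_assoc]
    rw [Matrix.conjTranspose_mul]
    simp only [Matrix.mul_assoc]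
  set w : Fin n → ℝ := fun k => ∑ i, Complex.normSq ((Q * V) i k) with hw
  set w' : Fin n → ℝ := fun k => ∑ i, Complex.normSq (((1 - Q) * V) i k) with hw'
  have hwk : ∀ k, (Vᴴ * Q * V) k k = ((w k : ℝ) : ℂ) := by
    intro k
    rw [hQform, gram_diag]
  have hwk' : ∀ k, (Vᴴ * (1 - Q) * V) k k = ((w' k : ℝ) : ℂ) := by
    intro k
    rw [hQ1form, gram_diag]
  have hw1 : ∀ k, w k + w' k = 1 := by
    intro k
    have e1 : Vᴴ * Q * V + Vᴴ * (1 - Q) * V = 1 := by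
      calc Vᴴ * Q * V + Vᴴ * (1 - Q) * V = Vᴴ * (Q + (1 - Q)) * V := by
            rw [Matrix.mul_add, Matrix.add_mul]
        _ = Vᴴ * 1 * V := by rw [add_sub_cancel]
        _ = 1 := by rw [Matrix.mul_one, hVV]
    have e2 : (Vᴴ * Q * V) k k + (Vᴴ * (1 - Q) * V) k k = 1 := by
      rw [← Matrix.add_apply, e1, Matrix.one_apply_eq]
    rw [hwk k, hwk' k] at e2
    exact_mod_cast e2
  have hw0 : ∀ k, 0 ≤ w k := fun k => Finset.sum_nonneg fun i _ => Complex.normSq_nonneg _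
  have hw0' : ∀ k, 0 ≤ w' k := fun k => Finset.sum_nonneg fun i _ => Complex.normSq_nonneg _
  have hwle : ∀ k, w k ≤ 1 := fun k => by
    have := hw1 k
    have := hw0' k
    linarith
  -- trace formula for the LHS
  have tr1 : Matrix.trace ((B - (t:ℂ) • 1) * Q)
      = ∑ k, ((hB.1.eigenvalues k - t : ℝ) : ℂ) * ((w k : ℝ) : ℂ) := by
    rw [hBt, hcfc]
    have e1 : U hB.1 * Matrix.diagonal (Complex.ofReal ∘ (fun x => x - t) ∘ hB.1.eigenvalues)
        * (U hB.1)ᴴ * Q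
        = V * (Matrix.diagonal (Complex.ofReal ∘ (fun x => x - t) ∘ hB.1.eigenvalues)
            * (Vᴴ * Q)) := by
      rw [← hV]
      simp only [Matrix.mul_assoc]
    rw [e1, Matrix.trace_mul_comm]
    have e2 : Matrix.diagonal (Complex.ofReal ∘ (fun x => x - t) ∘ hB.1.eigenvalues)
        * (Vᴴ * Q) * V
        = Matrix.diagonal (Complex.ofReal ∘ (fun x => x - t) ∘ hB.1.eigenvalues)
            * (Vᴴ * Q * V) := by
      simp only [Matrix.mul_assoc]
    rw [e2, Matrix.trace]
    refine Finset.sum_congr rfl fun k _ => ?_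
    rw [Matrix.diag, Matrix.diagonal_mul, hwk k]
    rfl
  have tr2 : Matrix.trace (hB.1.cfc (fun x => max (x - t) 0))
      = ((∑ k, max (hB.1.eigenvalues k - t) 0 : ℝ) : ℂ) := trace_cfc' hB.1 _
  rw [tr1, tr2]
  have hterm : ∀ k : Fin n, ((hB.1.eigenvalues k - t : ℝ) : ℂ) * ((w k : ℝ) : ℂ)
      = (((hB.1.eigenvalues k - t) * w k : ℝ) : ℂ) := by
    intro k
    push_cast
    ring
  calc (∑ k, ((hB.1.eigenvalues k - t : ℝ) : ℂ) * ((w k : ℝ) : ℂ))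
      = ((∑ k, (hB.1.eigenvalues k - t) * w k : ℝ) : ℂ) := by
        rw [Complex.ofReal_sum]
        exact Finset.sum_congr rfl fun k _ => hterm k
    _ ≤ ((∑ k, max (hB.1.eigenvalues k - t) 0 : ℝ) : ℂ) := by
        rw [Complex.real_le_real]
        refine Finset.sum_le_sum fun k _ => ?_
        rcases le_or_gt (hB.1.eigenvalues k - t) 0 with hc | hc
        · calc (hB.1.eigenvalues k - t) * w k ≤ 0 :=
                mul_nonpos_of_nonpos_of_nonneg hc (hw0 k)
            _ ≤ max (hB.1.eigenvalues k - t) 0 := le_max_right _ _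
        · calc (hB.1.eigenvalues k - t) * w k ≤ (hB.1.eigenvalues k - t) * 1 :=
                mul_le_mul_of_nonneg_left (hwle k) (le_of_lt hc)
            _ = hB.1.eigenvalues k - t := mul_one _
            _ ≤ max (hB.1.eigenvalues k - t) 0 := le_max_left _ _

set_option maxHeartbeats 1000000 in
theorem hinge_trace {A : Matrix (Fin n) (Fin n) ℂ} (hA : A.PosSemidef)
    (hZ : (Zᴴ * Z - 1).PosSemidef) (hB : (Zᴴ * A * Z).PosSemidef)
    (t : ℝ) (ht : 0 ≤ t) :
    Matrix.trace (Zᴴ * hA.1.cfc (fun x => max (x - t) 0) * Z)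
      ≤ Matrix.trace (hB.1.cfc (fun x => max (x - t) 0)) := by
  classical
  set h : ℝ → ℝ := fun x => max (x - t) 0 with hh
  set r : ℝ → ℝ := fun x => if t < x then 1 else 0 with hr
  set Δ : Matrix (Fin n) (Fin n) ℂ := hA.1.cfc h with hΔ
  set R : Matrix (Fin n) (Fin n) ℂ := hA.1.cfc r with hR
  have hΔpsd : Δ.PosSemidef := cfc_posSemidef hA.1 (fun i => le_max_right _ _)
  have hNpsd : (Zᴴ * Δ * Z).PosSemidef := hΔpsd.conjTranspose_mul_mul_same Z
  set N : Matrix (Fin n) (Fin n) ℂ := Zᴴ * Δ * Z with hN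
  have hNH : N.IsHermitian := hNpsd.1
  set q : ℝ → ℝ := fun x => if x = 0 then 0 else 1 with hq
  set g : ℝ → ℝ := fun x => if x = 0 then 0 else x⁻¹ with hg
  set Q : Matrix (Fin n) (Fin n) ℂ := hNH.cfc q with hQ
  have hNid : hNH.cfc (fun x => x) = N := cfc_id' hNH
  have hQH : Qᴴ = Q := cfc_isHermitian hNH q
  have hQQ : Q * Q = Q := by
    rw [hQ, cfc_mul_cfc]
    refine congrArg _ (funext fun x => ?_)
    by_cases hx : x = 0 <;> simp [hq, hx]
  have hQN : Q * N = N := by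
    calc Q * N = hNH.cfc q * hNH.cfc (fun x => x) := by rw [hNid]
      _ = hNH.cfc (fun x => q x * x) := cfc_mul_cfc hNH q _
      _ = hNH.cfc (fun x => x) := by
          refine congrArg _ (funext fun x => ?_)
          by_cases hx : x = 0 <;> simp [hq, hx]
      _ = N := hNid
  have hQNC : Q = N * hNH.cfc g := by
    calc Q = hNH.cfc (fun x => x * g x) := by
          rw [hQ]
          refine congrArg _ (funext fun x => ?_)
          by_cases hx : x = 0 <;> simp [hq, hg, hx]
      _ = hNH.cfc (fun x => x) * hNH.cfc g := (cfc_mul_cfc hNH _ _).symm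
      _ = N * hNH.cfc g := by rw [hNid]
  have hRH : Rᴴ = R := cfc_isHermitian hA.1 r
  have hRR : R * R = R := by
    rw [hR, cfc_mul_cfc]
    refine congrArg _ (funext fun x => ?_)
    by_cases hx : t < x <;> simp [hr, hx]
  have hRΔ : R * Δ = Δ := by
    rw [hR, hΔ, cfc_mul_cfc]
    refine congrArg _ (funext fun x => ?_)
    by_cases hx : t < x
    · simp [hr, hh, hx]
    · have hmax : max (x - t) 0 = 0 := max_eq_right (by push_neg at hx; linarith)
      simp [hr, hh, hx, hmax]
  have key := key_claim hZ R Q Δ (hNH.cfc g) hRH hRR hQH hQQ hQNC hRΔ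
  set φ : ℝ → ℝ := fun x => x - h x - t * r x with hφdef
  have hφ : hA.1.cfc φ = A - Δ - (t:ℂ) • R := by
    have e1 : hA.1.cfc φ = hA.1.cfc (fun x => (x - h x) - (t * r x)) := rfl
    rw [e1, cfc_sub' hA.1 (fun x => x - h x) (fun x => t * r x),
      cfc_sub' hA.1 (fun x => x) h, cfc_id', cfc_smul']
  have hφpsd : (hA.1.cfc φ).PosSemidef := by
    refine cfc_posSemidef hA.1 (fun i => ?_)
    have hev : 0 ≤ hA.1.eigenvalues i := hA.eigenvalues_nonneg i
    set x := hA.1.eigenvalues i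
    by_cases hx : t < x
    · have hmax : max (x - t) 0 = x - t := max_eq_left (by linarith)
      simp only [hφdef, hh, hr, hmax, if_pos hx]
      ring_nf
      linarith
    · have hmax : max (x - t) 0 = 0 := max_eq_right (by push_neg at hx; linarith)
      simp only [hφdef, hh, hr, hmax, if_neg hx]
      linarith
  have hSpsd : (Zᴴ * hA.1.cfc φ * Z).PosSemidef := hφpsd.conjTranspose_mul_mul_same Z
  have hBS := conj_decomp (Z := Z) t hφ
  have step1 := trace_le_core (W := Zᴴ * R * Z) t ht hQH hQQ hQN hSpsd key hBS
  have step2 := stepE hB hQH hQQ t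
  exact le_trans step1 step2

end Expansive


lemma min_eq_sub_max (a τ : ℝ) : min a τ = a - max (a - τ) 0 := by
  rcases le_total a τ with hc | hc
  · rw [min_eq_left hc, max_eq_right (by linarith), sub_zero]
  · rw [min_eq_right hc, max_eq_left (by linarith)]
    ring

lemma scalar_key {m : ℕ} (f : ℝ → ℝ) (hf : ConvexOn ℝ (Set.Ici (0:ℝ)) f) (hf0 : f 0 ≤ 0)
    (lam mu w : Fin m → ℝ)
    (hlam : ∀ i, 0 ≤ lam i) (hmu : ∀ j, 0 ≤ mu j) (hw : ∀ j, 0 ≤ w j)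
    (hH : ∀ t : ℝ, 0 ≤ t → ∑ j, w j * max (mu j - t) 0 ≤ ∑ i, max (lam i - t) 0)
    (htr : ∑ i, lam i = ∑ j, w j * mu j)
    (hn : (m : ℝ) ≤ ∑ j, w j) :
    ∑ j, w j * f (mu j) ≤ ∑ i, f (lam i) := by
  classical
  set P : Finset ℝ := insert 0 (Finset.image lam Finset.univ ∪ Finset.image mu Finset.univ)
    with hP
  have hP0 : (0:ℝ) ∈ P := Finset.mem_insert_self _ _
  have hPlam : ∀ i, lam i ∈ P := fun i => Finset.mem_insert_of_mem
    (Finset.mem_union_left _ (Finset.mem_image_of_mem _ (Finset.mem_univ i)))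
  have hPmu : ∀ j, mu j ∈ P := fun j => Finset.mem_insert_of_mem
    (Finset.mem_union_right _ (Finset.mem_image_of_mem _ (Finset.mem_univ j)))
  have hPnonneg : ∀ v ∈ P, 0 ≤ v := by
    intro v hv
    rcases Finset.mem_insert.mp hv with rfl | hv'
    · exact le_refl 0
    rcases Finset.mem_union.mp hv' with hv2 | hv2
    · obtain ⟨i, _, rfl⟩ := Finset.mem_image.mp hv2
      exact hlam i
    · obtain ⟨j, _, rfl⟩ := Finset.mem_image.mp hv2
      exact hmu j
  set c : ℕ := P.card with hc
  have hcpos : 0 < c := Finset.card_pos.mpr ⟨0, hP0⟩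
  set e := P.orderIsoOfFin (rfl : P.card = c) with he
  set x : ℕ → ℝ := fun k => (e ⟨min k (c-1), by omega⟩ : ℝ) with hx
  have hxP : ∀ k, x k ∈ P := fun k => (e _).2
  have hxmono : Monotone x := by
    intro a b hab
    have h1 : (⟨min a (c-1), by omega⟩ : Fin c) ≤ ⟨min b (c-1), by omega⟩ := by
      simp only [Fin.mk_le_mk]
      omega
    exact Subtype.coe_le_coe.mpr (e.monotone h1)
  have hxstrict : ∀ k, k + 1 ≤ c - 1 → x k < x (k+1) := by
    intro k hk
    have h1 : (⟨min k (c-1), by omega⟩ : Fin c) < ⟨min (k+1) (c-1), by omega⟩ := by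
      simp only [Fin.mk_lt_mk]
      omega
    exact Subtype.coe_lt_coe.mpr (e.strictMono h1)
  have hmem : ∀ v ∈ P, ∃ p, p ≤ c - 1 ∧ x p = v := by
    intro v hv
    obtain ⟨i, hi⟩ := e.surjective ⟨v, hv⟩
    refine ⟨i.val, by omega, ?_⟩
    have h1 : min i.val (c-1) = i.val := by omega
    rw [hx]
    simp only [h1]
    rw [show (⟨i.val, by omega⟩ : Fin c) = i from Fin.eta i i.isLt, hi]
  have hx0 : x 0 = 0 := by
    obtain ⟨p, _, hp⟩ := hmem 0 hP0
    have h1 : x 0 ≤ x p := hxmono (Nat.zero_le p)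
    rw [hp] at h1
    exact le_antisymm h1 (hPnonneg _ (hxP 0))
  have hxtop : ∀ v ∈ P, v ≤ x (c-1) := by
    intro v hv
    obtain ⟨p, hpc, rfl⟩ := hmem v hv
    exact hxmono hpc
  have hxnonneg : ∀ k, 0 ≤ x k := fun k => hPnonneg _ (hxP k)
  -- slopes
  set d : ℕ → ℝ := fun k => (f (x (k+1)) - f (x k)) / (x (k+1) - x k) with hd
  have hdmono : ∀ k, k + 2 ≤ c - 1 → d k ≤ d (k+1) := by
    intro k hk
    have h1 : x k < x (k+1) := hxstrict k (by omega)
    have h2 : x (k+1) < x (k+2) := hxstrict (k+1) (by omega)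
    exact hf.slope_mono_adjacent (hxnonneg k) (hxnonneg (k+2)) h1 h2
  -- node identity
  have hnode : ∀ v ∈ P, f v = f 0
      + ∑ k ∈ Finset.range (c-1), d k * (min v (x (k+1)) - min v (x k)) := by
    intro v hv
    obtain ⟨p, hpc, rfl⟩ := hmem v hv
    have hsplit : ∑ k ∈ Finset.range (c-1), d k * (min (x p) (x (k+1)) - min (x p) (x k))
        = ∑ k ∈ Finset.range p, d k * (min (x p) (x (k+1)) - min (x p) (x k))
          + ∑ k ∈ Finset.Ico p (c-1), d k * (min (x p) (x (k+1)) - min (x p) (x k)) := by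
      rw [Finset.range_eq_Ico, ← Finset.sum_Ico_consecutive _ (Nat.zero_le p) hpc, Finset.range_eq_Ico]
    have hzero : ∑ k ∈ Finset.Ico p (c-1), d k * (min (x p) (x (k+1)) - min (x p) (x k)) = 0 := by
      refine Finset.sum_eq_zero fun k hk => ?_
      obtain ⟨hk1, _⟩ := Finset.mem_Ico.mp hk
      have e1 : min (x p) (x (k+1)) = x p := min_eq_left (hxmono (by omega))
      have e2 : min (x p) (x k) = x p := min_eq_left (hxmono hk1)
      rw [e1, e2, sub_self, mul_zero]
    have hmain : ∑ k ∈ Finset.range p, d k * (min (x p) (x (k+1)) - min (x p) (x k))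
        = f (x p) - f (x 0) := by
      rw [← Finset.sum_range_sub (fun k => f (x k)) p]
      refine Finset.sum_congr rfl fun k hk => ?_
      have hkp : k < p := Finset.mem_range.mp hk
      have e1 : min (x p) (x (k+1)) = x (k+1) := min_eq_right (hxmono (by omega))
      have e2 : min (x p) (x k) = x k := min_eq_right (hxmono (by omega))
      have hne : x (k+1) - x k ≠ 0 := by
        have := hxstrict k (by omega)
        linarith
      rw [e1, e2, hd]
      field_simp
    rw [hsplit, hzero, hmain, hx0]
    ring
  -- partial-sum functions
  set Sl : ℝ → ℝ := fun τ => ∑ i, min (lam i) τ with hSl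
  set Sm : ℝ → ℝ := fun τ => ∑ j, w j * min (mu j) τ with hSm
  set G : ℕ → ℝ := fun k => Sl (x k) - Sm (x k) with hG
  have hGle : ∀ k, G k ≤ 0 := by
    intro k
    have ht0 : 0 ≤ x k := hxnonneg k
    have h1 : Sl (x k) = (∑ i, lam i) - ∑ i, max (lam i - x k) 0 := by
      rw [hSl, ← Finset.sum_sub_distrib]
      exact Finset.sum_congr rfl fun i _ => min_eq_sub_max _ _
    have h2 : Sm (x k) = (∑ j, w j * mu j) - ∑ j, w j * max (mu j - x k) 0 := by
      rw [hSm, ← Finset.sum_sub_distrib]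
      refine Finset.sum_congr rfl fun j _ => ?_
      rw [min_eq_sub_max]
      ring
    show Sl (x k) - Sm (x k) ≤ 0
    rw [h1, h2, htr]
    have := hH (x k) ht0
    linarith
  have hGtop : G (c-1) = 0 := by
    have h1 : Sl (x (c-1)) = ∑ i, lam i :=
      Finset.sum_congr rfl fun i _ => min_eq_left (hxtop _ (hPlam i))
    have h2 : Sm (x (c-1)) = ∑ j, w j * mu j :=
      Finset.sum_congr rfl fun j _ => by rw [min_eq_left (hxtop _ (hPmu j))]
    show Sl (x (c-1)) - Sm (x (c-1)) = 0
    rw [h1, h2, htr, sub_self]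
  have hG0 : G 0 = 0 := by
    have h1 : Sl (x 0) = 0 := by
      rw [hx0, hSl]
      exact Finset.sum_eq_zero fun i _ => min_eq_right (hlam i)
    have h2 : Sm (x 0) = 0 := by
      rw [hx0, hSm]
      refine Finset.sum_eq_zero fun j _ => ?_
      rw [min_eq_right (hmu j), mul_zero]
    show Sl (x 0) - Sm (x 0) = 0
    rw [h1, h2, sub_self]
  -- main expansion
  have hexp1 : ∑ i, f (lam i)
      = m * f 0 + ∑ k ∈ Finset.range (c-1), d k * (Sl (x (k+1)) - Sl (x k)) := by
    calc ∑ i, f (lam i)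
        = ∑ i, (f 0 + ∑ k ∈ Finset.range (c-1),
            d k * (min (lam i) (x (k+1)) - min (lam i) (x k))) :=
          Finset.sum_congr rfl fun i _ => hnode _ (hPlam i)
      _ = m * f 0 + ∑ i, ∑ k ∈ Finset.range (c-1),
            d k * (min (lam i) (x (k+1)) - min (lam i) (x k)) := by
          rw [Finset.sum_add_distrib, Finset.sum_const, Finset.card_univ, Fintype.card_fin,
            nsmul_eq_mul]
      _ = m * f 0 + ∑ k ∈ Finset.range (c-1), d k * (Sl (x (k+1)) - Sl (x k)) := by
          congr 1
          rw [Finset.sum_comm]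
          refine Finset.sum_congr rfl fun k _ => ?_
          have hsl : Sl (x (k+1)) - Sl (x k)
              = ∑ i, (min (lam i) (x (k+1)) - min (lam i) (x k)) := by
            simp only [hSl]
            rw [← Finset.sum_sub_distrib]
          rw [hsl, Finset.mul_sum]
  have hexp2 : ∑ j, w j * f (mu j)
      = (∑ j, w j) * f 0 + ∑ k ∈ Finset.range (c-1), d k * (Sm (x (k+1)) - Sm (x k)) := by
    calc ∑ j, w j * f (mu j)
        = ∑ j, w j * (f 0 + ∑ k ∈ Finset.range (c-1),
            d k * (min (mu j) (x (k+1)) - min (mu j) (x k))) :=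
          Finset.sum_congr rfl fun j _ => by rw [hnode _ (hPmu j)]
      _ = (∑ j, w j) * f 0 + ∑ j, ∑ k ∈ Finset.range (c-1),
            w j * (d k * (min (mu j) (x (k+1)) - min (mu j) (x k))) := by
          simp only [mul_add]
          rw [Finset.sum_add_distrib, ← Finset.sum_mul]
          simp only [Finset.mul_sum]
      _ = (∑ j, w j) * f 0 + ∑ k ∈ Finset.range (c-1), d k * (Sm (x (k+1)) - Sm (x k)) := by
          congr 1
          rw [Finset.sum_comm]
          refine Finset.sum_congr rfl fun k _ => ?_
          have hsm : Sm (x (k+1)) - Sm (x k)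
              = ∑ j, w j * (min (mu j) (x (k+1)) - min (mu j) (x k)) := by
            simp only [hSm]
            rw [← Finset.sum_sub_distrib]
            refine Finset.sum_congr rfl fun j _ => ?_
            ring
          rw [hsm, Finset.mul_sum]
          refine Finset.sum_congr rfl fun j _ => ?_
          ring
  -- Abel summation
  have habel : 0 ≤ ∑ k ∈ Finset.range (c-1), d k * (G (k+1) - G k) := by
    have hby := Finset.sum_range_by_parts d (fun k => G (k+1) - G k) (c-1)
    have hps : ∀ k, ∑ i ∈ Finset.range k, (G (i+1) - G i) = G k := by
      intro k
      rw [Finset.sum_range_sub G k, hG0, sub_zero]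
    simp only [smul_eq_mul] at hby
    rw [hby]
    simp only [hps]
    rw [hGtop, mul_zero, zero_sub]
    rw [neg_nonneg]
    refine Finset.sum_nonpos fun i hi => ?_
    have hi' : i < c - 1 - 1 := Finset.mem_range.mp hi
    have hd' : d i ≤ d (i+1) := hdmono i (by omega)
    have hg' : G (i+1) ≤ 0 := hGle (i+1)
    nlinarith [hd', hg', hGle i]
  -- combine
  have hdiff : ∑ k ∈ Finset.range (c-1), d k * (Sl (x (k+1)) - Sl (x k))
      - ∑ k ∈ Finset.range (c-1), d k * (Sm (x (k+1)) - Sm (x k))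
      = ∑ k ∈ Finset.range (c-1), d k * (G (k+1) - G k) := by
    rw [← Finset.sum_sub_distrib]
    refine Finset.sum_congr rfl fun k _ => ?_
    simp only [hG]
    ring
  have hf0' : (∑ j, w j) * f 0 ≤ (m:ℝ) * f 0 := mul_le_mul_of_nonpos_right hn hf0
  rw [hexp1, hexp2]
  linarith [habel, hdiff]


end TraceCfcAux

open TraceCfcAux in
/-- Result 1.7: for convex `f : [0,∞) → ℝ` with `f(0) ≤ 0`, `A ≥ 0` and expansive `Z`,
`Tr f(ZᴴAZ) ≥ Tr (Zᴴ f(A) Z)`. -/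
theorem trace_cfc_convex_expansive_ge {n : ℕ} (hn : 1 ≤ n) (f : ℝ → ℝ)
    (hf_convex : ConvexOn ℝ (Set.Ici (0 : ℝ)) f) (hf0 : f 0 ≤ 0)
    (A Z : Matrix (Fin n) (Fin n) ℂ)
    (hA : A.PosSemidef) (hZ : (Zᴴ * Z - 1).PosSemidef) :
    Matrix.trace (Zᴴ * cfc f A * Z) ≤ Matrix.trace (cfc f (Zᴴ * A * Z)) := by
  classical
  have hAH : A.IsHermitian := hA.1
  have hB : (Zᴴ * A * Z).PosSemidef := hA.conjTranspose_mul_mul_same Z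
  have hBH : (Zᴴ * A * Z).IsHermitian := hB.1
  rw [hAH.cfc_eq f, hBH.cfc_eq f]
  set w : Fin n → ℝ := fun j => rns ((U hAH)ᴴ * Z) j with hwdef
  set mu : Fin n → ℝ := hAH.eigenvalues with hmu
  set lam : Fin n → ℝ := hBH.eigenvalues with hlam
  have hLHS : Matrix.trace (Zᴴ * hAH.cfc f * Z) = ((∑ j, w j * f (mu j) : ℝ) : ℂ) := by
    rw [trace_conj_cfc hAH f Z]
    norm_cast
    exact Finset.sum_congr rfl fun j _ => mul_comm _ _
  have hRHS : Matrix.trace (hBH.cfc f) = ((∑ i, f (lam i) : ℝ) : ℂ) := trace_cfc' hBH f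
  rw [hLHS, hRHS, Complex.real_le_real]
  refine scalar_key f hf_convex hf0 lam mu w (fun i => hB.eigenvalues_nonneg i)
    (fun j => hA.eigenvalues_nonneg j) (fun j => rns_nonneg _ j) ?_ ?_ ?_
  · -- hinge inequality
    intro t ht
    have h1 := hinge_trace hA hZ hB t ht
    have h2 : Matrix.trace (Zᴴ * hAH.cfc (fun x => max (x - t) 0) * Z)
        = ((∑ j, w j * max (mu j - t) 0 : ℝ) : ℂ) := by
      rw [trace_conj_cfc hAH _ Z]
      norm_cast
      exact Finset.sum_congr rfl fun j _ => mul_comm _ _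
    have h3 : Matrix.trace (hBH.cfc (fun x => max (x - t) 0))
        = ((∑ i, max (lam i - t) 0 : ℝ) : ℂ) := trace_cfc' hBH _
    rw [h2, h3, Complex.real_le_real] at h1
    exact h1
  · -- traces agree
    have h1 : Matrix.trace (Zᴴ * A * Z) = ((∑ i, lam i : ℝ) : ℂ) := by
      conv_lhs => rw [← cfc_id' hBH]
      exact trace_cfc' hBH _
    have h2 : Matrix.trace (Zᴴ * A * Z) = ((∑ j, w j * mu j : ℝ) : ℂ) := by
      conv_lhs => rw [← cfc_id' hAH]
      rw [trace_conj_cfc hAH _ Z]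
      norm_cast
      exact Finset.sum_congr rfl fun j _ => mul_comm _ _
    have := h1.symm.trans h2
    exact_mod_cast this
  · -- total weight at least n
    have h1 : Matrix.trace (Zᴴ * Z) = ((∑ j, w j : ℝ) : ℂ) := by
      have e1 : Zᴴ * Z = Zᴴ * hAH.cfc (fun _ => 1) * Z := by
        rw [cfc_one', Matrix.mul_one]
      rw [e1, trace_conj_cfc hAH _ Z]
      norm_cast
      refine Finset.sum_congr rfl fun j _ => ?_
      simp only [hwdef, one_mul]
    have h2 : 0 ≤ Matrix.trace (Zᴴ * Z - 1) := psd_trace_nonneg hZ.dotProduct_mulVec_nonneg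
    rw [Matrix.trace_sub, Matrix.trace_one, h1] at h2
    have h4 : (Fintype.card (Fin n) : ℝ) ≤ ∑ j, w j := by
      have := sub_nonneg.mp h2
      exact_mod_cast this
    simpa using h4
end

section
/- Let n ≥ 1, let f : ℝ → ℝ be a convex function, and let A, B be n×n Hermitian complex matrices. Then Tr f((A+B)/2) ≤ (Tr f(A) + Tr f(B))/2; equivalently, the map H ↦ Tr f(H) is convex on the set of Hermitian matrices. (von Neumann's trace inequality, inequality (4).) -/
open Matrix ComplexOrder

variable {n : Type*} [Fintype n] [DecidableEq n]

/-- Conjugated diagonal entry computation. -/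
lemma conj_entry_eq (d : n → ℝ) (W : Matrix n n ℂ) (i : n) :
    ((W * diagonal (Complex.ofReal ∘ d) * Wᴴ) i i).re
      = ∑ j, Complex.normSq (W i j) * d j := by
  rw [Matrix.mul_apply, Complex.re_sum]
  simp only [Matrix.mul_diagonal, conjTranspose_apply, Function.comp_apply]
  refine Finset.sum_congr rfl fun j _ => ?_
  rw [show W i j * (d j : ℂ) * star (W i j) = ((Complex.normSq (W i j) * d j : ℝ) : ℂ) by
    rw [mul_comm (W i j), mul_assoc, Complex.star_def, Complex.mul_conj]; push_cast; ring]
  simp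

lemma row_normSq_sum_one {W : Matrix n n ℂ} (hW : W ∈ Matrix.unitaryGroup n ℂ) (i : n) :
    ∑ j, Complex.normSq (W i j) = 1 := by
  have h := Matrix.mem_unitaryGroup_iff.mp hW
  have h2 : (W * star W) i i = 1 := by rw [h]; simp
  rw [Matrix.mul_apply] at h2
  simp only [Matrix.star_apply] at h2
  calc ∑ j, Complex.normSq (W i j) = (∑ j, W i j * star (W i j)).re := by
        rw [Complex.re_sum]
        exact Finset.sum_congr rfl fun j _ => by rw [Complex.star_def, Complex.mul_conj]; simp
    _ = 1 := by rw [h2]; simp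

/-- Jensen step: for Hermitian `A` and unitary `V`,
`f` of the conjugated diagonal entry is at most the diagonal entry of conjugated `cfc f A`. -/
lemma key_jensen (f : ℝ → ℝ) (hf : ConvexOn ℝ Set.univ f)
    (A : Matrix n n ℂ) (hA : A.IsHermitian) (V : Matrix n n ℂ)
    (hV : V ∈ Matrix.unitaryGroup n ℂ) (i : n) :
    f (((Vᴴ * A * V) i i).re) ≤ ((Vᴴ * cfc f A * V) i i).re := by
  set U : Matrix n n ℂ := (Matrix.IsHermitian.eigenvectorUnitary hA : Matrix n n ℂ) with hU
  have hUmem : U ∈ Matrix.unitaryGroup n ℂ := (Matrix.IsHermitian.eigenvectorUnitary hA).2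
  set W : Matrix n n ℂ := Vᴴ * U with hWdef
  have hWmem : W ∈ Matrix.unitaryGroup n ℂ := by
    exact mul_mem (by simpa [star_eq_conjTranspose] using Unitary.star_mem hV) hUmem
  have hconj : ∀ (d : n → ℝ),
      Vᴴ * (U * diagonal (Complex.ofReal ∘ d) * star U) * V
        = W * diagonal (Complex.ofReal ∘ d) * Wᴴ := by
    intro d
    simp only [hWdef, conjTranspose_mul, conjTranspose_conjTranspose,
      star_eq_conjTranspose]
    noncomm_ring
  have hAeq : Vᴴ * A * V = W * diagonal (Complex.ofReal ∘ hA.eigenvalues) * Wᴴ := by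
    conv_lhs => rw [hA.spectral_theorem]
    exact hconj _
  have hfeq : Vᴴ * cfc f A * V
      = W * diagonal (Complex.ofReal ∘ (f ∘ hA.eigenvalues)) * Wᴴ := by
    rw [hA.cfc_eq, Matrix.IsHermitian.cfc]
    exact hconj _
  rw [hAeq, hfeq, conj_entry_eq, conj_entry_eq]
  have hsum := row_normSq_sum_one hWmem i
  have := hf.map_sum_le (t := Finset.univ) (w := fun j => Complex.normSq (W i j))
    (p := fun j => hA.eigenvalues j)
    (fun j _ => Complex.normSq_nonneg _) hsum (fun j _ => Set.mem_univ _)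
  simpa [smul_eq_mul, Function.comp] using this

lemma trace_cfc_eq (f : ℝ → ℝ) (A : Matrix n n ℂ) (hA : A.IsHermitian) :
    Matrix.trace (cfc f A) = ∑ i, (f (hA.eigenvalues i) : ℂ) := by
  rw [hA.cfc_eq, Matrix.IsHermitian.cfc, Unitary.conjStarAlgAut_apply, Matrix.trace_mul_cycle,
    Unitary.star_mul_self_of_mem (SetLike.coe_mem _), Matrix.one_mul, Matrix.trace_diagonal]
  simp

/-- von Neumann's trace inequality (4): for convex `f : ℝ → ℝ` and Hermitian `A`, `B`,
`Tr f((A+B)/2) ≤ (Tr f(A) + Tr f(B))/2`. -/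
theorem trace_cfc_midpoint_convex {n : ℕ} (hn : 1 ≤ n) (f : ℝ → ℝ)
    (hf : ConvexOn ℝ Set.univ f)
    (A B : Matrix (Fin n) (Fin n) ℂ) (hA : A.IsHermitian) (hB : B.IsHermitian) :
    Matrix.trace (cfc f ((2 : ℂ)⁻¹ • (A + B))) ≤
      (Matrix.trace (cfc f A) + Matrix.trace (cfc f B)) / 2 := by
  set M : Matrix (Fin n) (Fin n) ℂ := (2 : ℂ)⁻¹ • (A + B) with hMdef
  have hM : M.IsHermitian := by
    show Mᴴ = M
    rw [hMdef, conjTranspose_smul, conjTranspose_add, hA.eq, hB.eq]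
    norm_num
  set V : Matrix (Fin n) (Fin n) ℂ := (Matrix.IsHermitian.eigenvectorUnitary hM : Matrix (Fin n) (Fin n) ℂ) with hV
  have hVmem : V ∈ Matrix.unitaryGroup (Fin n) ℂ := (Matrix.IsHermitian.eigenvectorUnitary hM).2
  have hVV : V * Vᴴ = 1 := by
    have := Matrix.mem_unitaryGroup_iff.mp hVmem
    rwa [star_eq_conjTranspose] at this
  have htr : ∀ X : Matrix (Fin n) (Fin n) ℂ, Matrix.trace (Vᴴ * X * V) = Matrix.trace X := by
    intro X
    rw [Matrix.trace_mul_cycle, hVV, Matrix.one_mul]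
  have hdiagM : Vᴴ * M * V = diagonal (Complex.ofReal ∘ hM.eigenvalues) := by
    have := hM.conjStarAlgAut_star_eigenvectorUnitary
    rwa [Unitary.conjStarAlgAut_star_apply, star_eq_conjTranspose] at this
  set a : Fin n → ℝ := fun i => ((Vᴴ * A * V) i i).re with ha
  set b : Fin n → ℝ := fun i => ((Vᴴ * B * V) i i).re with hb
  have eigM : ∀ i, hM.eigenvalues i = (2⁻¹ : ℝ) * a i + (2⁻¹ : ℝ) * b i := by
    intro i
    have h1 : ((Vᴴ * M * V) i i).re = hM.eigenvalues i := by rw [hdiagM]; simp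
    have h2 : Vᴴ * M * V = (2 : ℂ)⁻¹ • (Vᴴ * A * V + Vᴴ * B * V) := by
      simp only [hMdef, Matrix.mul_smul, Matrix.smul_mul, Matrix.mul_add, Matrix.add_mul]
    rw [← h1, h2]
    rw [show (2 : ℂ)⁻¹ = ((2⁻¹ : ℝ) : ℂ) by norm_num]
    simp [Matrix.smul_apply, Matrix.add_apply, Complex.re_ofReal_mul, mul_add, ha, hb]
  -- real inequality
  have hreal : ∑ i, f (hM.eigenvalues i)
      ≤ (∑ i, f (hA.eigenvalues i) + ∑ i, f (hB.eigenvalues i)) / 2 := by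
    have hsumA : ∑ i, ((Vᴴ * cfc f A * V) i i).re = ∑ i, f (hA.eigenvalues i) := by
      have : Matrix.trace (Vᴴ * cfc f A * V) = Matrix.trace (cfc f A) := htr _
      rw [trace_cfc_eq f A hA] at this
      have := congrArg Complex.re this
      rw [Matrix.trace, Complex.re_sum, Complex.re_sum] at this
      simpa [Matrix.diag] using this
    have hsumB : ∑ i, ((Vᴴ * cfc f B * V) i i).re = ∑ i, f (hB.eigenvalues i) := by
      have : Matrix.trace (Vᴴ * cfc f B * V) = Matrix.trace (cfc f B) := htr _
      rw [trace_cfc_eq f B hB] at this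
      have := congrArg Complex.re this
      rw [Matrix.trace, Complex.re_sum, Complex.re_sum] at this
      simpa [Matrix.diag] using this
    have step : ∀ i, f (hM.eigenvalues i)
        ≤ 2⁻¹ * ((Vᴴ * cfc f A * V) i i).re + 2⁻¹ * ((Vᴴ * cfc f B * V) i i).re := by
      intro i
      have jA := key_jensen f hf A hA V hVmem i
      have jB := key_jensen f hf B hB V hVmem i
      have conv : f ((2⁻¹ : ℝ) * a i + (2⁻¹ : ℝ) * b i) ≤ 2⁻¹ * f (a i) + 2⁻¹ * f (b i) := by
        have := hf.2 (Set.mem_univ (a i)) (Set.mem_univ (b i))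
          (by norm_num : (0:ℝ) ≤ 2⁻¹) (by norm_num : (0:ℝ) ≤ 2⁻¹) (by norm_num)
        simpa [smul_eq_mul] using this
      rw [eigM i]
      refine conv.trans ?_
      have h2 : (0:ℝ) ≤ 2⁻¹ := by norm_num
      gcongr
    calc ∑ i, f (hM.eigenvalues i)
        ≤ ∑ i, (2⁻¹ * ((Vᴴ * cfc f A * V) i i).re + 2⁻¹ * ((Vᴴ * cfc f B * V) i i).re) :=
          Finset.sum_le_sum fun i _ => step i
      _ = (∑ i, f (hA.eigenvalues i) + ∑ i, f (hB.eigenvalues i)) / 2 := by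
          rw [Finset.sum_add_distrib, ← Finset.mul_sum, ← Finset.mul_sum, hsumA, hsumB]
          ring
  rw [show cfc f ((2 : ℂ)⁻¹ • (A + B)) = cfc f M from rfl, trace_cfc_eq f M hM,
    trace_cfc_eq f A hA, trace_cfc_eq f B hB]
  rw [← Complex.ofReal_sum, ← Complex.ofReal_sum, ← Complex.ofReal_sum]
  calc ((∑ i, f (hM.eigenvalues i) : ℝ) : ℂ)
      ≤ (((∑ i, f (hA.eigenvalues i) + ∑ i, f (hB.eigenvalues i)) / 2 : ℝ) : ℂ) := by
        exact_mod_cast hreal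
    _ = ((∑ i, f (hA.eigenvalues i) : ℝ) + (∑ i, f (hB.eigenvalues i) : ℝ)) / 2 := by
        push_cast; ring
end

section
/- Let n ≥ 1, let f : ℝ → ℝ be a convex function with f(0) ≤ 0, let A be an n×n Hermitian complex matrix, and let Z be an n×n complex contraction (Z*Z ≤ I). Then Tr f(Z*AZ) ≤ Tr (Z*f(A)Z). (Brown–Kosaki's trace inequality, inequality (5).) -/
open Matrix ComplexOrder

lemma jensen_aux {ι : Type*} [Fintype ι] (f : ℝ → ℝ) (hf : ConvexOn ℝ Set.univ f)
    (hf0 : f 0 ≤ 0) (t p : ι → ℝ) (ht : ∀ i, 0 ≤ t i) (hsum : ∑ i, t i ≤ 1) :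
    f (∑ i, t i * p i) ≤ ∑ i, t i * f (p i) := by
  set s := ∑ i, t i with hs
  have key := hf.map_sum_le (t := (Finset.univ : Finset (Option ι)))
    (w := fun o => o.elim (1 - s) t) (p := fun o => o.elim 0 p)
    (fun o _ => by cases o <;> simp [ht, sub_nonneg.2 hsum])
    (by simp [Fintype.sum_option, s]) (fun _ _ => trivial)
  simp only [Fintype.sum_option, Option.elim, smul_eq_mul] at key
  calc f (∑ i, t i * p i) = f ((1 - s) * 0 + ∑ i, t i * p i) := by ring_nf
    _ ≤ (1 - s) * f 0 + ∑ i, t i * f (p i) := key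
    _ ≤ ∑ i, t i * f (p i) := by
        nlinarith [mul_nonpos_of_nonneg_of_nonpos (sub_nonneg.2 hsum) hf0]


/-- Brown–Kosaki's trace inequality (5): for convex `f : ℝ → ℝ` with `f(0) ≤ 0`,
Hermitian `A` and a contraction `Z`, `Tr f(ZᴴAZ) ≤ Tr (Zᴴ f(A) Z)`. -/
theorem trace_cfc_convex_contraction_le {n : ℕ} (hn : 1 ≤ n) (f : ℝ → ℝ)
    (hf : ConvexOn ℝ Set.univ f) (hf0 : f 0 ≤ 0)
    (A Z : Matrix (Fin n) (Fin n) ℂ)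
    (hA : A.IsHermitian) (hZ : (1 - Zᴴ * Z).PosSemidef) :
    Matrix.trace (cfc f (Zᴴ * A * Z)) ≤ Matrix.trace (Zᴴ * cfc f A * Z) := by
  have hB : (Zᴴ * A * Z).IsHermitian := isHermitian_conjTranspose_mul_mul Z hA
  set U : Matrix (Fin n) (Fin n) ℂ := (hA.eigenvectorUnitary : Matrix (Fin n) (Fin n) ℂ) with hU
  set V : Matrix (Fin n) (Fin n) ℂ := (hB.eigenvectorUnitary : Matrix (Fin n) (Fin n) ℂ) with hV
  have hU1 : Uᴴ * U = 1 := by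
    rw [← star_eq_conjTranspose]
    exact Matrix.mem_unitaryGroup_iff'.mp (Matrix.IsHermitian.eigenvectorUnitary hA).2
  have hU2 : U * Uᴴ = 1 := by
    rw [← star_eq_conjTranspose]
    exact Matrix.mem_unitaryGroup_iff.mp (Matrix.IsHermitian.eigenvectorUnitary hA).2
  have hV1 : Vᴴ * V = 1 := by
    rw [← star_eq_conjTranspose]
    exact Matrix.mem_unitaryGroup_iff'.mp (Matrix.IsHermitian.eigenvectorUnitary hB).2
  have hV2 : V * Vᴴ = 1 := by
    rw [← star_eq_conjTranspose]
    exact Matrix.mem_unitaryGroup_iff.mp (Matrix.IsHermitian.eigenvectorUnitary hB).2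
  set M : Matrix (Fin n) (Fin n) ℂ := Uᴴ * Z * V with hM
  set lam := hA.eigenvalues with hlam
  set mu := hB.eigenvalues with hmu
  -- general conjugation identity
  have key : ∀ g : Fin n → ℝ,
      Vᴴ * (Zᴴ * (U * diagonal (Complex.ofReal ∘ g) * Uᴴ) * Z) * V
        = Mᴴ * diagonal (Complex.ofReal ∘ g) * M := by
    intro g
    simp only [hM, conjTranspose_mul, conjTranspose_conjTranspose, Matrix.mul_assoc]
  have fact1 : (diagonal (Complex.ofReal ∘ mu) : Matrix (Fin n) (Fin n) ℂ)
      = Mᴴ * diagonal (Complex.ofReal ∘ lam) * M := by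
    have h1 : Vᴴ * (Zᴴ * A * Z) * V = diagonal (Complex.ofReal ∘ mu) := by
      conv_lhs => rw [hB.spectral_theorem, Unitary.conjStarAlgAut_apply]
      rw [show (V * diagonal (RCLike.ofReal ∘ mu) * (star V) : Matrix (Fin n) (Fin n) ℂ)
            = V * diagonal (Complex.ofReal ∘ mu) * Vᴴ from rfl]
      simp only [Matrix.mul_assoc]
      rw [hV1, mul_one, ← Matrix.mul_assoc, hV1, one_mul]
    have h2 : Vᴴ * (Zᴴ * A * Z) * V = Mᴴ * diagonal (Complex.ofReal ∘ lam) * M := by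
      conv_lhs => rw [hA.spectral_theorem]
      exact key lam
    rw [← h1, h2]
  -- diagonal entries of M^H D M
  have diagMDM : ∀ (g : Fin n → ℝ) (i : Fin n),
      (Mᴴ * diagonal (Complex.ofReal ∘ g) * M) i i
        = ((∑ j, Complex.normSq (M j i) * g j : ℝ) : ℂ) := by
    intro g i
    simp only [Matrix.mul_apply, Matrix.mul_diagonal, conjTranspose_apply,
      Matrix.diagonal_apply, Function.comp_apply, mul_ite, mul_zero, ite_mul, zero_mul,
      Finset.sum_ite_eq, Finset.sum_ite_eq', Finset.mem_univ, if_true]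
    push_cast
    refine Finset.sum_congr rfl fun j _ => ?_
    rw [show ((Complex.normSq (M j i) : ℝ) : ℂ) = star (M j i) * M j i from
      Complex.normSq_eq_conj_mul_self]
    ring
  -- entrywise eigenvalue identity
  have entry : ∀ i, mu i = ∑ j, Complex.normSq (M j i) * lam j := by
    intro i
    have h : (diagonal (Complex.ofReal ∘ mu) : Matrix (Fin n) (Fin n) ℂ) i i
        = (Mᴴ * diagonal (Complex.ofReal ∘ lam) * M) i i := by rw [fact1]
    rw [diagMDM lam i, Matrix.diagonal_apply_eq] at h
    simpa using Complex.ofReal_inj.mp (by simpa [Function.comp] using h)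
  -- column sums are at most 1
  have hpsd : (1 - Mᴴ * M : Matrix (Fin n) (Fin n) ℂ).PosSemidef := by
    have h := hZ.conjTranspose_mul_mul_same V
    have hMM : Mᴴ * M = Vᴴ * (Zᴴ * Z) * V := by
      simp only [hM, conjTranspose_mul, conjTranspose_conjTranspose, Matrix.mul_assoc]
      rw [show U * (Uᴴ * (Z * V)) = U * Uᴴ * (Z * V) from (Matrix.mul_assoc _ _ _).symm,
        hU2, one_mul]
    have he : Vᴴ * (1 - Zᴴ * Z) * V = 1 - Mᴴ * M := by
      rw [Matrix.mul_sub, Matrix.sub_mul, Matrix.mul_one, hV1, hMM]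
    rwa [he] at h
  have colsum : ∀ i, ∑ j, Complex.normSq (M j i) ≤ 1 := by
    intro i
    have h0 := hpsd.re_dotProduct_nonneg (Pi.single i 1)
    have hdot : dotProduct (star (Pi.single i 1)) ((1 - Mᴴ * M) *ᵥ (Pi.single i 1 : Fin n → ℂ))
        = (1 - Mᴴ * M : Matrix (Fin n) (Fin n) ℂ) i i := by
      simp [dotProduct, Matrix.mulVec, Pi.single_apply, Finset.sum_ite_eq, Finset.sum_ite_eq',
        mul_comm, apply_ite]
    have hdd : (1 - Mᴴ * M : Matrix (Fin n) (Fin n) ℂ) i i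
        = ((1 - ∑ j, Complex.normSq (M j i) : ℝ) : ℂ) := by
      simp only [Matrix.sub_apply, Matrix.one_apply_eq, Matrix.mul_apply, conjTranspose_apply]
      push_cast
      congr 1
      exact Finset.sum_congr rfl fun j _ => Complex.normSq_eq_conj_mul_self.symm
    rw [hdot, hdd] at h0
    simp only [RCLike.re_to_complex, Complex.ofReal_re] at h0
    linarith

  -- traces
  have traceL : Matrix.trace (hB.cfc f) = ((∑ i, f (mu i) : ℝ) : ℂ) := by
    rw [Matrix.IsHermitian.cfc, Unitary.conjStarAlgAut_apply]
    rw [show ((hB.eigenvectorUnitary : Matrix (Fin n) (Fin n) ℂ)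
        * diagonal (RCLike.ofReal ∘ f ∘ hB.eigenvalues)
        * star (hB.eigenvectorUnitary : Matrix (Fin n) (Fin n) ℂ) : Matrix (Fin n) (Fin n) ℂ)
        = V * diagonal (Complex.ofReal ∘ f ∘ mu) * Vᴴ from rfl]
    rw [Matrix.trace_mul_cycle, hV1, one_mul, Matrix.trace_diagonal]
    push_cast
    rfl
  have traceR : Matrix.trace (Zᴴ * hA.cfc f * Z)
      = ((∑ i, ∑ j, Complex.normSq (M j i) * f (lam j) : ℝ) : ℂ) := by
    have ht1 : Matrix.trace (Vᴴ * (Zᴴ * hA.cfc f * Z) * V)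
        = Matrix.trace (Zᴴ * hA.cfc f * Z) := by
      rw [Matrix.trace_mul_cycle, ← Matrix.mul_assoc, hV2, one_mul]
    rw [← ht1, Matrix.IsHermitian.cfc, Unitary.conjStarAlgAut_apply]
    rw [show Vᴴ * (Zᴴ * ((hA.eigenvectorUnitary : Matrix (Fin n) (Fin n) ℂ)
        * diagonal (RCLike.ofReal ∘ f ∘ hA.eigenvalues)
        * star (hA.eigenvectorUnitary : Matrix (Fin n) (Fin n) ℂ)) * Z) * V
        = Vᴴ * (Zᴴ * (U * diagonal (Complex.ofReal ∘ (f ∘ lam)) * Uᴴ) * Z) * V from rfl]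
    rw [key (f ∘ lam)]
    rw [Matrix.trace]
    push_cast
    exact Finset.sum_congr rfl fun i _ => by
      simpa using diagMDM (f ∘ lam) i
  -- put everything together
  rw [hB.cfc_eq, hA.cfc_eq, traceL, traceR]
  rw [Complex.real_le_real]
  refine Finset.sum_le_sum fun i _ => ?_
  rw [entry i]
  exact jensen_aux f hf hf0 (fun j => Complex.normSq (M j i)) lam
    (fun j => Complex.normSq_nonneg _) (colsum i)
end

section
/- Let n, m ≥ 1, let f : ℝ → ℝ be a convex function, let A₁, …, A_m be n×n Hermitian complex matrices, and let Z₁, …, Z_m be n×n complex matrices forming an isometric column, i.e., Σᵢ Zᵢ*Zᵢ = I. Then Tr f(Σᵢ Zᵢ*AᵢZᵢ) ≤ Tr (Σᵢ Zᵢ*f(Aᵢ)Zᵢ). (Hansen–Pedersen's trace inequality, result 1.3.) -/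
open Matrix ComplexOrder

private lemma HP_diag_entry {n m : ℕ} (B : Fin m → Matrix (Fin n) (Fin n) ℂ)
    (d : Fin m → Fin n → ℝ) (k : Fin n) :
    (∑ i, (B i)ᴴ * Matrix.diagonal (fun j => (d i j : ℂ)) * B i) k k
      = ((∑ i, ∑ j, d i j * Complex.normSq (B i j k) : ℝ) : ℂ) := by
  push_cast
  rw [Matrix.sum_apply]
  refine Finset.sum_congr rfl fun i _ => ?_
  rw [Matrix.mul_apply]
  refine Finset.sum_congr rfl fun j _ => ?_
  rw [Matrix.mul_apply, Finset.sum_eq_single j (by intro b _ hb; simp [Matrix.diagonal_apply_ne _ hb]) (by simp)]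
  simp only [Matrix.diagonal_apply_eq, Matrix.conjTranspose_apply]
  calc (starRingEnd ℂ) (B i j k) * (d i j : ℂ) * B i j k
      = (d i j : ℂ) * (B i j k * (starRingEnd ℂ) (B i j k)) := by ring
    _ = (d i j : ℂ) * (Complex.normSq (B i j k) : ℂ) := by rw [Complex.mul_conj]
    _ = _ := by push_cast; ring

/-- Hansen–Pedersen's trace inequality (result 1.3): for convex `f : ℝ → ℝ`, Hermitians
`Aᵢ` and an isometric column `(Zᵢ)` (i.e. `∑ᵢ Zᵢᴴ Zᵢ = 1`),
`Tr f(∑ᵢ Zᵢᴴ Aᵢ Zᵢ) ≤ Tr (∑ᵢ Zᵢᴴ f(Aᵢ) Zᵢ)`. -/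
theorem trace_cfc_hansen_pedersen {n m : ℕ} (hn : 1 ≤ n) (hm : 1 ≤ m) (f : ℝ → ℝ)
    (hf : ConvexOn ℝ Set.univ f)
    (A : Fin m → Matrix (Fin n) (Fin n) ℂ) (hA : ∀ i, (A i).IsHermitian)
    (Z : Fin m → Matrix (Fin n) (Fin n) ℂ) (hZ : ∑ i, (Z i)ᴴ * Z i = 1) :
    Matrix.trace (cfc f (∑ i, (Z i)ᴴ * A i * Z i)) ≤
      Matrix.trace (∑ i, (Z i)ᴴ * cfc f (A i) * Z i) := by
  classical
  set C : Matrix (Fin n) (Fin n) ℂ := ∑ i, (Z i)ᴴ * A i * Z i with hCdef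
  have hC : C.IsHermitian := by
    rw [Matrix.IsHermitian, hCdef, Matrix.conjTranspose_sum]
    exact Finset.sum_congr rfl fun i _ => Matrix.isHermitian_conjTranspose_mul_mul (Z i) (hA i)
  set U : Matrix (Fin n) (Fin n) ℂ := (hC.eigenvectorUnitary : Matrix (Fin n) (Fin n) ℂ) with hUdef
  set V : Fin m → Matrix (Fin n) (Fin n) ℂ :=
    fun i => ((hA i).eigenvectorUnitary : Matrix (Fin n) (Fin n) ℂ) with hVdef
  set B : Fin m → Matrix (Fin n) (Fin n) ℂ := fun i => (V i)ᴴ * Z i * U with hBdef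
  set μ : Fin m → Fin n → ℝ := fun i => (hA i).eigenvalues with hμdef
  set lam : Fin n → ℝ := hC.eigenvalues with hlamdef
  set p : Fin m → Fin n → Fin n → ℝ := fun i j k => Complex.normSq (B i j k) with hpdef
  have hVV' : ∀ i, V i * (V i)ᴴ = 1 := by
    intro i
    have := Matrix.mem_unitaryGroup_iff.mp (hA i).eigenvectorUnitary.2
    simpa [Matrix.star_eq_conjTranspose] using this
  have hVcancel : ∀ i (X : Matrix (Fin n) (Fin n) ℂ), V i * ((V i)ᴴ * X) = X := by
    intro i X
    rw [← Matrix.mul_assoc, hVV' i, one_mul]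
  have hUU : Uᴴ * U = 1 := by
    have := Matrix.mem_unitaryGroup_iff'.mp hC.eigenvectorUnitary.2
    simpa [Matrix.star_eq_conjTranspose] using this
  have hUU' : U * Uᴴ = 1 := by
    have := Matrix.mem_unitaryGroup_iff.mp hC.eigenvectorUnitary.2
    simpa [Matrix.star_eq_conjTranspose] using this
  -- spectral decompositions
  have hAspec : ∀ i, A i = V i * Matrix.diagonal (fun j => (μ i j : ℂ)) * (V i)ᴴ := by
    intro i
    have := (hA i).spectral_theorem
    simp only [Unitary.conjStarAlgAut_apply, Matrix.star_eq_conjTranspose] at this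
    exact this
  -- conjugation identity, generic in inner diagonal data
  have hconj : ∀ d : Fin m → Fin n → ℝ,
      Uᴴ * (∑ i, (Z i)ᴴ * (V i * Matrix.diagonal (fun j => (d i j : ℂ)) * (V i)ᴴ) * Z i) * U
        = ∑ i, (B i)ᴴ * Matrix.diagonal (fun j => (d i j : ℂ)) * B i := by
    intro d
    rw [Finset.mul_sum, Finset.sum_mul]
    refine Finset.sum_congr rfl fun i _ => ?_
    simp only [hBdef, Matrix.conjTranspose_mul, Matrix.conjTranspose_conjTranspose,
      Matrix.mul_assoc]
  -- diagonalization of C in terms of B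
  have hdiag : ∑ i, (B i)ᴴ * Matrix.diagonal (fun j => (μ i j : ℂ)) * B i
      = Matrix.diagonal (fun k => (lam k : ℂ)) := by
    rw [← hconj μ]
    have h1 : (∑ i, (Z i)ᴴ * (V i * Matrix.diagonal (fun j => (μ i j : ℂ)) * (V i)ᴴ) * Z i) = C := by
      rw [hCdef]
      exact Finset.sum_congr rfl fun i _ => by rw [← hAspec i]
    rw [h1]
    have := hC.conjStarAlgAut_star_eigenvectorUnitary
    simp only [Unitary.conjStarAlgAut_apply, star_star, Unitary.coe_star, Matrix.star_eq_conjTranspose,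
      Matrix.conjTranspose_conjTranspose] at this
    exact this
  -- isometry identity in terms of B
  have hone : ∑ i, (B i)ᴴ * B i = 1 := by
    have : ∑ i, (B i)ᴴ * B i = Uᴴ * (∑ i, (Z i)ᴴ * Z i) * U := by
      rw [Finset.mul_sum, Finset.sum_mul]
      refine Finset.sum_congr rfl fun i _ => ?_
      simp only [hBdef, Matrix.conjTranspose_mul, Matrix.conjTranspose_conjTranspose,
        Matrix.mul_assoc, hVcancel]
    rw [this, hZ, mul_one, hUU]
  -- weights sum to 1
  have hsum1 : ∀ k, ∑ i, ∑ j, p i j k = 1 := by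
    intro k
    have hD1 : Matrix.diagonal (fun _ : Fin n => (((1:ℝ)) : ℂ)) = (1 : Matrix (Fin n) (Fin n) ℂ) := by
      simp
    have e := HP_diag_entry B (fun _ _ => 1) k
    simp only [hD1, mul_one] at e
    rw [hone] at e
    have e2 : ((∑ i, ∑ j, (1:ℝ) * Complex.normSq (B i j k) : ℝ) : ℂ) = ((1:ℝ) : ℂ) := by
      rw [← e]; simp [Matrix.one_apply_eq]
    have := Complex.ofReal_inj.mp e2
    simpa [hpdef] using this
  -- eigenvalues of C as convex combinations
  have hlam : ∀ k, lam k = ∑ i, ∑ j, μ i j * p i j k := by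
    intro k
    have h := congrFun (congrFun hdiag k) k
    rw [HP_diag_entry B μ k] at h
    simp only [Matrix.diagonal_apply_eq] at h
    exact_mod_cast h.symm
  -- trace of LHS
  have hLHS : Matrix.trace (cfc f C) = ((∑ k, f (lam k) : ℝ) : ℂ) := by
    rw [hC.cfc_eq f]
    show Matrix.trace (U * Matrix.diagonal (RCLike.ofReal ∘ f ∘ hC.eigenvalues) * star U) = _
    rw [Matrix.star_eq_conjTranspose, Matrix.trace_mul_comm, ← Matrix.mul_assoc, hUU, one_mul,
      Matrix.trace_diagonal]
    push_cast
    rfl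
  -- trace of RHS
  have hRHS : Matrix.trace (∑ i, (Z i)ᴴ * cfc f (A i) * Z i)
      = ((∑ k, ∑ i, ∑ j, f (μ i j) * p i j k : ℝ) : ℂ) := by
    have hM : (∑ i, (Z i)ᴴ * cfc f (A i) * Z i)
        = ∑ i, (Z i)ᴴ * (V i * Matrix.diagonal (fun j => ((f (μ i j) : ℝ) : ℂ)) * (V i)ᴴ) * Z i := by
      refine Finset.sum_congr rfl fun i _ => ?_
      rw [(hA i).cfc_eq f]
      show (Z i)ᴴ * (V i * Matrix.diagonal (RCLike.ofReal ∘ f ∘ (hA i).eigenvalues) * star (V i)) * Z i = _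
      rw [Matrix.star_eq_conjTranspose]
      rfl
    rw [hM]
    have htr : Matrix.trace (∑ i, (Z i)ᴴ * (V i * Matrix.diagonal (fun j => ((f (μ i j) : ℝ) : ℂ)) * (V i)ᴴ) * Z i)
        = Matrix.trace (Uᴴ * (∑ i, (Z i)ᴴ * (V i * Matrix.diagonal (fun j => ((f (μ i j) : ℝ) : ℂ)) * (V i)ᴴ) * Z i) * U) := by
      rw [Matrix.trace_mul_cycle, hUU', one_mul]
    rw [htr, hconj (fun i j => f (μ i j)), Matrix.trace]
    push_cast
    refine Finset.sum_congr rfl fun k _ => ?_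
    have := HP_diag_entry B (fun i j => f (μ i j)) k
    rw [Matrix.diag_apply, this]
    push_cast
    rfl
  rw [hLHS, hRHS, Complex.real_le_real]
  refine Finset.sum_le_sum fun k _ => ?_
  rw [hlam k]
  have hjensen := hf.map_sum_le (t := (Finset.univ : Finset (Fin m × Fin n)))
    (w := fun q => p q.1 q.2 k) (p := fun q => μ q.1 q.2)
    (fun q _ => Complex.normSq_nonneg _)
    (by rw [Fintype.sum_prod_type]; exact hsum1 k)
    (fun q _ => Set.mem_univ _)
  simp only [Fintype.sum_prod_type, smul_eq_mul] at hjensen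
  calc f (∑ i, ∑ j, μ i j * p i j k) = f (∑ i, ∑ j, p i j k * μ i j) := by
        congr 1; exact Finset.sum_congr rfl fun i _ => Finset.sum_congr rfl fun j _ => mul_comm _ _
    _ ≤ ∑ i, ∑ j, p i j k * f (μ i j) := hjensen
    _ = ∑ i, ∑ j, f (μ i j) * p i j k := Finset.sum_congr rfl fun i _ =>
        Finset.sum_congr rfl fun j _ => mul_comm _ _
end

section
/- Let n ≥ 1, let f : ℝ → ℝ be a monotone (nondecreasing or nonincreasing) convex function, and let A, B be n×n Hermitian complex matrices. Then there exists an n×n unitary matrix U such that f((A+B)/2) ≤ U · ((f(A)+f(B))/2) · U* in the Loewner order. (Result 1.4.) -/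
/-!
Let `X = (A + B)/2` and `Y = (f A + f B)/2`, diagonalised by unitaries `V`, `W` with eigenvalues
`μ₀ ≤ μ₁ ≤ ⋯` and `ν₀ ≤ ν₁ ≤ ⋯`. For a unit vector `x`, Jensen's inequality in an eigenbasis of a
Hermitian `M` gives `f ⟪x, M x⟫ ≤ ⟪x, f(M) x⟫`; together with midpoint convexity this yields
`f ⟪x, X x⟫ ≤ ⟪x, Y x⟫`. By a dimension count there is a unit `x` in the span of the eigenvectors
of `X` for `μₖ, μₖ₊₁, …` and of those of `Y` for `ν₀, …, νₖ`, so for increasing `f`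
`f μₖ ≤ f ⟪x, X x⟫ ≤ ⟪x, Y x⟫ ≤ νₖ`. Then `U = V Wᴴ` conjugates `Y` to `V diag(ν) Vᴴ`, which dominates
`f X = V diag(f ∘ μ) Vᴴ`. A decreasing `f` reduces to the increasing `x ↦ f (-x)` applied to `-A`,
`-B`.
-/

open Matrix ComplexOrder

section WeightedSum

variable {ι : Type*} [Fintype ι] [LinearOrder ι] {g w : ι → ℝ} {k : ι}

lemma Monotone.le_sum_mul_of_eq_zero_of_lt (hg : Monotone g) (hw₀ : ∀ i, 0 ≤ w i)
    (hw₁ : ∑ i, w i = 1) (hwk : ∀ i < k, w i = 0) : g k ≤ ∑ i, w i * g i :=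
  calc g k
    _ = ∑ i, w i * g k := by rw [← Finset.sum_mul, hw₁, one_mul]
    _ ≤ ∑ i, w i * g i := Finset.sum_le_sum fun i _ => by
      rcases lt_or_ge i k with hik | hki
      · simp [hwk i hik]
      · exact mul_le_mul_of_nonneg_left (hg hki) (hw₀ i)

lemma Monotone.sum_mul_le_of_eq_zero_of_gt (hg : Monotone g) (hw₀ : ∀ i, 0 ≤ w i)
    (hw₁ : ∑ i, w i = 1) (hwk : ∀ i, k < i → w i = 0) : ∑ i, w i * g i ≤ g k :=
  calc ∑ i, w i * g i
    _ ≤ ∑ i, w i * g k := Finset.sum_le_sum fun i _ => by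
      rcases lt_or_ge k i with hki | hik
      · simp [hwk i hki]
      · exact mul_le_mul_of_nonneg_left (hg hik) (hw₀ i)
    _ = g k := by rw [← Finset.sum_mul, hw₁, one_mul]

end WeightedSum

namespace Matrix

section QuadraticForm

variable {𝕜 : Type*} [RCLike 𝕜] {ι : Type*} [Fintype ι]

lemma re_star_dotProduct_midpoint_mulVec (P Q : Matrix ι ι 𝕜) (x : ι → 𝕜) :
    RCLike.re (star x ⬝ᵥ (((2 : 𝕜)⁻¹ • (P + Q)) *ᵥ x))
      = (RCLike.re (star x ⬝ᵥ (P *ᵥ x)) + RCLike.re (star x ⬝ᵥ (Q *ᵥ x))) / 2 := by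
  rw [smul_mulVec, add_mulVec, dotProduct_smul, dotProduct_add, smul_eq_mul, ← map_add,
    ← RCLike.ofReal_ofNat, ← RCLike.ofReal_inv, RCLike.re_ofReal_mul, inv_mul_eq_div]

lemma exists_smul_star_dotProduct_self_eq_one {c : ι → 𝕜} (hc : c ≠ 0) :
    ∃ r : 𝕜, star (r • c) ⬝ᵥ (r • c) = 1 := by
  have hv : ‖WithLp.toLp 2 c‖ ≠ 0 := by simpa using hc
  refine ⟨(‖WithLp.toLp 2 c‖⁻¹ : ℝ), ?_⟩
  rw [dotProduct_comm, ← EuclideanSpace.inner_toLp_toLp, inner_self_eq_norm_sq_to_K,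
    WithLp.toLp_smul, norm_smul, RCLike.norm_ofReal, abs_inv, abs_norm, inv_mul_cancel₀ hv]
  simp

variable [DecidableEq ι]

lemma re_star_dotProduct_conj_diagonal_mulVec (U : Matrix ι ι 𝕜) (d : ι → ℝ) (x : ι → 𝕜) :
    RCLike.re (star x ⬝ᵥ ((U * diagonal (RCLike.ofReal ∘ d) * Uᴴ) *ᵥ x))
      = ∑ i, ‖(Uᴴ *ᵥ x) i‖ ^ 2 * d i := by
  have hstar : star x ᵥ* U = star (Uᴴ *ᵥ x) := by rw [star_mulVec, conjTranspose_conjTranspose]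
  rw [← mulVec_mulVec, ← mulVec_mulVec, dotProduct_mulVec, hstar]
  simp only [dotProduct, mulVec_diagonal, Pi.star_apply, map_sum, Function.comp_apply]
  refine Finset.sum_congr rfl fun i _ => ?_
  rw [mul_left_comm, RCLike.star_def, RCLike.conj_mul, ← RCLike.ofReal_pow, ← RCLike.ofReal_mul,
    RCLike.ofReal_re, mul_comm]

lemma sum_norm_sq_conjTranspose_mulVec {U : Matrix ι ι 𝕜} (hU : U ∈ unitaryGroup ι 𝕜)
    (x : ι → 𝕜) : ∑ i, ‖(Uᴴ *ᵥ x) i‖ ^ 2 = RCLike.re (star x ⬝ᵥ x) := by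
  simpa [← star_eq_conjTranspose, mem_unitaryGroup_iff.mp hU] using
    (re_star_dotProduct_conj_diagonal_mulVec U 1 x).symm

lemma IsHermitian.re_star_dotProduct_cfc_mulVec {A : Matrix ι ι 𝕜} (hA : A.IsHermitian)
    (g : ℝ → ℝ) (x : ι → 𝕜) :
    RCLike.re (star x ⬝ᵥ (cfc g A *ᵥ x)) = ∑ i,
      ‖((hA.eigenvectorUnitary : Matrix ι ι 𝕜)ᴴ *ᵥ x) i‖ ^ 2 * g (hA.eigenvalues i) := by
  rw [hA.cfc_eq, IsHermitian.cfc, Unitary.conjStarAlgAut_apply, star_eq_conjTranspose,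
    re_star_dotProduct_conj_diagonal_mulVec]
  rfl

lemma IsHermitian.map_re_star_dotProduct_mulVec_le {f : ℝ → ℝ} (hf : ConvexOn ℝ Set.univ f)
    {A : Matrix ι ι 𝕜} (hA : A.IsHermitian) {x : ι → 𝕜} (hx : star x ⬝ᵥ x = 1) :
    f (RCLike.re (star x ⬝ᵥ (A *ᵥ x))) ≤ RCLike.re (star x ⬝ᵥ (cfc f A *ᵥ x)) := by
  have hw : ∑ i, ‖((hA.eigenvectorUnitary : Matrix ι ι 𝕜)ᴴ *ᵥ x) i‖ ^ 2 = 1 := by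
    rw [sum_norm_sq_conjTranspose_mulVec hA.eigenvectorUnitary.2, hx, RCLike.one_re]
  conv_lhs => rw [← cfc_id' ℝ A]
  rw [hA.re_star_dotProduct_cfc_mulVec, hA.re_star_dotProduct_cfc_mulVec]
  simpa only [smul_eq_mul] using
    hf.map_sum_le (fun i _ => by positivity) hw (fun i _ => Set.mem_univ _)

lemma map_re_star_dotProduct_midpoint_mulVec_le {f : ℝ → ℝ} (hf : ConvexOn ℝ Set.univ f)
    {A B : Matrix ι ι 𝕜} (hA : A.IsHermitian) (hB : B.IsHermitian) {x : ι → 𝕜}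
    (hx : star x ⬝ᵥ x = 1) :
    f (RCLike.re (star x ⬝ᵥ (((2 : 𝕜)⁻¹ • (A + B)) *ᵥ x)))
      ≤ RCLike.re (star x ⬝ᵥ (((2 : 𝕜)⁻¹ • (cfc f A + cfc f B)) *ᵥ x)) := by
  rw [re_star_dotProduct_midpoint_mulVec, re_star_dotProduct_midpoint_mulVec]
  set a := RCLike.re (star x ⬝ᵥ (A *ᵥ x))
  set b := RCLike.re (star x ⬝ᵥ (B *ᵥ x))
  have hmid : f ((a + b) / 2) ≤ (f a + f b) / 2 := by
    have := hf.2 (Set.mem_univ a) (Set.mem_univ b) (by norm_num : (0 : ℝ) ≤ 1 / 2)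
      (by norm_num : (0 : ℝ) ≤ 1 / 2) (by norm_num)
    rwa [smul_eq_mul, smul_eq_mul, smul_eq_mul, smul_eq_mul, ← mul_add, ← mul_add,
      one_div_mul_eq_div, one_div_mul_eq_div] at this
  linarith [hA.map_re_star_dotProduct_mulVec_le hf hx, hB.map_re_star_dotProduct_mulVec_le hf hx]

end QuadraticForm

section Hermitian

variable {𝕜 : Type*} [RCLike 𝕜] {ι : Type*}

lemma IsHermitian.inv_two_smul_add {A B : Matrix ι ι 𝕜} (hA : A.IsHermitian)
    (hB : B.IsHermitian) : ((2 : 𝕜)⁻¹ • (A + B)).IsHermitian :=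
  IsSelfAdjoint.smul (by simp) (hA.add hB)

variable [Fintype ι] [DecidableEq ι]

lemma submatrix_id_equiv_mem_unitaryGroup {U : Matrix ι ι 𝕜} (hU : U ∈ unitaryGroup ι 𝕜)
    (e : ι ≃ ι) : U.submatrix id e ∈ unitaryGroup ι 𝕜 := by
  rw [mem_unitaryGroup_iff, star_eq_conjTranspose, conjTranspose_submatrix,
    submatrix_mul_equiv U Uᴴ id e id, ← star_eq_conjTranspose, mem_unitaryGroup_iff.mp hU]
  simp

lemma submatrix_id_equiv_mul_diagonal_mul_conjTranspose (U : Matrix ι ι 𝕜) (d : ι → 𝕜)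
    (e : ι ≃ ι) :
    U.submatrix id e * diagonal (d ∘ e) * (U.submatrix id e)ᴴ = U * diagonal d * Uᴴ := by
  rw [conjTranspose_submatrix, ← submatrix_diagonal_equiv d e, submatrix_mul_equiv U _ id e e,
    submatrix_mul_equiv (U * diagonal d) Uᴴ id e id]
  simp

lemma IsHermitian.cfc_comp_neg {A : Matrix ι ι 𝕜} (hA : A.IsHermitian) (f : ℝ → ℝ) :
    cfc (fun x => f (-x)) A = cfc f (-A) :=
  _root_.cfc_comp_neg f A ((finite_real_spectrum.image _).continuousOn f) hA

end Hermitian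

section Sorted

variable {𝕜 : Type*} [RCLike 𝕜] {n : ℕ}

-- `n - 1` linear conditions on an `n`-dimensional space.
lemma exists_ne_zero_eq_zero_of_lt_mulVec_eq_zero_of_gt {K : Type*} [Field K]
    (M : Matrix (Fin n) (Fin n) K) (k : Fin n) :
    ∃ c : Fin n → K, c ≠ 0 ∧ (∀ i < k, c i = 0) ∧ ∀ j, k < j → (M *ᵥ c) j = 0 := by
  let L : (Fin n → K) →ₗ[K] ({i : Fin n // i ≠ k} → K) := LinearMap.pi fun i =>
    if (i : Fin n) < k then LinearMap.proj (i : Fin n)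
    else LinearMap.proj (i : Fin n) ∘ₗ M.mulVecLin
  have hdim : Module.finrank K ({i : Fin n // i ≠ k} → K) < Module.finrank K (Fin n → K) := by
    simpa [Fintype.card_subtype_compl] using k.pos
  obtain ⟨c, hc, hc₀⟩ := Submodule.exists_mem_ne_zero_of_ne_bot (L.ker_ne_bot_of_finrank_lt hdim)
  have hLc (i : {i : Fin n // i ≠ k}) : L c i = 0 := congrFun (LinearMap.mem_ker.mp hc) i
  refine ⟨c, hc₀, fun i hi => ?_, fun j hj => ?_⟩
  · simpa [L, hi] using hLc ⟨i, hi.ne⟩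
  · simpa [L, hj.not_gt] using hLc ⟨j, hj.ne'⟩

lemma le_of_forall_map_re_star_dotProduct_le {V W : Matrix (Fin n) (Fin n) 𝕜}
    (hV : V ∈ unitaryGroup (Fin n) 𝕜) (hW : W ∈ unitaryGroup (Fin n) 𝕜) {μ ν : Fin n → ℝ}
    (hμ : Monotone μ) (hν : Monotone ν) {h : ℝ → ℝ} (hh : Monotone h)
    (H : ∀ x : Fin n → 𝕜, star x ⬝ᵥ x = 1 →
      h (RCLike.re (star x ⬝ᵥ ((V * diagonal (RCLike.ofReal ∘ μ) * Vᴴ) *ᵥ x)))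
        ≤ RCLike.re (star x ⬝ᵥ ((W * diagonal (RCLike.ofReal ∘ ν) * Wᴴ) *ᵥ x)))
    (k : Fin n) : h (μ k) ≤ ν k := by
  obtain ⟨c, hc₀, hc_lt, hc_gt⟩ := exists_ne_zero_eq_zero_of_lt_mulVec_eq_zero_of_gt (Wᴴ * V) k
  obtain ⟨r, hr⟩ := exists_smul_star_dotProduct_self_eq_one hc₀
  -- `x` lies in the span of the columns `k, k+1, …` of `V` and of the columns `0, …, k` of `W`.
  set x := V *ᵥ (r • c)
  have hVx : Vᴴ *ᵥ x = r • c := by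
    rw [mulVec_mulVec, ← star_eq_conjTranspose, mem_unitaryGroup_iff'.mp hV, one_mulVec]
  have hWx (j : Fin n) (hj : k < j) : (Wᴴ *ᵥ x) j = 0 := by
    rw [mulVec_mulVec, mulVec_smul, Pi.smul_apply, hc_gt j hj, smul_zero]
  have hx : star x ⬝ᵥ x = 1 := by
    rw [star_mulVec, dotProduct_mulVec, vecMul_vecMul, ← star_eq_conjTranspose,
      mem_unitaryGroup_iff'.mp hV, vecMul_one, hr]
  have hw₁ {U : Matrix (Fin n) (Fin n) 𝕜} (hU : U ∈ unitaryGroup (Fin n) 𝕜) :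
      ∑ i, ‖(Uᴴ *ᵥ x) i‖ ^ 2 = 1 := by
    rw [sum_norm_sq_conjTranspose_mulVec hU, hx, RCLike.one_re]
  calc h (μ k)
    _ ≤ h (∑ i, ‖(Vᴴ *ᵥ x) i‖ ^ 2 * μ i) :=
      hh <| hμ.le_sum_mul_of_eq_zero_of_lt (fun _ => by positivity) (hw₁ hV) fun i hi => by
        simp [hVx, hc_lt i hi]
    _ ≤ ∑ i, ‖(Wᴴ *ᵥ x) i‖ ^ 2 * ν i := by
      simpa only [re_star_dotProduct_conj_diagonal_mulVec] using H x hx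
    _ ≤ ν k :=
      hν.sum_mul_le_of_eq_zero_of_gt (fun _ => by positivity) (hw₁ hW) fun j hj => by
        simp [hWx j hj]

lemma IsHermitian.exists_monotone_cfc_eq {A : Matrix (Fin n) (Fin n) 𝕜} (hA : A.IsHermitian) :
    ∃ V ∈ unitaryGroup (Fin n) 𝕜, ∃ μ : Fin n → ℝ, Monotone μ ∧
      ∀ g : ℝ → ℝ, cfc g A = V * diagonal (RCLike.ofReal ∘ g ∘ μ) * Vᴴ := by
  set σ := Tuple.sort hA.eigenvalues
  set U : Matrix (Fin n) (Fin n) 𝕜 := (hA.eigenvectorUnitary : Matrix (Fin n) (Fin n) 𝕜)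
  refine ⟨U.submatrix id σ, submatrix_id_equiv_mem_unitaryGroup hA.eigenvectorUnitary.2 σ,
    hA.eigenvalues ∘ σ, Tuple.monotone_sort _, fun g => ?_⟩
  rw [hA.cfc_eq, IsHermitian.cfc, Unitary.conjStarAlgAut_apply, star_eq_conjTranspose]
  exact (submatrix_id_equiv_mul_diagonal_mul_conjTranspose U _ σ).symm

theorem exists_unitary_cfc_midpoint_le_of_monotone {f : ℝ → ℝ} (hf : ConvexOn ℝ Set.univ f)
    (hmono : Monotone f) {A B : Matrix (Fin n) (Fin n) 𝕜} (hA : A.IsHermitian)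
    (hB : B.IsHermitian) :
    ∃ U ∈ unitaryGroup (Fin n) 𝕜,
      (U * ((2 : 𝕜)⁻¹ • (cfc f A + cfc f B)) * Uᴴ - cfc f ((2 : 𝕜)⁻¹ • (A + B))).PosSemidef := by
  obtain ⟨V, hV, μ, hμ, hXV⟩ := (hA.inv_two_smul_add hB).exists_monotone_cfc_eq
  obtain ⟨W, hW, ν, hν, hYW⟩ := ((cfc_predicate f A).isHermitian.inv_two_smul_add
    (cfc_predicate f B).isHermitian).exists_monotone_cfc_eq
  have hX : (2 : 𝕜)⁻¹ • (A + B) = V * diagonal (RCLike.ofReal ∘ μ) * Vᴴ :=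
    (cfc_id' ℝ _).symm.trans (hXV fun x => x)
  have hY : (2 : 𝕜)⁻¹ • (cfc f A + cfc f B) = W * diagonal (RCLike.ofReal ∘ ν) * Wᴴ :=
    (cfc_id' ℝ _).symm.trans (hYW fun x => x)
  have hle : ∀ k, f (μ k) ≤ ν k := le_of_forall_map_re_star_dotProduct_le hV hW hμ hν hmono
    fun x hx => by simpa only [hX, hY] using map_re_star_dotProduct_midpoint_mulVec_le hf hA hB hx
  have hWW : Wᴴ * W = 1 := mem_unitaryGroup_iff'.mp hW
  have hconj : V * Wᴴ * (W * diagonal (RCLike.ofReal ∘ ν) * Wᴴ) * (V * Wᴴ)ᴴ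
      = V * diagonal (RCLike.ofReal ∘ ν) * Vᴴ := by
    simp only [conjTranspose_mul, conjTranspose_conjTranspose, Matrix.mul_assoc]
    rw [← Matrix.mul_assoc Wᴴ W, hWW, Matrix.one_mul, ← Matrix.mul_assoc Wᴴ W, hWW, Matrix.one_mul]
  refine ⟨V * Wᴴ, mul_mem hV (Unitary.star_mem hW), ?_⟩
  rw [hY, hconj, hXV f, ← Matrix.sub_mul, ← Matrix.mul_sub, diagonal_sub]
  refine PosSemidef.mul_mul_conjTranspose_same (posSemidef_diagonal_iff.mpr fun i => ?_) V
  simp only [Function.comp_apply, ← RCLike.ofReal_sub, RCLike.ofReal_nonneg, sub_nonneg]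
  exact hle i

end Sorted

end Matrix

theorem exists_unitary_cfc_midpoint_le_general {n : ℕ} (f : ℝ → ℝ)
    (hf : ConvexOn ℝ Set.univ f) (hmono : Monotone f ∨ Antitone f)
    (A B : Matrix (Fin n) (Fin n) ℂ) (hA : A.IsHermitian) (hB : B.IsHermitian) :
    ∃ U ∈ Matrix.unitaryGroup (Fin n) ℂ,
      (U * ((2 : ℂ)⁻¹ • (cfc f A + cfc f B)) * Uᴴ
        - cfc f ((2 : ℂ)⁻¹ • (A + B))).PosSemidef := by
  rcases hmono with hmono | hanti
  · exact exists_unitary_cfc_midpoint_le_of_monotone hf hmono hA hB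
  have hf_neg : ConvexOn ℝ Set.univ (fun x => f (-x)) := hf.comp_linearMap (-LinearMap.id)
  obtain ⟨U, hU, hpos⟩ := exists_unitary_cfc_midpoint_le_of_monotone hf_neg
    (fun _ _ h => hanti (neg_le_neg h)) hA.neg hB.neg
  have hneg {M : Matrix (Fin n) (Fin n) ℂ} (hM : M.IsHermitian) :
      cfc (fun x => f (-x)) (-M) = cfc f M := by
    rw [hM.neg.cfc_comp_neg, neg_neg]
  refine ⟨U, hU, ?_⟩
  rwa [hneg hA, hneg hB, ← neg_add, smul_neg, hneg (hA.inv_two_smul_add hB)] at hpos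

/-- Result 1.4: for monotone convex `f : ℝ → ℝ` and Hermitians `A`, `B`, there is a
unitary `U` with `f((A+B)/2) ≤ U ((f(A)+f(B))/2) Uᴴ` in the Loewner order. -/
theorem exists_unitary_cfc_midpoint_le {n : ℕ} (hn : 1 ≤ n) (f : ℝ → ℝ)
    (hf : ConvexOn ℝ Set.univ f) (hmono : Monotone f ∨ Antitone f)
    (A B : Matrix (Fin n) (Fin n) ℂ) (hA : A.IsHermitian) (hB : B.IsHermitian) :
    ∃ U ∈ Matrix.unitaryGroup (Fin n) ℂ,
      (U * ((2 : ℂ)⁻¹ • (cfc f A + cfc f B)) * Uᴴ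
        - cfc f ((2 : ℂ)⁻¹ • (A + B))).PosSemidef :=
  exists_unitary_cfc_midpoint_le_general f hf hmono A B hA hB
end

section
/- Let n ≥ 1, let f : ℝ → ℝ be a monotone (nondecreasing or nonincreasing) convex function with f(0) ≤ 0, let A be an n×n Hermitian complex matrix, and let Z be an n×n complex contraction (Z*Z ≤ I). Then there exists an n×n unitary matrix U such that f(Z*AZ) ≤ U Z*f(A)Z U* in the Loewner order. (Result 1.5.) -/
open Matrix ComplexOrder

section Helpers

variable {n : ℕ}

lemma qf_eq (V : Matrix (Fin n) (Fin n) ℂ) (hV : V ∈ Matrix.unitaryGroup (Fin n) ℂ)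
    (d : Fin n → ℝ) (c : Fin n → ℂ) :
    star (V *ᵥ c) ⬝ᵥ ((V * diagonal (Complex.ofReal ∘ d) * Vᴴ) *ᵥ (V *ᵥ c))
      = Complex.ofReal (∑ i, d i * Complex.normSq (c i)) := by
  have h1 : Vᴴ * V = 1 := by
    rw [← star_eq_conjTranspose]; exact Matrix.mem_unitaryGroup_iff'.mp hV
  rw [mulVec_mulVec, star_mulVec, dotProduct_mulVec, vecMul_vecMul]
  have h2 : Vᴴ * (V * diagonal (Complex.ofReal ∘ d) * Vᴴ * V) = diagonal (Complex.ofReal ∘ d) := by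
    rw [mul_assoc (V * diagonal _), h1, mul_one, ← mul_assoc, h1, one_mul]
  rw [h2]
  simp only [dotProduct, vecMul_diagonal, Complex.ofReal_sum, Pi.star_apply, Function.comp_apply]
  refine Finset.sum_congr rfl fun i _ => ?_
  rw [Complex.ofReal_mul,
    show ((Complex.normSq (c i) : ℂ)) = star (c i) * c i from Complex.normSq_eq_conj_mul_self]
  ring

lemma norm_eq (V : Matrix (Fin n) (Fin n) ℂ) (hV : V ∈ Matrix.unitaryGroup (Fin n) ℂ)
    (c : Fin n → ℂ) :
    star (V *ᵥ c) ⬝ᵥ (V *ᵥ c) = Complex.ofReal (∑ i, Complex.normSq (c i)) := by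
  have h1 : Vᴴ * V = 1 := by
    rw [← star_eq_conjTranspose]; exact Matrix.mem_unitaryGroup_iff'.mp hV
  rw [star_mulVec, dotProduct_mulVec, vecMul_vecMul, h1, vecMul_one]
  simp only [dotProduct, Complex.ofReal_sum, Pi.star_apply]
  exact Finset.sum_congr rfl fun i _ => (Complex.normSq_eq_conj_mul_self).symm

lemma permMatrix_conjTranspose (σ : Equiv.Perm (Fin n)) :
    (σ.permMatrix ℂ)ᴴ = (σ⁻¹).permMatrix ℂ := by
  ext i j
  simp only [conjTranspose_apply, Equiv.Perm.permMatrix, PEquiv.toMatrix_apply,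
    Equiv.toPEquiv_apply, Option.mem_def, Option.some.injEq]
  by_cases h : σ j = i
  · subst h; simp
  · rw [if_neg h, if_neg (by rintro rfl; simp at h), star_zero]

lemma perm_conj_diagonal (σ : Equiv.Perm (Fin n)) (d : Fin n → ℂ) :
    (σ.permMatrix ℂ) * diagonal d * (σ.permMatrix ℂ)ᴴ = diagonal (d ∘ σ) := by
  rw [permMatrix_conjTranspose, Equiv.Perm.permMatrix, PEquiv.toMatrix_toPEquiv_mul,
    Equiv.Perm.permMatrix, PEquiv.mul_toMatrix_toPEquiv]
  rw [show (σ⁻¹ : Equiv.Perm (Fin n)).symm = σ from rfl]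
  rw [submatrix_submatrix]
  simpa using Matrix.submatrix_diagonal_equiv d σ

lemma permMatrix_mem_unitaryGroup (σ : Equiv.Perm (Fin n)) :
    σ.permMatrix ℂ ∈ Matrix.unitaryGroup (Fin n) ℂ := by
  rw [Matrix.mem_unitaryGroup_iff']
  rw [star_eq_conjTranspose, permMatrix_conjTranspose]
  rw [Equiv.Perm.permMatrix, Equiv.Perm.permMatrix, ← PEquiv.toMatrix_trans,
    ← Equiv.toPEquiv_trans]
  rw [show (σ⁻¹ : Equiv.Perm (Fin n)).trans σ = Equiv.refl _ from by ext x; simp]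
  rw [Equiv.toPEquiv_refl, PEquiv.toMatrix_refl]

lemma avg_bound (f : ℝ → ℝ) (hmono : Monotone f ∨ Antitone f)
    (w μ : Fin n → ℝ) (hw : ∀ i, 0 ≤ w i) (hsum : ∑ i, w i = 1)
    (cst : ℝ) (hc : ∀ i, w i ≠ 0 → cst ≤ f (μ i)) :
    cst ≤ f (∑ i, w i * μ i) := by
  classical
  set S := Finset.univ.filter (fun i => w i ≠ 0) with hSdef
  have hwS : ∀ i ∈ S, 0 < w i := fun i hi => lt_of_le_of_ne (hw i)
    (Ne.symm (by simpa [hSdef] using hi))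
  have hsum' : ∑ i ∈ S, w i = 1 := by
    rw [hSdef, Finset.sum_filter_ne_zero, hsum]
  have hS : S.Nonempty := by
    rcases Finset.eq_empty_or_nonempty S with h | h
    · rw [h, Finset.sum_empty] at hsum'; norm_num at hsum'
    · exact h
  set m := ∑ i, w i * μ i with hm
  have hmS : m = ∑ i ∈ S, w i * μ i := by
    rw [hm, ← Finset.sum_filter_of_ne (p := fun i => w i ≠ 0) (fun i _ h h' => h (by rw [h', zero_mul]))]
  have ex1 : ∃ j ∈ S, μ j ≤ m := by
    by_contra h
    push_neg at h
    have : m < m := by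
      calc m = ∑ i ∈ S, w i * μ i := hmS
        _ > ∑ i ∈ S, w i * m := by
            refine Finset.sum_lt_sum_of_nonempty hS fun i hi => ?_
            exact mul_lt_mul_of_pos_left (h i hi) (hwS i hi)
        _ = m := by rw [← Finset.sum_mul, hsum', one_mul]
    exact absurd this (lt_irrefl m)
  have ex2 : ∃ j ∈ S, m ≤ μ j := by
    by_contra h
    push_neg at h
    have : m < m := by
      calc m = ∑ i ∈ S, w i * μ i := hmS
        _ < ∑ i ∈ S, w i * m := by
            refine Finset.sum_lt_sum_of_nonempty hS fun i hi => ?_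
            exact mul_lt_mul_of_pos_left (h i hi) (hwS i hi)
        _ = m := by rw [← Finset.sum_mul, hsum', one_mul]
    exact absurd this (lt_irrefl m)
  rcases hmono with hmono | hanti
  · obtain ⟨j, hjS, hj⟩ := ex1
    exact (hc j (by simpa [hSdef] using hjS)).trans (hmono hj)
  · obtain ⟨j, hjS, hj⟩ := ex2
    exact (hc j (by simpa [hSdef] using hjS)).trans (hanti hj)

lemma jensen_scalar (f : ℝ → ℝ) (hf : ConvexOn ℝ Set.univ f) (hf0 : f 0 ≤ 0)
    (w μ : Fin n → ℝ) (hw : ∀ i, 0 ≤ w i) (hsum : ∑ i, w i ≤ 1) :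
    f (∑ i, w i * μ i) ≤ ∑ i, w i * f (μ i) := by
  classical
  set t := ∑ i, w i with ht
  have h0t : 0 ≤ 1 - t := by linarith
  set w' : Option (Fin n) → ℝ := fun o => o.elim (1 - t) w with hw'
  set p : Option (Fin n) → ℝ := fun o => o.elim 0 μ with hp
  have h₀ : ∀ o ∈ Finset.univ, 0 ≤ w' o := by rintro (_ | i) _; exacts [h0t, hw i]
  have h₁ : ∑ o : Option (Fin n), w' o = 1 := by
    rw [Fintype.sum_option]; simp [hw', ht]
  have key := hf.map_sum_le h₀ h₁ (fun o _ => Set.mem_univ (p o))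
  rw [Fintype.sum_option, Fintype.sum_option] at key
  simp only [hw', hp, Option.elim, smul_eq_mul, mul_zero, zero_add, add_zero] at key
  calc f (∑ i, w i * μ i) ≤ (1 - t) * f 0 + ∑ i, w i * f (μ i) := by
        convert key using 3 <;> simp
    _ ≤ ∑ i, w i * f (μ i) := by
        have : (1 - t) * f 0 ≤ 0 := mul_nonpos_of_nonneg_of_nonpos h0t hf0
        linarith

lemma jensen_vec (f : ℝ → ℝ) (hf : ConvexOn ℝ Set.univ f) (hf0 : f 0 ≤ 0)
    (A : Matrix (Fin n) (Fin n) ℂ) (hA : A.IsHermitian) (y : Fin n → ℂ)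
    (hy : (star y ⬝ᵥ y).re ≤ 1) :
    f ((star y ⬝ᵥ (A *ᵥ y)).re) ≤ (star y ⬝ᵥ (cfc f A *ᵥ y)).re := by
  classical
  set V : Matrix (Fin n) (Fin n) ℂ := ↑hA.eigenvectorUnitary with hVdef
  have hVm : V ∈ Matrix.unitaryGroup (Fin n) ℂ := hA.eigenvectorUnitary.2
  have hVV : V * Vᴴ = 1 := by
    rw [← star_eq_conjTranspose]; exact Matrix.mem_unitaryGroup_iff.mp hVm
  set c : Fin n → ℂ := Vᴴ *ᵥ y with hcdef
  have hyc : y = V *ᵥ c := by rw [hcdef, mulVec_mulVec, hVV, one_mulVec]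
  have hspec : A = V * diagonal (Complex.ofReal ∘ hA.eigenvalues) * Vᴴ := by
    rw [← star_eq_conjTranspose]; exact hA.spectral_theorem
  have hcfc : cfc f A = V * diagonal (Complex.ofReal ∘ f ∘ hA.eigenvalues) * Vᴴ := by
    rw [hA.cfc_eq]; rfl
  rw [hyc] at hy ⊢
  rw [norm_eq V hVm, Complex.ofReal_re] at hy
  have e1 : star (V *ᵥ c) ⬝ᵥ (A *ᵥ (V *ᵥ c))
      = Complex.ofReal (∑ i, hA.eigenvalues i * Complex.normSq (c i)) := by
    conv_lhs => rw [hspec]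
    exact qf_eq V hVm _ c
  have e2 : star (V *ᵥ c) ⬝ᵥ (cfc f A *ᵥ (V *ᵥ c))
      = Complex.ofReal (∑ i, (f ∘ hA.eigenvalues) i * Complex.normSq (c i)) := by
    conv_lhs => rw [hcfc]
    exact qf_eq V hVm _ c
  rw [e1, e2, Complex.ofReal_re, Complex.ofReal_re]
  have hw : ∀ i, 0 ≤ Complex.normSq (c i) := fun i => Complex.normSq_nonneg _
  calc f (∑ i, hA.eigenvalues i * Complex.normSq (c i))
      = f (∑ i, Complex.normSq (c i) * hA.eigenvalues i) := by
        congr 1; exact Finset.sum_congr rfl fun i _ => mul_comm _ _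
    _ ≤ ∑ i, Complex.normSq (c i) * f (hA.eigenvalues i) :=
        jensen_scalar f hf hf0 _ _ hw hy
    _ = ∑ i, (f ∘ hA.eigenvalues) i * Complex.normSq (c i) :=
        Finset.sum_congr rfl fun i _ => mul_comm _ _

noncomputable def colSpan (V : Matrix (Fin n) (Fin n) ℂ) (s : Finset (Fin n)) :
    Submodule ℂ (Fin n → ℂ) :=
  Submodule.span ℂ (Set.range (fun i : s => V *ᵥ Pi.single (i : Fin n) 1))

lemma mulVec_injective {V : Matrix (Fin n) (Fin n) ℂ}
    (hV : V ∈ Matrix.unitaryGroup (Fin n) ℂ) : Function.Injective (V.mulVecLin) := by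
  have h1 : Vᴴ * V = 1 := by
    rw [← star_eq_conjTranspose]; exact Matrix.mem_unitaryGroup_iff'.mp hV
  intro a b hab
  have := congrArg (Vᴴ.mulVecLin) hab
  simpa [Matrix.mulVecLin_apply, Matrix.mulVec_mulVec, h1] using this

lemma finrank_colSpan (V : Matrix (Fin n) (Fin n) ℂ) (hV : V ∈ Matrix.unitaryGroup (Fin n) ℂ)
    (s : Finset (Fin n)) : Module.finrank ℂ (colSpan V s) = s.card := by
  classical
  have hli : LinearIndependent ℂ (fun i : s => V *ᵥ Pi.single (i : Fin n) 1) := by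
    have hbasis : LinearIndependent ℂ (fun i : Fin n => Pi.single i (1 : ℂ)) := by
      have heq : (fun i : Fin n => Pi.single i (1 : ℂ)) = ⇑(Pi.basisFun ℂ (Fin n)) := by
        funext i; simp
      rw [heq]
      exact (Pi.basisFun ℂ (Fin n)).linearIndependent
    have hsub : LinearIndependent ℂ
        (fun i : s => (Pi.single (i : Fin n) (1 : ℂ) : Fin n → ℂ)) :=
      hbasis.comp ((↑) : s → Fin n) Subtype.val_injective
    have key := hsub.map' V.mulVecLin (LinearMap.ker_eq_bot.mpr (mulVec_injective hV))
    have heq2 : (fun i : s => V *ᵥ Pi.single (i : Fin n) 1)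
        = (⇑V.mulVecLin ∘ fun i : s => (Pi.single (i : Fin n) (1 : ℂ) : Fin n → ℂ)) := by
      funext i; simp [Matrix.mulVecLin_apply]
    rw [heq2]; exact key
  rw [colSpan, finrank_span_eq_card hli, Fintype.card_coe]

lemma mem_colSpan (V : Matrix (Fin n) (Fin n) ℂ) {s : Finset (Fin n)} {x : Fin n → ℂ}
    (hx : x ∈ colSpan V s) : ∃ c : Fin n → ℂ, (∀ i ∉ s, c i = 0) ∧ x = V *ᵥ c := by
  classical
  set K : Submodule ℂ (Fin n → ℂ) :=
    Submodule.span ℂ (Set.range (fun i : s => (Pi.single (i : Fin n) (1 : ℂ) : Fin n → ℂ)))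
    with hK
  have hmap : colSpan V s = Submodule.map V.mulVecLin K := by
    rw [hK, Submodule.map_span, ← Set.range_comp]
    rfl
  rw [hmap] at hx
  obtain ⟨c, hc, rfl⟩ := hx
  refine ⟨c, ?_, rfl⟩
  have : ∀ y ∈ K, ∀ i ∉ s, y i = 0 := by
    intro y hy
    refine Submodule.span_induction ?_ ?_ ?_ ?_ hy
    · rintro y ⟨j, rfl⟩ i hi
      exact Pi.single_eq_of_ne (by rintro rfl; exact hi j.2) 1
    · intro i _; rfl
    · intro a b _ _ ha hb i hi; simp [ha i hi, hb i hi]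
    · intro r a _ ha i hi; simp [ha i hi]
  exact this c hc

lemma exists_mem_inf (V W : Matrix (Fin n) (Fin n) ℂ)
    (hV : V ∈ Matrix.unitaryGroup (Fin n) ℂ) (hW : W ∈ Matrix.unitaryGroup (Fin n) ℂ)
    {s t : Finset (Fin n)} (h : n < s.card + t.card) :
    ∃ x : Fin n → ℂ, x ≠ 0 ∧ x ∈ colSpan V s ∧ x ∈ colSpan W t := by
  classical
  set S := colSpan V s
  set T := colSpan W t
  have hdim : Module.finrank ℂ ↑(S ⊔ T) + Module.finrank ℂ ↑(S ⊓ T)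
      = s.card + t.card := by
    rw [Submodule.finrank_sup_add_finrank_inf_eq, finrank_colSpan V hV, finrank_colSpan W hW]
  have hle : Module.finrank ℂ ↑(S ⊔ T) ≤ n := by
    have := Submodule.finrank_le (S ⊔ T)
    simpa [Module.finrank_pi] using this
  have hpos : 0 < Module.finrank ℂ ↑(S ⊓ T) := by omega
  obtain ⟨⟨x, hxmem⟩, hx0⟩ := Module.finrank_pos_iff_exists_ne_zero.mp hpos
  refine ⟨x, ?_, hxmem.1, hxmem.2⟩
  intro hx
  apply hx0
  ext
  simp [hx]

lemma sorted_eig_le {f : ℝ → ℝ} (hf : ConvexOn ℝ Set.univ f)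
    (hmono : Monotone f ∨ Antitone f) (hf0 : f 0 ≤ 0)
    {A Z : Matrix (Fin n) (Fin n) ℂ} (hA : A.IsHermitian) (hZ : (1 - Zᴴ * Z).PosSemidef)
    (hB : (Zᴴ * A * Z).IsHermitian) (hC : (Zᴴ * cfc f A * Z).IsHermitian) (k : Fin n) :
    (f ∘ hB.eigenvalues) (Tuple.sort (f ∘ hB.eigenvalues) k)
      ≤ hC.eigenvalues (Tuple.sort hC.eigenvalues k) := by
  classical
  set B := Zᴴ * A * Z with hBdef
  set C := Zᴴ * cfc f A * Z with hCdef
  set μ := hB.eigenvalues with hμdef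
  set lam := hC.eigenvalues with hlamdef
  set g : Fin n → ℝ := f ∘ μ with hgdef
  set τ := Tuple.sort g with hτdef
  set π := Tuple.sort lam with hπdef
  set VB : Matrix (Fin n) (Fin n) ℂ := ↑hB.eigenvectorUnitary with hVBdef
  set VC : Matrix (Fin n) (Fin n) ℂ := ↑hC.eigenvectorUnitary with hVCdef
  have hVBm : VB ∈ Matrix.unitaryGroup (Fin n) ℂ := hB.eigenvectorUnitary.2
  have hVCm : VC ∈ Matrix.unitaryGroup (Fin n) ℂ := hC.eigenvectorUnitary.2
  set s : Finset (Fin n) := (Finset.Ici k).image τ with hsdef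
  set t : Finset (Fin n) := (Finset.Iic k).image π with htdef
  have hcard : n < s.card + t.card := by
    rw [hsdef, htdef, Finset.card_image_of_injective _ τ.injective,
      Finset.card_image_of_injective _ π.injective, Fin.card_Ici, Fin.card_Iic]
    have := k.isLt
    omega
  obtain ⟨x, hx0, hxS, hxT⟩ := exists_mem_inf VB VC hVBm hVCm hcard
  obtain ⟨c, hcsupp, hxc⟩ := mem_colSpan VB hxS
  obtain ⟨e, hesupp, hxe⟩ := mem_colSpan VC hxT
  set ν := ∑ i, Complex.normSq (c i) with hνdef
  have hν0 : 0 ≤ ν := Finset.sum_nonneg fun i _ => Complex.normSq_nonneg _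
  have hνpos : 0 < ν := by
    rcases hν0.lt_or_eq with h | h
    · exact h
    · exfalso
      apply hx0
      have hczero : ∀ i, c i = 0 := by
        intro i
        have := (Finset.sum_eq_zero_iff_of_nonneg
          (fun i _ => Complex.normSq_nonneg (c i))).mp h.symm i (Finset.mem_univ i)
        exact Complex.normSq_eq_zero.mp this
      rw [hxc, show c = 0 from funext hczero, mulVec_zero]
  set a : ℝ := (Real.sqrt ν)⁻¹ with hadef
  have ha2 : a * a * ν = 1 := by
    rw [hadef, ← mul_inv, Real.mul_self_sqrt hν0]
    exact inv_mul_cancel₀ hνpos.ne'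
  set c' : Fin n → ℂ := (a : ℂ) • c with hc'def
  set e' : Fin n → ℂ := (a : ℂ) • e with he'def
  set u : Fin n → ℂ := VB *ᵥ c' with hudef
  clear_value B C μ lam g τ π VB VC s t ν a c' e' u
  have hue : u = VC *ᵥ e' := by
    rw [hudef, hc'def, he'def, mulVec_smul, mulVec_smul, ← hxc, ← hxe]
  have hnormsq_c' : ∀ i, Complex.normSq (c' i) = a * a * Complex.normSq (c i) := by
    intro i
    rw [hc'def]
    simp [Complex.normSq_mul, Complex.normSq_ofReal, mul_assoc]
  have hnormc : ∑ i, Complex.normSq (c' i) = 1 := by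
    simp_rw [hnormsq_c']
    rw [← Finset.mul_sum, ← hνdef, ha2]
  have hnorme : ∑ i, Complex.normSq (e' i) = 1 := by
    have h1 : star u ⬝ᵥ u = Complex.ofReal (∑ i, Complex.normSq (c' i)) := by
      rw [hudef]; exact norm_eq VB hVBm c'
    have h2 : star u ⬝ᵥ u = Complex.ofReal (∑ i, Complex.normSq (e' i)) := by
      rw [hue]; exact norm_eq VC hVCm e'
    have := h1.symm.trans h2
    rw [hnormc] at this
    exact_mod_cast this.symm
  have hc'supp : ∀ i ∉ s, c' i = 0 := fun i hi => by
    rw [hc'def]; simp [hcsupp i hi]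
  have he'supp : ∀ i ∉ t, e' i = 0 := fun i hi => by
    rw [he'def]; simp [hesupp i hi]
  have hBspec : B = VB * diagonal (Complex.ofReal ∘ μ) * VBᴴ := by
    rw [← star_eq_conjTranspose, hVBdef, hμdef]; exact hB.spectral_theorem
  have hCspec : C = VC * diagonal (Complex.ofReal ∘ lam) * VCᴴ := by
    rw [← star_eq_conjTranspose, hVCdef, hlamdef]; exact hC.spectral_theorem
  have qB : (star u ⬝ᵥ (B *ᵥ u)).re = ∑ i, μ i * Complex.normSq (c' i) := by
    conv_lhs => rw [hudef, hBspec]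
    rw [qf_eq VB hVBm μ c', Complex.ofReal_re]
  have qC : (star u ⬝ᵥ (C *ᵥ u)).re = ∑ i, lam i * Complex.normSq (e' i) := by
    conv_lhs => rw [hue, hCspec]
    rw [qf_eq VC hVCm lam e', Complex.ofReal_re]
  -- step (i)
  have step1 : g (τ k) ≤ f ((star u ⬝ᵥ (B *ᵥ u)).re) := by
    rw [qB, show (∑ i, μ i * Complex.normSq (c' i)) = ∑ i, Complex.normSq (c' i) * μ i from
      Finset.sum_congr rfl fun i _ => mul_comm _ _]
    refine avg_bound f hmono _ μ (fun i => Complex.normSq_nonneg _) hnormc _ ?_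
    intro i hi
    have his : i ∈ s := by
      by_contra h
      exact hi (by rw [hc'supp i h]; simp)
    rw [hsdef] at his
    obtain ⟨j, hj, rfl⟩ := Finset.mem_image.mp his
    have hkj : k ≤ j := Finset.mem_Ici.mp hj
    rw [hτdef, hgdef]
    simpa using Tuple.monotone_sort (f ∘ μ) hkj
  -- step (ii)
  have step2 : f ((star u ⬝ᵥ (B *ᵥ u)).re) ≤ (star u ⬝ᵥ (C *ᵥ u)).re := by
    set y : Fin n → ℂ := Z *ᵥ u with hy
    have hstar : star u ᵥ* Zᴴ = star y := (star_mulVec Z u).symm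
    have hyB : star u ⬝ᵥ (B *ᵥ u) = star y ⬝ᵥ (A *ᵥ y) := by
      rw [hBdef, mul_assoc, ← mulVec_mulVec, dotProduct_mulVec, hstar, ← mulVec_mulVec, ← hy]
    have hyC : star u ⬝ᵥ (C *ᵥ u) = star y ⬝ᵥ (cfc f A *ᵥ y) := by
      rw [hCdef, mul_assoc, ← mulVec_mulVec, dotProduct_mulVec, hstar, ← mulVec_mulVec, ← hy]
    have hy1 : (star y ⬝ᵥ y).re ≤ 1 := by
      have hpos := hZ.dotProduct_mulVec_nonneg u
      have hexp : star u ⬝ᵥ ((1 - Zᴴ * Z) *ᵥ u) = star u ⬝ᵥ u - star y ⬝ᵥ y := by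
        rw [sub_mulVec, dotProduct_sub, one_mulVec]
        congr 1
        rw [← mulVec_mulVec, dotProduct_mulVec, hstar, ← hy]
      rw [hexp] at hpos
      have hnu : star u ⬝ᵥ u = (1 : ℂ) := by
        rw [hudef, norm_eq VB hVBm c', hnormc, Complex.ofReal_one]
      rw [hnu] at hpos
      have := (Complex.le_def.mp hpos).1
      simpa using this
    rw [hyB, hyC]
    exact jensen_vec f hf hf0 A hA y hy1
  -- step (iii)
  have step3 : (star u ⬝ᵥ (C *ᵥ u)).re ≤ lam (π k) := by
    rw [qC]
    calc ∑ i, lam i * Complex.normSq (e' i)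
        ≤ ∑ i, lam (π k) * Complex.normSq (e' i) := by
          refine Finset.sum_le_sum fun i _ => ?_
          by_cases hi : Complex.normSq (e' i) = 0
          · rw [hi, mul_zero, mul_zero]
          · have hit : i ∈ t := by
              by_contra h
              exact hi (by rw [he'supp i h]; simp)
            rw [htdef] at hit
            obtain ⟨j, hj, rfl⟩ := Finset.mem_image.mp hit
            have hjk : j ≤ k := Finset.mem_Iic.mp hj
            refine mul_le_mul_of_nonneg_right ?_ (Complex.normSq_nonneg _)
            rw [hπdef]
            simpa using Tuple.monotone_sort lam hjk
      _ = lam (π k) := by rw [← Finset.mul_sum, hnorme, mul_one]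
  exact (step1.trans step2).trans step3

end Helpers

/-- Result 1.5: for monotone convex `f : ℝ → ℝ` with `f(0) ≤ 0`, Hermitian `A` and a
contraction `Z`, there is a unitary `U` with `f(ZᴴAZ) ≤ U (Zᴴ f(A) Z) Uᴴ`. -/
theorem exists_unitary_cfc_contraction_le {n : ℕ} (hn : 1 ≤ n) (f : ℝ → ℝ)
    (hf : ConvexOn ℝ Set.univ f) (hmono : Monotone f ∨ Antitone f) (hf0 : f 0 ≤ 0)
    (A Z : Matrix (Fin n) (Fin n) ℂ)
    (hA : A.IsHermitian) (hZ : (1 - Zᴴ * Z).PosSemidef) :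
    ∃ U ∈ Matrix.unitaryGroup (Fin n) ℂ,
      (U * (Zᴴ * cfc f A * Z) * Uᴴ - cfc f (Zᴴ * A * Z)).PosSemidef := by
  classical
  have hB : (Zᴴ * A * Z).IsHermitian := Matrix.isHermitian_conjTranspose_mul_mul Z hA
  have hfA : IsSelfAdjoint (cfc f A) := cfc_predicate f A
  have hC : (Zᴴ * cfc f A * Z).IsHermitian :=
    Matrix.isHermitian_conjTranspose_mul_mul Z hfA
  set μ := hB.eigenvalues
  set lam := hC.eigenvalues
  set g : Fin n → ℝ := f ∘ μ
  set τ := Tuple.sort g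
  set π := Tuple.sort lam
  set σ : Equiv.Perm (Fin n) := τ.symm.trans π with hσdef
  have key : ∀ i, g i ≤ lam (σ i) := by
    intro i
    have h := sorted_eig_le hf hmono hf0 hA hZ hB hC (τ.symm i)
    have h' : g (τ (τ.symm i)) ≤ lam (π (τ.symm i)) := h
    rw [Equiv.apply_symm_apply] at h'
    exact h'
  set VB : Matrix (Fin n) (Fin n) ℂ := ↑hB.eigenvectorUnitary with hVBdef
  set VC : Matrix (Fin n) (Fin n) ℂ := ↑hC.eigenvectorUnitary with hVCdef
  have hVBm : VB ∈ Matrix.unitaryGroup (Fin n) ℂ := hB.eigenvectorUnitary.2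
  have hVCm : VC ∈ Matrix.unitaryGroup (Fin n) ℂ := hC.eigenvectorUnitary.2
  set W : Matrix (Fin n) (Fin n) ℂ := σ.permMatrix ℂ with hWdef
  set U : Matrix (Fin n) (Fin n) ℂ := VB * W * VCᴴ with hUdef
  have hUm : U ∈ Matrix.unitaryGroup (Fin n) ℂ := by
    rw [hUdef]
    refine mul_mem (mul_mem hVBm (permMatrix_mem_unitaryGroup σ)) ?_
    rw [← star_eq_conjTranspose]
    exact Unitary.star_mem hVCm
  refine ⟨U, hUm, ?_⟩
  have hCspec : Zᴴ * cfc f A * Z = VC * diagonal (Complex.ofReal ∘ lam) * VCᴴ := by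
    rw [← star_eq_conjTranspose]; exact hC.spectral_theorem
  have hcfcB : cfc f (Zᴴ * A * Z) = VB * diagonal (Complex.ofReal ∘ g) * VBᴴ := by
    rw [hB.cfc_eq]; rfl
  have hVC1 : VCᴴ * VC = 1 := by
    rw [← star_eq_conjTranspose]; exact Matrix.mem_unitaryGroup_iff'.mp hVCm
  have hconj : U * (Zᴴ * cfc f A * Z) * Uᴴ
      = VB * diagonal ((Complex.ofReal ∘ lam) ∘ σ) * VBᴴ := by
    rw [hCspec, hUdef]
    calc VB * W * VCᴴ * (VC * diagonal (Complex.ofReal ∘ lam) * VCᴴ) * (VB * W * VCᴴ)ᴴ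
        = VB * (W * ((VCᴴ * VC) * (diagonal (Complex.ofReal ∘ lam)
            * ((VCᴴ * VC) * Wᴴ)))) * VBᴴ := by
          simp only [conjTranspose_mul, conjTranspose_conjTranspose, Matrix.mul_assoc]
      _ = VB * (W * diagonal (Complex.ofReal ∘ lam) * Wᴴ) * VBᴴ := by
          rw [hVC1, one_mul, one_mul]
          simp only [Matrix.mul_assoc]
      _ = VB * diagonal ((Complex.ofReal ∘ lam) ∘ σ) * VBᴴ := by
          rw [hWdef, perm_conj_diagonal]
  rw [hconj, hcfcB]
  have hdiff : VB * diagonal ((Complex.ofReal ∘ lam) ∘ σ) * VBᴴ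
      - VB * diagonal (Complex.ofReal ∘ g) * VBᴴ
      = VB * diagonal (fun i => ((lam (σ i) - g i : ℝ) : ℂ)) * VBᴴ := by
    rw [← Matrix.sub_mul, ← Matrix.mul_sub]
    congr 2
    ext i j
    by_cases h : i = j
    · subst h; simp
    · simp [diagonal_apply_ne _ h]
  rw [hdiff]
  have hdiag : (diagonal (fun i => ((lam (σ i) - g i : ℝ) : ℂ))).PosSemidef := by
    rw [Matrix.posSemidef_diagonal_iff]
    intro i
    rw [Complex.zero_le_real]
    exact sub_nonneg.mpr (key i)
  simpa [star_eq_conjTranspose] using hdiag.mul_mul_conjTranspose_same VB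
end
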